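/- arXiv:0711.2501 — 10 statements merged into one kernel-verified Lean document; each statement's English description precedes it below -/
import Mathlib

section
/- Under the symmetry condition, for every rate R > 0 admitting s_R ∈ [0,1) with γ(s_R) − s_R·γ'(s_R) = R and every threshold T ≥ 0, the ensemble-average total error probability of Forney's optimal erasure decoder satisfies limsup_{n→∞} (1/n)·ln P̄{E₁}(n) ≤ −E₁*(R,T), where E₁*(R,T) = sup_{s≥0} [Λ(R,s) + γ(1−s) − sT − ln|Y|]. -/
open scoped BigOperators

/-- Number of codewords at block length `n` and rate `R`. -/
noncomputable def codebookSize (R : ℝ) (n : ℕ) : ℕ := ⌈Real.exp (n * R)⌉₊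

private lemma rpow_add_le {x y t : ℝ} (hx : 0 ≤ x) (hy : 0 ≤ y) (ht : 0 < t) (ht1 : t ≤ 1) :
    (x + y) ^ t ≤ x ^ t + y ^ t := by
  lift x to NNReal using hx
  lift y to NNReal using hy
  have h := NNReal.rpow_add_rpow_le x y ht ht1
  simp only [NNReal.rpow_one, one_div_one] at h
  have h2 := NNReal.rpow_le_rpow h ht.le
  rw [← NNReal.rpow_mul, one_div, inv_mul_cancel₀ ht.ne', NNReal.rpow_one] at h2
  calc ((x:ℝ) + (y:ℝ)) ^ t = (((x + y : NNReal) : ℝ)) ^ t := by push_cast; ring_nf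
    _ ≤ ((x ^ t + y ^ t : NNReal) : ℝ) := by
        rw [← NNReal.coe_rpow]; exact_mod_cast h2
    _ = (x:ℝ) ^ t + (y:ℝ) ^ t := by push_cast [NNReal.coe_rpow]; ring

private lemma rpow_sum_le_sum_rpow {ι : Type*} (s : Finset ι) (f : ι → ℝ)
    (hf : ∀ i ∈ s, 0 ≤ f i) {t : ℝ} (ht : 0 < t) (ht1 : t ≤ 1) :
    (∑ i ∈ s, f i) ^ t ≤ ∑ i ∈ s, f i ^ t := by
  induction s using Finset.cons_induction with
  | empty => simp [Real.zero_rpow ht.ne']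
  | cons a s ha ih =>
      rw [Finset.sum_cons, Finset.sum_cons]
      calc (f a + ∑ i ∈ s, f i) ^ t ≤ f a ^ t + (∑ i ∈ s, f i) ^ t :=
            rpow_add_le (hf a (Finset.mem_cons_self a s))
              (Finset.sum_nonneg fun i hi => hf i (Finset.mem_cons_of_mem hi)) ht ht1
        _ ≤ f a ^ t + ∑ i ∈ s, f i ^ t := by
            exact add_le_add_right (ih fun i hi => hf i (Finset.mem_cons_of_mem hi)) _

private lemma split_sum {ι V : Type*} [Fintype ι] [DecidableEq ι] [Fintype V]
    (Q : V → ℝ) (h : ι) (F : V → ℝ) (G : ({ j // j ≠ h } → V) → ℝ) :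
    ∑ f : ι → V, (∏ j, Q (f j)) * (F (f h) * G (fun j => f j.1)) =
      (∑ v, Q v * F v) * (∑ g : { j // j ≠ h } → V, (∏ j, Q (g j)) * G g) := by
  classical
  rw [← Equiv.sum_comp (Equiv.funSplitAt h V).symm]
  rw [Fintype.sum_prod_type]
  rw [Finset.sum_mul_sum]
  refine Finset.sum_congr rfl fun v _ => Finset.sum_congr rfl fun g _ => ?_
  have hc : ∀ j : ι, (Equiv.funSplitAt h V).symm (v, g) j =
      if hj : j = h then v else g ⟨j, hj⟩ := fun j => by
    simp [Equiv.funSplitAt_symm_apply]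
  have hh : (Equiv.funSplitAt h V).symm (v, g) h = v := by simp [hc]
  have hprod : (∏ j, Q ((Equiv.funSplitAt h V).symm (v, g) j)) =
      Q v * ∏ j : { j // j ≠ h }, Q (g j) := by
    rw [← Finset.mul_prod_erase Finset.univ _ (Finset.mem_univ h), hh]
    congr 1
    rw [Finset.prod_subtype (Finset.univ.erase h) (p := fun j => j ≠ h)
      (fun j => by simp [Finset.mem_erase]) (fun j => Q ((Equiv.funSplitAt h V).symm (v, g) j))]
    refine Finset.prod_congr rfl fun j _ => ?_
    rw [hc, dif_neg j.2]
  have hG : G (fun j => (Equiv.funSplitAt h V).symm (v, g) j.1) = G g := by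
    congr 1
    funext j
    rw [hc, dif_neg j.2]
  rw [hprod, hh, hG]
  ring

private lemma sum_pi_prod {ι V : Type*} [Fintype ι] [DecidableEq ι] [Fintype V]
    (Q : V → ℝ) (hQ : ∑ v, Q v = 1) :
    ∑ f : ι → V, ∏ j, Q (f j) = 1 := by
  rw [← Fintype.prod_sum (fun (_ : ι) (v : V) => Q v)]
  simp [hQ]

private lemma marg_sum {ι V : Type*} [Fintype ι] [DecidableEq ι] [Fintype V]
    (Q : V → ℝ) (hQ : ∑ v, Q v = 1) (h : ι) (F : V → ℝ) :
    ∑ f : ι → V, (∏ j, Q (f j)) * F (f h) = ∑ v, Q v * F v := by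
  classical
  have := split_sum Q h F (fun _ => (1 : ℝ))
  simpa [sum_pi_prod Q hQ] using this

private lemma single_moment {X Y : Type} [Fintype X] [Fintype Y]
    (P : X → ℝ) (hP : ∀ x, 0 ≤ P x) (hPsum : ∑ x, P x = 1)
    (W : X → Y → ℝ) (hW : ∀ x y, 0 < W x y)
    (γ : ℝ → ℝ) (hγ : ∀ (s : ℝ) (y : Y), γ s = -Real.log (∑ x, P x * W x y ^ s))
    (t : ℝ) (yy : Y) : ∑ x, P x * W x yy ^ t = Real.exp (-γ t) := by
  have hex : ∃ x, 0 < P x := by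
    by_contra hcon
    push_neg at hcon
    have h0 : ∑ x, P x = 0 := Finset.sum_eq_zero fun x _ => le_antisymm (hcon x) (hP x)
    rw [h0] at hPsum; norm_num at hPsum
  obtain ⟨x₀, hx₀⟩ := hex
  have hpos : 0 < ∑ x, P x * W x yy ^ t :=
    Finset.sum_pos' (fun x _ => mul_nonneg (hP x) (Real.rpow_nonneg (hW x yy).le t))
      ⟨x₀, Finset.mem_univ x₀, mul_pos hx₀ (Real.rpow_pos_of_pos (hW x₀ yy) t)⟩
  have hlog := hγ t yy
  have h2 : Real.log (∑ x, P x * W x yy ^ t) = -γ t := by linarith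
  rw [← h2, Real.exp_log hpos]

private lemma vector_moment {X Y : Type} [Fintype X] [Fintype Y]
    (P : X → ℝ) (hP : ∀ x, 0 ≤ P x) (hPsum : ∑ x, P x = 1)
    (W : X → Y → ℝ) (hW : ∀ x y, 0 < W x y)
    (γ : ℝ → ℝ) (hγ : ∀ (s : ℝ) (y : Y), γ s = -Real.log (∑ x, P x * W x y ^ s))
    (n : ℕ) (t : ℝ) (y : Fin n → Y) :
    ∑ v : Fin n → X, (∏ i, P (v i)) * (∏ i, W (v i) (y i)) ^ t = Real.exp (-(n * γ t)) := by
  calc ∑ v : Fin n → X, (∏ i, P (v i)) * (∏ i, W (v i) (y i)) ^ t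
      = ∑ v : Fin n → X, ∏ i, (P (v i) * W (v i) (y i) ^ t) := by
        refine Finset.sum_congr rfl fun v _ => ?_
        rw [← Real.finset_prod_rpow _ _ (fun i _ => (hW _ _).le) t, ← Finset.prod_mul_distrib]
    _ = ∏ i : Fin n, ∑ x, P x * W x (y i) ^ t :=
        (Fintype.prod_sum fun (i : Fin n) (x : X) => P x * W x (y i) ^ t).symm
    _ = ∏ _i : Fin n, Real.exp (-γ t) :=
        Finset.prod_congr rfl fun i _ => single_moment P hP hPsum W hW γ hγ t (y i)
    _ = Real.exp (-(n * γ t)) := by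
        rw [Finset.prod_const, Finset.card_univ, Fintype.card_fin, ← Real.exp_nat_mul]
        ring_nf

private lemma G_bound {V ι : Type} [Fintype V] [Fintype ι] [DecidableEq ι]
    (Q : V → ℝ) (hQ0 : ∀ v, 0 ≤ Q v) (hQsum : ∑ v, Q v = 1)
    (a : V → ℝ) (ha : ∀ v, 0 < a v)
    (γ : ℝ → ℝ) (n : ℕ) (hmom : ∀ t : ℝ, ∑ v, Q v * a v ^ t = Real.exp (-(n * γ t)))
    (hγ0 : γ 0 = 0)
    (R : ℝ) (hR : 0 < R) (c sR : ℝ) (hsR0 : 0 ≤ sR) (hsR1 : sR < 1)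
    (hsReq : γ sR - sR * c = R)
    (hK : (Fintype.card ι : ℝ) ≤ Real.exp (n * R))
    (s : ℝ) (hs0 : 0 ≤ s) (hs1 : s ≤ 1)
    (Λs : ℝ) (hΛs : Λs = if sR ≤ s then γ s - R else s * c) :
    ∑ g : ι → V, (∏ j, Q (g j)) * (∑ j, a (g j)) ^ s ≤ Real.exp (-(n * Λs)) := by
  classical
  have hQ'0 : ∀ g : ι → V, 0 ≤ ∏ j, Q (g j) :=
    fun g => Finset.prod_nonneg fun j _ => hQ0 _
  have hQ'sum : ∑ g : ι → V, ∏ j, Q (g j) = 1 := sum_pi_prod Q hQsum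
  have hstep : ∀ t : ℝ, 0 < t → t ≤ 1 →
      ∑ g : ι → V, (∏ j, Q (g j)) * (∑ j, a (g j)) ^ t
        ≤ Real.exp (n * R) * Real.exp (-(n * γ t)) := by
    intro t ht ht1
    calc ∑ g : ι → V, (∏ j, Q (g j)) * (∑ j, a (g j)) ^ t
        ≤ ∑ g : ι → V, ∑ j, (∏ j', Q (g j')) * a (g j) ^ t := by
          refine Finset.sum_le_sum fun g _ => ?_
          rw [← Finset.mul_sum]
          exact mul_le_mul_of_nonneg_left
            (rpow_sum_le_sum_rpow _ _ (fun j _ => (ha _).le) ht ht1) (hQ'0 g)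
      _ = ∑ j : ι, ∑ g : ι → V, (∏ j', Q (g j')) * a (g j) ^ t := Finset.sum_comm
      _ = ∑ _j : ι, Real.exp (-(n * γ t)) := by
          refine Finset.sum_congr rfl fun j _ => ?_
          rw [marg_sum Q hQsum j (fun v => a v ^ t), hmom t]
      _ = (Fintype.card ι : ℝ) * Real.exp (-(n * γ t)) := by
          rw [Finset.sum_const, Finset.card_univ, nsmul_eq_mul]
      _ ≤ Real.exp (n * R) * Real.exp (-(n * γ t)) :=
          mul_le_mul_of_nonneg_right hK (Real.exp_nonneg _)
  rcases eq_or_lt_of_le hs0 with hs0' | hs0'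
  · -- s = 0
    have hL : ∑ g : ι → V, (∏ j, Q (g j)) * (∑ j, a (g j)) ^ s = 1 := by
      rw [← hs0']
      simp only [Real.rpow_zero, mul_one]
      exact hQ'sum
    rw [hL]
    by_cases hsRle : sR ≤ s
    · rw [hΛs, if_pos hsRle, ← hs0', hγ0]
      have h9 : -((n:ℝ) * (0 - R)) = n * R := by ring
      rw [h9]
      exact Real.one_le_exp (by positivity)
    · rw [hΛs, if_neg hsRle, ← hs0']
      simp
  · -- 0 < s
    by_cases hcase : sR ≤ s
    · rw [hΛs, if_pos hcase]
      calc ∑ g : ι → V, (∏ j, Q (g j)) * (∑ j, a (g j)) ^ s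
          ≤ Real.exp (n * R) * Real.exp (-(n * γ s)) := hstep s hs0' hs1
        _ = Real.exp (-(n * (γ s - R))) := by rw [← Real.exp_add]; ring_nf
    · have hslt : s < sR := not_le.mp hcase
      have hsRpos : 0 < sR := hs0'.trans hslt
      have hp : 1 ≤ sR / s := (one_le_div hs0').mpr hslt.le
      have hz : ∀ g ∈ (Finset.univ : Finset (ι → V)),
          0 ≤ (∑ j, a (g j)) ^ s := fun g _ =>
        Real.rpow_nonneg (Finset.sum_nonneg fun j _ => (ha _).le) s
      have hJ := Real.arith_mean_le_rpow_mean Finset.univ (fun g => ∏ j, Q (g j))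
        (fun g => (∑ j, a (g j)) ^ s) (fun g _ => hQ'0 g) hQ'sum hz hp
      have hzp : ∀ g : ι → V,
          ((∑ j, a (g j)) ^ s) ^ (sR / s) = (∑ j, a (g j)) ^ sR := by
        intro g
        rw [← Real.rpow_mul (Finset.sum_nonneg fun j _ => (ha _).le)]
        congr 1
        field_simp
      simp only [hzp] at hJ
      have hinner : ∑ g : ι → V, (∏ j, Q (g j)) * (∑ j, a (g j)) ^ sR
          ≤ Real.exp (n * R - n * γ sR) := by
        calc _ ≤ Real.exp (n * R) * Real.exp (-(n * γ sR)) := hstep sR hsRpos hsR1.le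
          _ = Real.exp (n * R - n * γ sR) := by rw [← Real.exp_add]; ring_nf
      have hinner0 : 0 ≤ ∑ g : ι → V, (∏ j, Q (g j)) * (∑ j, a (g j)) ^ sR :=
        Finset.sum_nonneg fun g _ => mul_nonneg (hQ'0 g)
          (Real.rpow_nonneg (Finset.sum_nonneg fun j _ => (ha _).le) sR)
      have hfin : (Real.exp (n * R - n * γ sR)) ^ (1 / (sR / s))
          = Real.exp (-(n * Λs)) := by
        rw [← Real.exp_mul]
        congr 1
        rw [hΛs, if_neg hcase]
        have hγsR : γ sR = R + sR * c := by linarith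
        rw [hγsR]
        field_simp
        ring
      calc ∑ g : ι → V, (∏ j, Q (g j)) * (∑ j, a (g j)) ^ s
          ≤ (∑ g : ι → V, (∏ j, Q (g j)) * (∑ j, a (g j)) ^ sR) ^ (1 / (sR / s)) := hJ
        _ ≤ (Real.exp (n * R - n * γ sR)) ^ (1 / (sR / s)) :=
            Real.rpow_le_rpow hinner0 hinner (by positivity)
        _ = Real.exp (-(n * Λs)) := hfin

private lemma chernoff_pointwise {a B E s : ℝ} (ha : 0 < a) (hB : 0 ≤ B) (hE : 0 < E)
    (hs : 0 ≤ s) : (if a < E * B then a else 0) ≤ E ^ s * (a ^ (1 - s) * B ^ s) := by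
  split_ifs with h
  · have h1 : a = a ^ (1 - s) * a ^ s := by
      rw [← Real.rpow_add ha]; simp
    calc a = a ^ (1 - s) * a ^ s := h1
      _ ≤ a ^ (1 - s) * (E * B) ^ s :=
          mul_le_mul_of_nonneg_left (Real.rpow_le_rpow ha.le h.le hs)
            (Real.rpow_nonneg ha.le _)
      _ = a ^ (1 - s) * (E ^ s * B ^ s) := by rw [Real.mul_rpow hE.le hB]
      _ = E ^ s * (a ^ (1 - s) * B ^ s) := by ring
  · positivity

private lemma inner_factor {X Y : Type} [Fintype X] [Fintype Y] [Nonempty Y]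
    (P : X → ℝ) (hP : ∀ x, 0 ≤ P x) (hPsum : ∑ x, P x = 1)
    (W : X → Y → ℝ) (hW : ∀ x y, 0 < W x y)
    (γ : ℝ → ℝ) (hγ : ∀ (s : ℝ) (y : Y), γ s = -Real.log (∑ x, P x * W x y ^ s))
    (R : ℝ) (hR : 0 < R) (c sR : ℝ) (hsR0 : 0 ≤ sR) (hsR1 : sR < 1)
    (hsReq : γ sR - sR * c = R)
    (s : ℝ) (hs0 : 0 ≤ s) (hs1 : s ≤ 1)
    (Λs : ℝ) (hΛs : Λs = if sR ≤ s then γ s - R else s * c)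
    (n M : ℕ) (hM3 : 3 ≤ M) (hK : ((M : ℝ) - 1) ≤ Real.exp (n * R))
    (m : Fin M) (y : Fin n → Y) :
    ∑ C : Fin M → (Fin n → X), (∏ m', ∏ i, P (C m' i)) *
        ((∏ i, W (C m i) (y i)) ^ (1 - s) *
          (∑ m' ∈ Finset.univ.erase m, ∏ i, W (C m' i) (y i)) ^ s)
      ≤ Real.exp (-(n * γ (1 - s))) * Real.exp (-(n * Λs)) := by
  classical
  have hγ0 : γ 0 = 0 := by
    obtain ⟨y₀⟩ := ‹Nonempty Y›
    have h := hγ 0 y₀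
    simp only [Real.rpow_zero, mul_one, hPsum, Real.log_one, neg_zero] at h
    exact h
  have hmomv : ∀ t : ℝ, ∑ v : Fin n → X, (fun v => ∏ i, P (v i)) v *
      ((fun v => ∏ i, W (v i) (y i)) v) ^ t = Real.exp (-(n * γ t)) := fun t => by
    simpa using vector_moment P hP hPsum W hW γ hγ n t y
  have hsub : ∀ C : Fin M → (Fin n → X),
      (∑ m' ∈ Finset.univ.erase m, ∏ i, W (C m' i) (y i)) =
        ∑ j : { j // j ≠ m }, ∏ i, W (C j.1 i) (y i) := fun C =>
    Finset.sum_subtype (Finset.univ.erase m) (fun j => by simp [Finset.mem_erase])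
      (fun m' => ∏ i, W (C m' i) (y i))
  have hsplit := split_sum (fun v : Fin n → X => ∏ i, P (v i)) m
      (fun v => (∏ i, W (v i) (y i)) ^ (1 - s))
      (fun g : { j // j ≠ m } → (Fin n → X) =>
        (∑ j : { j // j ≠ m }, ∏ i, W ((g j) i) (y i)) ^ s)
  have heq : ∑ C : Fin M → (Fin n → X), (∏ m', ∏ i, P (C m' i)) *
        ((∏ i, W (C m i) (y i)) ^ (1 - s) *
          (∑ m' ∈ Finset.univ.erase m, ∏ i, W (C m' i) (y i)) ^ s)
      = (∑ v : Fin n → X, (∏ i, P (v i)) * (∏ i, W (v i) (y i)) ^ (1 - s)) *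
        (∑ g : { j // j ≠ m } → (Fin n → X), (∏ j, ∏ i, P ((g j) i)) *
          (∑ j : { j // j ≠ m }, ∏ i, W ((g j) i) (y i)) ^ s) := by
    rw [← hsplit]
    refine Finset.sum_congr rfl fun C _ => ?_
    rw [hsub C]
  rw [heq]
  have hfirst : (∑ v : Fin n → X, (∏ i, P (v i)) * (∏ i, W (v i) (y i)) ^ (1 - s))
      = Real.exp (-(n * γ (1 - s))) := vector_moment P hP hPsum W hW γ hγ n (1 - s) y
  rw [hfirst]
  refine mul_le_mul_of_nonneg_left ?_ (Real.exp_nonneg _)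
  have hcard : ((Fintype.card { j : Fin M // j ≠ m } : ℕ) : ℝ) ≤ Real.exp (n * R) := by
    have h1 : Fintype.card { j : Fin M // j ≠ m } = M - 1 := by
      simp [Fintype.card_subtype_compl, Fintype.card_fin]
    rw [h1]
    have h2 : (1 : ℕ) ≤ M := by omega
    rw [Nat.cast_sub h2]
    simpa using hK
  exact G_bound (fun v : Fin n → X => ∏ i, P (v i))
    (fun v => Finset.prod_nonneg fun i _ => hP _) (sum_pi_prod P hPsum)
    (fun v => ∏ i, W (v i) (y i)) (fun v => Finset.prod_pos fun i _ => hW _ _)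
    γ n hmomv hγ0 R hR c sR hsR0 hsR1 hsReq hcard s hs0 hs1 Λs hΛs

private lemma per_n_bound {X Y : Type} [Fintype X] [Fintype Y] [Nonempty Y]
    (P : X → ℝ) (hP : ∀ x, 0 ≤ P x) (hPsum : ∑ x, P x = 1)
    (W : X → Y → ℝ) (hW : ∀ x y, 0 < W x y)
    (γ : ℝ → ℝ) (hγ : ∀ (s : ℝ) (y : Y), γ s = -Real.log (∑ x, P x * W x y ^ s))
    (R T : ℝ) (hR : 0 < R) (hT : 0 ≤ T)
    (c sR : ℝ) (hsR0 : 0 ≤ sR) (hsR1 : sR < 1) (hsReq : γ sR - sR * c = R)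
    (s : ℝ) (hs0 : 0 ≤ s) (hs1 : s ≤ 1)
    (Λs : ℝ) (hΛs : Λs = if sR ≤ s then γ s - R else s * c)
    (n M : ℕ) (hM3 : 3 ≤ M) (hK : ((M : ℝ) - 1) ≤ Real.exp (n * R)) :
    (∑ C : Fin M → Fin n → X, (∏ m, ∏ i, P (C m i)) *
        (((M : ℝ))⁻¹ * ∑ m, ∑ y : Fin n → Y,
          if (∏ i, W (C m i) (y i)) <
              Real.exp (n * T) * ∑ m' ∈ Finset.univ.erase m, ∏ i, W (C m' i) (y i)
          then ∏ i, W (C m i) (y i) else 0))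
      ≤ Real.exp (-(n * (Λs + γ (1 - s) - s * T - Real.log (Fintype.card Y)))) := by
  classical
  have hMpos : (0 : ℝ) < (M : ℝ) := by exact_mod_cast Nat.lt_of_lt_of_le (by norm_num) hM3
  have hQC0 : ∀ C : Fin M → Fin n → X, 0 ≤ ∏ m', ∏ i, P (C m' i) :=
    fun C => Finset.prod_nonneg fun m' _ => Finset.prod_nonneg fun i _ => hP _
  have hcY : (0 : ℝ) < (Fintype.card Y : ℝ) := by
    exact_mod_cast Fintype.card_pos
  calc ∑ C : Fin M → Fin n → X, (∏ m, ∏ i, P (C m i)) *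
        (((M : ℝ))⁻¹ * ∑ m, ∑ y : Fin n → Y,
          if (∏ i, W (C m i) (y i)) <
              Real.exp (n * T) * ∑ m' ∈ Finset.univ.erase m, ∏ i, W (C m' i) (y i)
          then ∏ i, W (C m i) (y i) else 0)
      = ((M : ℝ))⁻¹ * ∑ m : Fin M, ∑ y : Fin n → Y, ∑ C : Fin M → Fin n → X,
          (∏ m', ∏ i, P (C m' i)) *
          (if (∏ i, W (C m i) (y i)) <
              Real.exp (n * T) * ∑ m' ∈ Finset.univ.erase m, ∏ i, W (C m' i) (y i)
            then ∏ i, W (C m i) (y i) else 0) := by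
        have e1 : ∀ C : Fin M → Fin n → X,
            (∏ m, ∏ i, P (C m i)) * (((M : ℝ))⁻¹ * ∑ m, ∑ y : Fin n → Y,
              if (∏ i, W (C m i) (y i)) <
                  Real.exp (n * T) * ∑ m' ∈ Finset.univ.erase m, ∏ i, W (C m' i) (y i)
                then ∏ i, W (C m i) (y i) else 0)
            = ((M : ℝ))⁻¹ * ∑ m, ∑ y : Fin n → Y, (∏ m', ∏ i, P (C m' i)) *
              (if (∏ i, W (C m i) (y i)) <
                  Real.exp (n * T) * ∑ m' ∈ Finset.univ.erase m, ∏ i, W (C m' i) (y i)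
                then ∏ i, W (C m i) (y i) else 0) := by
          intro C
          rw [mul_left_comm]
          congr 1
          rw [Finset.mul_sum]
          exact Finset.sum_congr rfl fun m _ => Finset.mul_sum _ _ _
        calc _ = ((M : ℝ))⁻¹ * ∑ C : Fin M → Fin n → X, ∑ m : Fin M, ∑ y : Fin n → Y,
              (∏ m', ∏ i, P (C m' i)) *
              (if (∏ i, W (C m i) (y i)) <
                  Real.exp (n * T) * ∑ m' ∈ Finset.univ.erase m, ∏ i, W (C m' i) (y i)
                then ∏ i, W (C m i) (y i) else 0) := by
              rw [Finset.mul_sum]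
              exact Finset.sum_congr rfl fun C _ => e1 C
          _ = _ := by
              congr 1
              rw [Finset.sum_comm]
              exact Finset.sum_congr rfl fun m _ => Finset.sum_comm
    _ ≤ ((M : ℝ))⁻¹ * ∑ m : Fin M, ∑ y : Fin n → Y,
          (Real.exp (n * T)) ^ s *
            (Real.exp (-(n * γ (1 - s))) * Real.exp (-(n * Λs))) := by
        refine mul_le_mul_of_nonneg_left
          (Finset.sum_le_sum fun m _ => Finset.sum_le_sum fun y _ => ?_)
          (by positivity)
        calc ∑ C : Fin M → Fin n → X, (∏ m', ∏ i, P (C m' i)) *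
              (if (∏ i, W (C m i) (y i)) <
                  Real.exp (n * T) * ∑ m' ∈ Finset.univ.erase m, ∏ i, W (C m' i) (y i)
                then ∏ i, W (C m i) (y i) else 0)
            ≤ ∑ C : Fin M → Fin n → X, (∏ m', ∏ i, P (C m' i)) *
              ((Real.exp (n * T)) ^ s * ((∏ i, W (C m i) (y i)) ^ (1 - s) *
                (∑ m' ∈ Finset.univ.erase m, ∏ i, W (C m' i) (y i)) ^ s)) := by
              refine Finset.sum_le_sum fun C _ => ?_
              refine mul_le_mul_of_nonneg_left ?_ (hQC0 C)
              exact chernoff_pointwise (Finset.prod_pos fun i _ => hW _ _)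
                (Finset.sum_nonneg fun m' _ => Finset.prod_nonneg fun i _ => (hW _ _).le)
                (Real.exp_pos _) hs0
          _ = (Real.exp (n * T)) ^ s * ∑ C : Fin M → Fin n → X,
                (∏ m', ∏ i, P (C m' i)) * ((∏ i, W (C m i) (y i)) ^ (1 - s) *
                (∑ m' ∈ Finset.univ.erase m, ∏ i, W (C m' i) (y i)) ^ s) := by
              rw [Finset.mul_sum]
              exact Finset.sum_congr rfl fun C _ => by ring
          _ ≤ (Real.exp (n * T)) ^ s *
                (Real.exp (-(n * γ (1 - s))) * Real.exp (-(n * Λs))) := by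
              refine mul_le_mul_of_nonneg_left ?_ (Real.rpow_nonneg (Real.exp_pos _).le s)
              exact inner_factor P hP hPsum W hW γ hγ R hR c sR hsR0 hsR1 hsReq
                s hs0 hs1 Λs hΛs n M hM3 hK m y
    _ = Real.exp (-(n * (Λs + γ (1 - s) - s * T - Real.log (Fintype.card Y)))) := by
        rw [Finset.sum_const, Finset.sum_const, Finset.card_univ, Finset.card_univ,
          Fintype.card_fin, nsmul_eq_mul, nsmul_eq_mul]
        have hcardfun : ((Fintype.card (Fin n → Y) : ℕ) : ℝ)
            = Real.exp (n * Real.log (Fintype.card Y)) := by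
          rw [Fintype.card_fun, Fintype.card_fin]
          push_cast
          rw [← Real.exp_log hcY, ← Real.exp_nat_mul, Real.log_exp]
        rw [hcardfun, ← Real.exp_mul, ← Real.exp_add, ← Real.exp_add, ← Real.exp_add]
        rw [← mul_assoc, inv_mul_cancel₀ hMpos.ne', one_mul]
        congr 1
        ring

private lemma cheby {X : Type} [Fintype X]
    (P : X → ℝ) (hP : ∀ x, 0 ≤ P x) (hPsum : ∑ x, P x = 1)
    (w : X → ℝ) (hw : ∀ x, 0 < w x) (s : ℝ) (hs : 1 ≤ s) :
    ∑ x, P x * w x ≤ (∑ x, P x * w x ^ s) * (∑ x, P x * w x ^ (1 - s)) := by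
  classical
  set g : X → ℝ := fun x => w x ^ s with hg
  set h : X → ℝ := fun x => w x ^ (1 - s) with hh
  have hgh : ∀ x, g x * h x = w x := by
    intro x
    rw [hg, hh]
    simp only
    rw [← Real.rpow_add (hw x)]
    norm_num
  have key : ∀ x x', 0 ≤ (P x * P x') * ((g x - g x') * (h x' - h x)) := by
    intro x x'
    refine mul_nonneg (mul_nonneg (hP x) (hP x')) ?_
    rcases le_total (w x) (w x') with hc | hc
    · have h1 : g x ≤ g x' := Real.rpow_le_rpow (hw x).le hc (by linarith)
      have h2 : h x' ≤ h x := Real.rpow_le_rpow_of_nonpos (hw x) hc (by linarith)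
      nlinarith [h1, h2]
    · have h1 : g x' ≤ g x := Real.rpow_le_rpow (hw x').le hc (by linarith)
      have h2 : h x ≤ h x' := Real.rpow_le_rpow_of_nonpos (hw x') hc (by linarith)
      exact mul_nonneg (by linarith) (by linarith)
  have hterm : ∀ x x' : X, (P x * P x') * ((g x - g x') * (h x' - h x)) =
      (P x * g x) * (P x' * h x') + (P x * h x) * (P x' * g x')
        - ((P x * (g x * h x)) * P x' + P x * (P x' * (g x' * h x'))) := by
    intro x x'; ring
  have hsum0 : (0:ℝ) ≤ ∑ x, ∑ x', (P x * P x') * ((g x - g x') * (h x' - h x)) :=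
    Finset.sum_nonneg fun x _ => Finset.sum_nonneg fun x' _ => key x x'
  have hexpand : ∑ x, ∑ x', (P x * P x') * ((g x - g x') * (h x' - h x)) =
      (∑ x, P x * g x) * (∑ x, P x * h x) + (∑ x, P x * h x) * (∑ x, P x * g x)
        - ((∑ x, P x * (g x * h x)) + (∑ x, P x * (g x * h x))) := by
    calc ∑ x, ∑ x', (P x * P x') * ((g x - g x') * (h x' - h x))
        = ∑ x, ∑ x', ((P x * g x) * (P x' * h x') + (P x * h x) * (P x' * g x')
          - ((P x * (g x * h x)) * P x' + P x * (P x' * (g x' * h x')))) :=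
          Finset.sum_congr rfl fun x _ => Finset.sum_congr rfl fun x' _ => hterm x x'
      _ = (∑ x, ∑ x', (P x * g x) * (P x' * h x'))
          + (∑ x, ∑ x', (P x * h x) * (P x' * g x'))
          - ((∑ x, ∑ x', (P x * (g x * h x)) * P x')
            + (∑ x, ∑ x', P x * (P x' * (g x' * h x')))) := by
          simp only [Finset.sum_add_distrib, Finset.sum_sub_distrib]
      _ = (∑ x, P x * g x) * (∑ x, P x * h x) + (∑ x, P x * h x) * (∑ x, P x * g x)
          - ((∑ x, P x * (g x * h x)) + (∑ x, P x * (g x * h x))) := by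
          rw [← Finset.sum_mul_sum, ← Finset.sum_mul_sum, ← Finset.sum_mul_sum,
            ← Finset.sum_mul_sum]
          rw [hPsum]
          ring
  have hghsum : ∑ x, P x * (g x * h x) = ∑ x, P x * w x :=
    Finset.sum_congr rfl fun x _ => by rw [hgh x]
  rw [hghsum] at hexpand
  rw [hexpand] at hsum0
  nlinarith [hsum0]

private lemma Pbar_pos {X Y : Type} [Fintype X] [Fintype Y] [Nonempty Y]
    (P : X → ℝ) (hP : ∀ x, 0 ≤ P x) (x₀ : X) (hx₀ : 0 < P x₀)
    (W : X → Y → ℝ) (hW : ∀ x y, 0 < W x y) (T : ℝ) (hT : 0 ≤ T)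
    (n M : ℕ) (hM3 : 3 ≤ M) :
    0 < ∑ C : Fin M → Fin n → X, (∏ m, ∏ i, P (C m i)) *
        (((M : ℝ))⁻¹ * ∑ m, ∑ y : Fin n → Y,
          if (∏ i, W (C m i) (y i)) <
              Real.exp (n * T) * ∑ m' ∈ Finset.univ.erase m, ∏ i, W (C m' i) (y i)
          then ∏ i, W (C m i) (y i) else 0) := by
  classical
  have hMpos : (0 : ℝ) < (M : ℝ) := by exact_mod_cast Nat.lt_of_lt_of_le (by norm_num) hM3
  haveI : NeZero M := ⟨by omega⟩
  refine Finset.sum_pos' (fun C _ => ?_) ⟨(fun _ _ => x₀), Finset.mem_univ _, ?_⟩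
  · refine mul_nonneg (Finset.prod_nonneg fun m _ => Finset.prod_nonneg fun i _ => hP _) ?_
    refine mul_nonneg (by positivity) ?_
    refine Finset.sum_nonneg fun m _ => Finset.sum_nonneg fun y _ => ?_
    split_ifs with h
    · exact Finset.prod_nonneg fun i _ => (hW _ _).le
    · exact le_refl 0
  · refine mul_pos (Finset.prod_pos fun m _ => Finset.prod_pos fun i _ => hx₀) ?_
    refine mul_pos (by positivity) ?_
    refine Finset.sum_pos (fun m _ => ?_) Finset.univ_nonempty
    refine Finset.sum_pos (fun y _ => ?_) Finset.univ_nonempty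
    have hA : 0 < ∏ i, W x₀ (y i) := Finset.prod_pos fun i _ => hW _ _
    have hcond : (∏ i, W x₀ (y i)) <
        Real.exp (n * T) * ∑ m' ∈ Finset.univ.erase m, ∏ i, W x₀ (y i) := by
      rw [Finset.sum_const, Finset.card_erase_of_mem (Finset.mem_univ m),
        Finset.card_univ, Fintype.card_fin, nsmul_eq_mul]
      have h2 : (2 : ℝ) ≤ ((M - 1 : ℕ) : ℝ) := by
        have : (2 : ℕ) ≤ M - 1 := by omega
        exact_mod_cast this
      have h3 : (1 : ℝ) ≤ Real.exp (n * T) := Real.one_le_exp (by positivity)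
      have h4 : 2 * (∏ i, W x₀ (y i)) ≤ ((M - 1 : ℕ) : ℝ) * ∏ i, W x₀ (y i) :=
        mul_le_mul_of_nonneg_right h2 hA.le
      have h5 : ((M - 1 : ℕ) : ℝ) * (∏ i, W x₀ (y i)) ≤
          Real.exp (n * T) * (((M - 1 : ℕ) : ℝ) * ∏ i, W x₀ (y i)) :=
        le_mul_of_one_le_left (by positivity) h3
      linarith
    rw [if_pos hcond]
    exact hA

private lemma Pbar_lower {X Y : Type} [Fintype X] [Fintype Y] [Nonempty Y]
    (P : X → ℝ) (hP : ∀ x, 0 ≤ P x) (hPsum : ∑ x, P x = 1)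
    (W : X → Y → ℝ) (hW : ∀ x y, 0 < W x y) (hWsum : ∀ x, ∑ y, W x y = 1)
    (x₀ : X) (T : ℝ) (hT : 0 ≤ T) (n M : ℕ) (hM3 : 3 ≤ M) :
    ((M : ℝ))⁻¹ * (∏ _i : Fin n, P x₀) ^ 2 ≤
      ∑ C : Fin M → Fin n → X, (∏ m, ∏ i, P (C m i)) *
        (((M : ℝ))⁻¹ * ∑ m, ∑ y : Fin n → Y,
          if (∏ i, W (C m i) (y i)) <
              Real.exp (n * T) * ∑ m' ∈ Finset.univ.erase m, ∏ i, W (C m' i) (y i)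
          then ∏ i, W (C m i) (y i) else 0) := by
  classical
  set v₀ : Fin n → X := fun _ => x₀ with hv₀
  have hm0 : 0 < M := by omega
  have hm1 : 1 < M := by omega
  have hm2 : 2 < M := by omega
  set m₁ : Fin M := ⟨0, hm0⟩ with hm₁
  set m₂ : Fin M := ⟨1, hm1⟩ with hm₂
  set m₃ : Fin M := ⟨2, hm2⟩ with hm₃
  have h21 : m₂ ≠ m₁ := by simp [hm₁, hm₂, Fin.ext_iff]
  have h31 : m₃ ≠ m₁ := by simp [hm₁, hm₃, Fin.ext_iff]
  have h23 : m₂ ≠ m₃ := by simp [hm₂, hm₃, Fin.ext_iff]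
  set Q : (Fin n → X) → ℝ := fun v => ∏ i, P (v i) with hQ
  have hQ0 : ∀ v, 0 ≤ Q v := fun v => Finset.prod_nonneg fun i _ => hP _
  have hQsum : ∑ v, Q v = 1 := sum_pi_prod P hPsum
  set F : (Fin n → X) → ℝ :=
    fun v => (if v = v₀ then (1:ℝ) else 0) * (∑ y : Fin n → Y, ∏ i, W (v i) (y i)) with hF
  set G : ({ j // j ≠ m₁ } → (Fin n → X)) → ℝ :=
    fun g => if g ⟨m₂, h21⟩ = v₀ then (1:ℝ) else 0 with hG
  have hay : ∀ (v : Fin n → X) (y : Fin n → Y), 0 < ∏ i, W (v i) (y i) :=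
    fun v y => Finset.prod_pos fun i _ => hW _ _
  have hQF : ∑ v, Q v * F v = ∏ _i : Fin n, P x₀ := by
    have h1 : ∑ y : Fin n → Y, ∏ i, W x₀ (y i) = 1 := by
      rw [← Fintype.prod_sum (fun (_ : Fin n) (yy : Y) => W x₀ yy)]
      simp [hWsum x₀]
    calc ∑ v, Q v * F v = ∑ v, (if v = v₀ then Q v * ∑ y : Fin n → Y, ∏ i, W (v i) (y i)
          else 0) := by
          refine Finset.sum_congr rfl fun v _ => ?_
          by_cases hv : v = v₀ <;> simp [hF, hv]
      _ = Q v₀ * ∑ y : Fin n → Y, ∏ i, W (v₀ i) (y i) := by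
          rw [Finset.sum_ite_eq' Finset.univ v₀
            (fun v => Q v * ∑ y : Fin n → Y, ∏ i, W (v i) (y i))]
          simp
      _ = ∏ _i : Fin n, P x₀ := by
          have h5 : ∑ y : Fin n → Y, ∏ i, W (v₀ i) (y i) = 1 := by
            simpa [hv₀] using h1
          rw [h5, mul_one]
  have hQG : ∑ g : { j // j ≠ m₁ } → (Fin n → X), (∏ j, Q (g j)) * G g
      = ∏ _i : Fin n, P x₀ := by
    have hm := marg_sum Q hQsum (⟨m₂, h21⟩ : {j // j ≠ m₁})
      (fun v => if v = v₀ then (1:ℝ) else 0)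
    have h2 : ∑ g : { j // j ≠ m₁ } → (Fin n → X), (∏ j, Q (g j)) * G g
        = ∑ v, Q v * (if v = v₀ then (1:ℝ) else 0) := by
      simp only [hG]; exact hm
    rw [h2]
    calc ∑ v, Q v * (if v = v₀ then (1:ℝ) else 0)
        = ∑ v, (if v = v₀ then Q v else 0) := by
          refine Finset.sum_congr rfl fun v _ => ?_
          split_ifs <;> ring
      _ = Q v₀ := by rw [Finset.sum_ite_eq' Finset.univ v₀ Q]; simp
      _ = ∏ _i : Fin n, P x₀ := by simp [hQ, hv₀]
  have hFG : ∀ C : Fin M → Fin n → X, F (C m₁) * G (fun j => C j.1) ≤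
      ∑ m, ∑ y : Fin n → Y,
        if (∏ i, W (C m i) (y i)) <
            Real.exp (n * T) * ∑ m' ∈ Finset.univ.erase m, ∏ i, W (C m' i) (y i)
        then ∏ i, W (C m i) (y i) else 0 := by
    intro C
    have hnn : ∀ m : Fin M, (0:ℝ) ≤ ∑ y : Fin n → Y,
        if (∏ i, W (C m i) (y i)) <
            Real.exp (n * T) * ∑ m' ∈ Finset.univ.erase m, ∏ i, W (C m' i) (y i)
        then ∏ i, W (C m i) (y i) else 0 := by
      intro m
      refine Finset.sum_nonneg fun y _ => ?_
      split_ifs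
      · exact (hay _ y).le
      · exact le_refl 0
    by_cases h1 : C m₁ = v₀
    · by_cases h2 : C m₂ = v₀
      · have hGval : G (fun j => C j.1) = 1 := by simp [hG, h2]
        have hFval : F (C m₁) = ∑ y : Fin n → Y, ∏ i, W (C m₁ i) (y i) := by
          simp [hF, h1]
        rw [hGval, mul_one, hFval]
        refine le_trans ?_ (Finset.single_le_sum (fun m _ => hnn m) (Finset.mem_univ m₁))
        refine Finset.sum_le_sum fun y _ => ?_
        have hcond : (∏ i, W (C m₁ i) (y i)) <
            Real.exp (n * T) * ∑ m' ∈ Finset.univ.erase m₁, ∏ i, W (C m' i) (y i) := by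
          have hsub : ({m₂, m₃} : Finset (Fin M)) ⊆ Finset.univ.erase m₁ := by
            intro z hz
            rw [Finset.mem_insert, Finset.mem_singleton] at hz
            rcases hz with rfl | rfl
            · exact Finset.mem_erase.mpr ⟨h21, Finset.mem_univ _⟩
            · exact Finset.mem_erase.mpr ⟨h31, Finset.mem_univ _⟩
          have hpair : ∑ m' ∈ ({m₂, m₃} : Finset (Fin M)), ∏ i, W (C m' i) (y i)
              = (∏ i, W (C m₂ i) (y i)) + ∏ i, W (C m₃ i) (y i) :=
            Finset.sum_pair h23
          have hle : ∑ m' ∈ ({m₂, m₃} : Finset (Fin M)), ∏ i, W (C m' i) (y i)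
              ≤ ∑ m' ∈ Finset.univ.erase m₁, ∏ i, W (C m' i) (y i) :=
            Finset.sum_le_sum_of_subset_of_nonneg hsub (fun z _ _ => (hay _ y).le)
          have heq2 : (∏ i, W (C m₂ i) (y i)) = ∏ i, W (C m₁ i) (y i) := by
            rw [h1, h2]
          have h3pos : 0 < ∏ i, W (C m₃ i) (y i) := hay _ y
          have hexp1 : (1:ℝ) ≤ Real.exp (n * T) := Real.one_le_exp (by positivity)
          have hS0 : 0 ≤ ∑ m' ∈ Finset.univ.erase m₁, ∏ i, W (C m' i) (y i) :=
            Finset.sum_nonneg fun m' _ => (hay _ y).le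
          calc (∏ i, W (C m₁ i) (y i))
              < (∏ i, W (C m₂ i) (y i)) + ∏ i, W (C m₃ i) (y i) := by
                rw [heq2]; linarith
            _ ≤ ∑ m' ∈ Finset.univ.erase m₁, ∏ i, W (C m' i) (y i) := by
                rw [← hpair]; exact hle
            _ ≤ Real.exp (n * T) * ∑ m' ∈ Finset.univ.erase m₁, ∏ i, W (C m' i) (y i) :=
                le_mul_of_one_le_left hS0 hexp1
        refine le_of_eq ?_
        rw [if_pos hcond]
      · have hGval : G (fun j => C j.1) = 0 := by simp [hG, h2]
        rw [hGval, mul_zero]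
        exact Finset.sum_nonneg fun m _ => hnn m
    · have hFval : F (C m₁) = 0 := by
        simp [hF, h1]
      rw [hFval, zero_mul]
      exact Finset.sum_nonneg fun m _ => hnn m
  have hsplit := split_sum Q m₁ F G
  calc ((M : ℝ))⁻¹ * (∏ _i : Fin n, P x₀) ^ 2
      = ((M : ℝ))⁻¹ * ((∑ v, Q v * F v) *
          (∑ g : { j // j ≠ m₁ } → (Fin n → X), (∏ j, Q (g j)) * G g)) := by
        rw [hQF, hQG]; ring
    _ = ∑ C : Fin M → Fin n → X, (∏ j, Q (C j)) *
          (((M : ℝ))⁻¹ * (F (C m₁) * G (fun j => C j.1))) := by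
        rw [← hsplit, Finset.mul_sum]
        exact Finset.sum_congr rfl fun C _ => by ring
    _ ≤ ∑ C : Fin M → Fin n → X, (∏ m, ∏ i, P (C m i)) *
        (((M : ℝ))⁻¹ * ∑ m, ∑ y : Fin n → Y,
          if (∏ i, W (C m i) (y i)) <
              Real.exp (n * T) * ∑ m' ∈ Finset.univ.erase m, ∏ i, W (C m' i) (y i)
          then ∏ i, W (C m i) (y i) else 0) := by
        refine Finset.sum_le_sum fun C _ => ?_
        refine mul_le_mul_of_nonneg_left ?_ (Finset.prod_nonneg fun m _ => hQ0 _)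
        exact mul_le_mul_of_nonneg_left (hFG C) (by positivity)

/-- Under the symmetry condition, for every rate `R > 0` admitting
`s_R ∈ [0,1)` with `γ(s_R) − s_R·γ'(s_R) = R` and every threshold `T ≥ 0`, the
ensemble-average total error probability of Forney's optimal erasure decoder satisfies
`limsup (1/n)·ln P̄{E₁}(n) ≤ −E₁*(R,T)`, where
`E₁*(R,T) = sup_{s ≥ 0} [Λ(R,s) + γ(1−s) − sT − ln|Y|]`. -/
theorem total_error_exponent_bound
    {X Y : Type} [Fintype X] [Fintype Y] [Nonempty X] [Nonempty Y]
    (P : X → ℝ) (hP : ∀ x, 0 ≤ P x) (hPsum : ∑ x, P x = 1)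
    (W : X → Y → ℝ) (hW : ∀ x y, 0 < W x y) (hWsum : ∀ x, ∑ y, W x y = 1)
    (γ γ' : ℝ → ℝ)
    (hγ : ∀ (s : ℝ) (y : Y), γ s = -Real.log (∑ x, P x * W x y ^ s))
    (hγ' : ∀ s : ℝ, HasDerivAt γ (γ' s) s)
    (R T : ℝ) (hR : 0 < R) (hT : 0 ≤ T)
    (sR : ℝ) (hsR0 : 0 ≤ sR) (hsR1 : sR < 1)
    (hsReq : γ sR - sR * γ' sR = R)
    (Λ : ℝ → ℝ)
    (hΛ : ∀ s : ℝ, Λ s = if sR ≤ s then γ s - R else s * γ' sR)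
    (E₁ : ℝ)
    (hE₁ : E₁ = sSup {E : ℝ | ∃ s : ℝ, 0 ≤ s ∧
        E = Λ s + γ (1 - s) - s * T - Real.log (Fintype.card Y)})
    (Pbar : ℕ → ℝ)
    (hPbar : ∀ n : ℕ, Pbar n =
      ∑ C : Fin (codebookSize R n) → Fin n → X,
        (∏ m, ∏ i, P (C m i)) *
          (((codebookSize R n : ℝ))⁻¹ *
            ∑ m, ∑ y : Fin n → Y,
              if (∏ i, W (C m i) (y i)) <
                  Real.exp (n * T) *
                    ∑ m' ∈ Finset.univ.erase m, ∏ i, W (C m' i) (y i)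
              then ∏ i, W (C m i) (y i) else 0)) :
    Filter.limsup (fun n : ℕ => (n : ℝ)⁻¹ * Real.log (Pbar n)) Filter.atTop ≤ -E₁ := by

  classical
  obtain ⟨x₀, hx₀⟩ : ∃ x, 0 < P x := by
    by_contra hcon
    push_neg at hcon
    have h0 : ∑ x, P x = 0 := Finset.sum_eq_zero fun x _ => le_antisymm (hcon x) (hP x)
    rw [h0] at hPsum; norm_num at hPsum
  obtain ⟨y₀⟩ := ‹Nonempty Y›
  have hγ0 : γ 0 = 0 := by
    have h := hγ 0 y₀
    simp only [Real.rpow_zero, mul_one, hPsum, Real.log_one, neg_zero] at h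
    exact h
  set Es : ℝ → ℝ := fun s => Λ s + γ (1 - s) - s * T - Real.log (Fintype.card Y) with hEs
  set L := Filter.limsup (fun n : ℕ => (n : ℝ)⁻¹ * Real.log (Pbar n)) Filter.atTop with hLdef
  have hev3 : ∀ᶠ n : ℕ in Filter.atTop, 3 ≤ codebookSize R n := by
    have h1 : Filter.Tendsto (fun n : ℕ => (n : ℝ) * R) Filter.atTop Filter.atTop :=
      Filter.Tendsto.atTop_mul_const' hR tendsto_natCast_atTop_atTop
    have h2 := (Real.tendsto_exp_atTop.comp h1).eventually_gt_atTop 2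
    filter_upwards [h2] with n hn
    exact Nat.lt_ceil.mpr (by exact_mod_cast hn)
  have hEbound : ∀ s : ℝ, 0 ≤ s → s ≤ 1 →
      ∀ᶠ n : ℕ in Filter.atTop, (n : ℝ)⁻¹ * Real.log (Pbar n) ≤ -(Es s) := by
    intro s h0 h1
    filter_upwards [hev3, Filter.eventually_ge_atTop 1] with n h3 hn1
    have hK : ((codebookSize R n : ℝ)) - 1 ≤ Real.exp ((n : ℝ) * R) := by
      have hceil : ((⌈Real.exp ((n : ℝ) * R)⌉₊ : ℕ) : ℝ) < Real.exp ((n : ℝ) * R) + 1 :=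
        Nat.ceil_lt_add_one (Real.exp_nonneg _)
      have h5 : ((codebookSize R n : ℕ) : ℝ) < Real.exp ((n : ℝ) * R) + 1 := hceil
      linarith
    have hb : Pbar n ≤ Real.exp
        (-((n : ℝ) * (Λ s + γ (1 - s) - s * T - Real.log (Fintype.card Y)))) := by
      rw [hPbar n]
      exact per_n_bound P hP hPsum W hW γ hγ R T hR hT (γ' sR) sR hsR0 hsR1 hsReq
        s h0 h1 (Λ s) (hΛ s) n (codebookSize R n) h3 hK
    have hp : 0 < Pbar n := by
      rw [hPbar n]
      exact Pbar_pos P hP x₀ hx₀ W hW T hT n (codebookSize R n) h3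
    have hlog : Real.log (Pbar n) ≤ -((n : ℝ) * Es s) := by
      have h5 := Real.log_le_log hp hb
      rw [Real.log_exp] at h5
      rw [hEs]
      exact h5
    have hn0 : (0 : ℝ) < (n : ℝ) := by exact_mod_cast hn1
    calc (n : ℝ)⁻¹ * Real.log (Pbar n) ≤ (n : ℝ)⁻¹ * (-((n : ℝ) * Es s)) :=
        mul_le_mul_of_nonneg_left hlog (by positivity)
      _ = -(Es s) := by
        rw [mul_neg, ← mul_assoc, inv_mul_cancel₀ hn0.ne', one_mul]
  have hlow : ∀ᶠ n : ℕ in Filter.atTop,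
      (-(Real.log 2) - R + 2 * Real.log (P x₀)) ≤ (n : ℝ)⁻¹ * Real.log (Pbar n) := by
    filter_upwards [hev3, Filter.eventually_ge_atTop 1] with n h3 hn1
    have hn0 : (0 : ℝ) < (n : ℝ) := by exact_mod_cast hn1
    have hn1' : (1 : ℝ) ≤ (n : ℝ) := by exact_mod_cast hn1
    have hM0 : 0 < codebookSize R n := by omega
    have hMpos : (0 : ℝ) < (codebookSize R n : ℝ) := by exact_mod_cast hM0
    have hQv : (0 : ℝ) < ∏ _i : Fin n, P x₀ := Finset.prod_pos fun _ _ => hx₀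
    have hlb : ((codebookSize R n : ℝ))⁻¹ * (∏ _i : Fin n, P x₀) ^ 2 ≤ Pbar n := by
      rw [hPbar n]
      exact Pbar_lower P hP hPsum W hW hWsum x₀ T hT n _ h3
    have hlbpos : 0 < ((codebookSize R n : ℝ))⁻¹ * (∏ _i : Fin n, P x₀) ^ 2 := by positivity
    have hlog1 : Real.log (((codebookSize R n : ℝ))⁻¹ * (∏ _i : Fin n, P x₀) ^ 2)
        ≤ Real.log (Pbar n) := Real.log_le_log hlbpos hlb
    have hMle : Real.log (codebookSize R n : ℝ) ≤ Real.log 2 + (n : ℝ) * R := by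
      have h7 : ((codebookSize R n : ℕ) : ℝ) < Real.exp ((n : ℝ) * R) + 1 :=
        Nat.ceil_lt_add_one (Real.exp_nonneg _)
      have h8 : (1 : ℝ) ≤ Real.exp ((n : ℝ) * R) := Real.one_le_exp (by positivity)
      have h6 : (codebookSize R n : ℝ) ≤ 2 * Real.exp ((n : ℝ) * R) := by linarith
      calc Real.log (codebookSize R n : ℝ) ≤ Real.log (2 * Real.exp ((n : ℝ) * R)) :=
            Real.log_le_log hMpos h6
        _ = Real.log 2 + (n : ℝ) * R := by
            rw [Real.log_mul (by norm_num) (Real.exp_ne_zero _), Real.log_exp]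
    have hlog2 : -(Real.log 2 + (n : ℝ) * R) + 2 * ((n : ℝ) * Real.log (P x₀))
        ≤ Real.log (((codebookSize R n : ℝ))⁻¹ * (∏ _i : Fin n, P x₀) ^ 2) := by
      rw [Real.log_mul (by positivity) (by positivity), Real.log_inv]
      have hprod : (∏ _i : Fin n, P x₀) = P x₀ ^ n := by
        simp [Finset.prod_const]
      rw [hprod, ← pow_mul, Real.log_pow]
      push_cast
      linarith
    have hlog3 : -(Real.log 2 + (n : ℝ) * R) + 2 * ((n : ℝ) * Real.log (P x₀))
        ≤ Real.log (Pbar n) := le_trans hlog2 hlog1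
    have h12 : 0 ≤ Real.log 2 := Real.log_nonneg (by norm_num)
    have hkey : (n : ℝ) * (-(Real.log 2) - R + 2 * Real.log (P x₀)) ≤ Real.log (Pbar n) := by
      nlinarith [hlog3, h12, hn1']
    rw [inv_mul_eq_div, le_div_iff₀ hn0]
    nlinarith [hkey]
  have hcobdd : Filter.IsCoboundedUnder (· ≤ ·) Filter.atTop
      (fun n : ℕ => (n : ℝ)⁻¹ * Real.log (Pbar n)) :=
    Filter.isCoboundedUnder_le_of_eventually_le Filter.atTop hlow
  have hlimle : ∀ s : ℝ, 0 ≤ s → s ≤ 1 → L ≤ -(Es s) := fun s h0 h1 =>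
    Filter.limsup_le_of_le hcobdd (hEbound s h0 h1)
  have hchain : ∀ s : ℝ, 0 ≤ s → Es s ≤ -L := by
    intro s h0
    rcases le_or_gt s 1 with h1 | h1
    · linarith [hlimle s h0 h1]
    · have hγadd : γ s + γ (1 - s) ≤ γ 1 := by
        have hc := cheby P hP hPsum (fun x => W x y₀) (fun x => hW x y₀) s h1.le
        have e1 : ∑ x, P x * W x y₀ = Real.exp (-γ 1) := by
          have h6 := single_moment P hP hPsum W hW γ hγ 1 y₀
          simpa [Real.rpow_one] using h6
        have e2 := single_moment P hP hPsum W hW γ hγ s y₀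
        have e3 := single_moment P hP hPsum W hW γ hγ (1 - s) y₀
        rw [e1, e2, e3, ← Real.exp_add] at hc
        have h7 := Real.exp_le_exp.mp hc
        linarith
      have hΛs' : Λ s = γ s - R := by rw [hΛ s, if_pos (by linarith)]
      have hΛ1 : Λ 1 = γ 1 - R := by rw [hΛ 1, if_pos hsR1.le]
      have hlim1 := hlimle 1 zero_le_one le_rfl
      have hst : 0 ≤ (s - 1) * T := mul_nonneg (by linarith) hT
      have hEs' : Es s ≤ Es 1 := by
        rw [hEs]
        simp only
        rw [hΛs', hΛ1]
        have h11 : (1 : ℝ) - 1 = 0 := by norm_num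
        rw [h11, hγ0]
        linarith
      linarith
  rw [hE₁]
  have hne : ({E : ℝ | ∃ s : ℝ, 0 ≤ s ∧
      E = Λ s + γ (1 - s) - s * T - Real.log (Fintype.card Y)}).Nonempty :=
    ⟨Es 0, 0, le_rfl, by rw [hEs]⟩
  have hsup : sSup {E : ℝ | ∃ s : ℝ, 0 ≤ s ∧
      E = Λ s + γ (1 - s) - s * T - Real.log (Fintype.card Y)} ≤ -L := by
    refine csSup_le hne ?_
    rintro E ⟨s, hs0, rfl⟩
    have := hchain s hs0
    rw [hEs] at this
    exact this
  linarith
end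

section
/- Under the symmetry condition, the new exponent dominates Forney's exponent: for every rate R > 0 admitting s_R ∈ [0,1) with γ(s_R) − s_R·γ'(s_R) = R, every threshold T ≥ 0, and every pair (s,ρ) with 0 ≤ s ≤ ρ ≤ 1 and ρ > 0, one has E₀(s,ρ) − ρR − sT ≤ sup_{σ≥0} [Λ(R,σ) + γ(1−σ) − σT − ln|Y|], where E₀(s,ρ) := −ln Σ_{y∈Y} (Σ_{x∈X} P(x)·W(y|x)^{1−s})·(Σ_{x'∈X} P(x')·W(y|x')^{s/ρ})^ρ. -/
open scoped BigOperators

lemma holder_sum {X : Type} [Fintype X] (p w : X → ℝ) (hp : ∀ x, 0 ≤ p x)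
    (hw : ∀ x, 0 < w x) (a b θ : ℝ) (hθ0 : 0 < θ) (hθ1 : θ < 1) :
    ∑ x, p x * w x ^ (θ * a + (1 - θ) * b) ≤
      (∑ x, p x * w x ^ a) ^ θ * (∑ x, p x * w x ^ b) ^ (1 - θ) := by
  have hθ1' : 0 < 1 - θ := by linarith
  have hpq : Real.HolderConjugate θ⁻¹ (1 - θ)⁻¹ :=
    Real.holderConjugate_iff.mpr ⟨one_lt_inv₀ hθ0 |>.2 hθ1, by rw [inv_inv, inv_inv]; ring⟩
  have hf : ∀ x ∈ Finset.univ, (0:ℝ) ≤ (p x * w x ^ a) ^ θ := fun x _ =>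
    Real.rpow_nonneg (mul_nonneg (hp x) (Real.rpow_pos_of_pos (hw x) a).le) θ
  have hg : ∀ x ∈ Finset.univ, (0:ℝ) ≤ (p x * w x ^ b) ^ (1 - θ) := fun x _ =>
    Real.rpow_nonneg (mul_nonneg (hp x) (Real.rpow_pos_of_pos (hw x) b).le) (1 - θ)
  have H := Real.inner_le_Lp_mul_Lq_of_nonneg Finset.univ
    (f := fun x => (p x * w x ^ a) ^ θ) (g := fun x => (p x * w x ^ b) ^ (1 - θ))
    hpq hf hg
  have hfg : ∀ x : X, (p x * w x ^ a) ^ θ * (p x * w x ^ b) ^ (1 - θ)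
      = p x * w x ^ (θ * a + (1 - θ) * b) := by
    intro x
    rw [Real.mul_rpow (hp x) (Real.rpow_pos_of_pos (hw x) a).le,
      Real.mul_rpow (hp x) (Real.rpow_pos_of_pos (hw x) b).le,
      ← Real.rpow_mul (hw x).le, ← Real.rpow_mul (hw x).le]
    have h1 : p x ^ θ * p x ^ (1 - θ) = p x := by
      rw [← Real.rpow_add' (hp x) (by norm_num : θ + (1 - θ) ≠ 0)]
      norm_num
    have h2 : w x ^ (a * θ) * w x ^ (b * (1 - θ)) = w x ^ (θ * a + (1 - θ) * b) := by
      rw [← Real.rpow_add (hw x)]; ring_nf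
    calc p x ^ θ * w x ^ (a * θ) * (p x ^ (1 - θ) * w x ^ (b * (1 - θ)))
        = (p x ^ θ * p x ^ (1 - θ)) * (w x ^ (a * θ) * w x ^ (b * (1 - θ))) := by ring
      _ = p x * w x ^ (θ * a + (1 - θ) * b) := by rw [h1, h2]
  have hfp : ∀ x : X, ((p x * w x ^ a) ^ θ) ^ θ⁻¹ = p x * w x ^ a := fun x =>
    Real.rpow_rpow_inv (mul_nonneg (hp x) (Real.rpow_pos_of_pos (hw x) a).le) hθ0.ne'
  have hgq : ∀ x : X, ((p x * w x ^ b) ^ (1 - θ)) ^ (1 - θ)⁻¹ = p x * w x ^ b := fun x =>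
    Real.rpow_rpow_inv (mul_nonneg (hp x) (Real.rpow_pos_of_pos (hw x) b).le) hθ1'.ne'
  simp only [hfg, hfp, hgq, one_div, inv_inv] at H
  exact H

/-- Under the symmetry condition, the new exponent dominates Forney's
exponent: for every rate `R > 0` admitting `s_R ∈ [0,1)` with `γ(s_R) − s_R·γ'(s_R) = R`,
every threshold `T ≥ 0`, and every pair `(s,ρ)` with `0 ≤ s ≤ ρ ≤ 1` and `ρ > 0`,
`E₀(s,ρ) − ρR − sT ≤ sup_{σ ≥ 0} [Λ(R,σ) + γ(1−σ) − σT − ln|Y|]`. -/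
theorem new_exponent_dominates_forney
    {X Y : Type} [Fintype X] [Fintype Y] [Nonempty X] [Nonempty Y]
    (P : X → ℝ) (hP : ∀ x, 0 ≤ P x) (hPsum : ∑ x, P x = 1)
    (W : X → Y → ℝ) (hW : ∀ x y, 0 < W x y) (hWsum : ∀ x, ∑ y, W x y = 1)
    (γ γ' : ℝ → ℝ)
    (hγ : ∀ (σ : ℝ) (y : Y), γ σ = -Real.log (∑ x, P x * W x y ^ σ))
    (hγ' : ∀ σ : ℝ, HasDerivAt γ (γ' σ) σ)
    (R T : ℝ) (hR : 0 < R) (hT : 0 ≤ T)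
    (sR : ℝ) (hsR0 : 0 ≤ sR) (hsR1 : sR < 1)
    (hsReq : γ sR - sR * γ' sR = R)
    (Λ : ℝ → ℝ)
    (hΛ : ∀ σ : ℝ, Λ σ = if sR ≤ σ then γ σ - R else σ * γ' sR)
    (s ρ : ℝ) (hs : 0 ≤ s) (hsρ : s ≤ ρ) (hρ1 : ρ ≤ 1) (hρ : 0 < ρ) :
    (-Real.log (∑ y, (∑ x, P x * W x y ^ (1 - s)) *
        (∑ x', P x' * W x' y ^ (s / ρ)) ^ ρ)) - ρ * R - s * T ≤
      sSup {E : ℝ | ∃ σ : ℝ, 0 ≤ σ ∧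
        E = Λ σ + γ (1 - σ) - σ * T - Real.log (Fintype.card Y)} := by
  classical
  obtain ⟨x0, hx0⟩ : ∃ x, 0 < P x := by
    by_contra h
    push_neg at h
    have h0 : ∑ x, P x = 0 :=
      Finset.sum_eq_zero fun x _ => le_antisymm (h x) (hP x)
    rw [hPsum] at h0; norm_num at h0
  have y0 : Y := Classical.arbitrary Y
  have hSpos : ∀ (σ : ℝ) (y : Y), 0 < ∑ x, P x * W x y ^ σ := by
    intro σ y
    have h1 : ∀ x ∈ Finset.univ, (0:ℝ) ≤ P x * W x y ^ σ := fun x _ =>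
      mul_nonneg (hP x) (Real.rpow_pos_of_pos (hW x y) σ).le
    exact lt_of_lt_of_le (mul_pos hx0 (Real.rpow_pos_of_pos (hW x0 y) σ))
      (Finset.single_le_sum h1 (Finset.mem_univ x0))
  have hSexp : ∀ (σ : ℝ) (y : Y), ∑ x, P x * W x y ^ σ = Real.exp (-γ σ) := by
    intro σ y
    rw [hγ σ y, neg_neg, Real.exp_log (hSpos σ y)]
  -- γ 0 = 0 and sR > 0
  have hγ0 : γ 0 = 0 := by
    rw [hγ 0 y0]
    simp only [Real.rpow_zero, mul_one, hPsum, Real.log_one, neg_zero]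
  have hsRpos : 0 < sR := by
    rcases hsR0.lt_or_eq with h | h
    · exact h
    · exfalso; rw [← h] at hsReq; rw [hγ0] at hsReq; nlinarith
  -- concavity
  have hconc : ∀ a b θ : ℝ, 0 ≤ θ → θ ≤ 1 →
      θ * γ a + (1 - θ) * γ b ≤ γ (θ * a + (1 - θ) * b) := by
    intro a b θ hθ0 hθ1
    rcases eq_or_lt_of_le hθ0 with h0 | h0
    · rw [← h0]; norm_num
    rcases eq_or_lt_of_le hθ1 with h1 | h1
    · rw [h1]; norm_num
    have key := holder_sum P (fun x => W x y0) hP (fun x => hW x y0) a b θ h0 h1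
    rw [hSexp, hSexp, hSexp] at key
    have h2 : Real.exp (-γ a) ^ θ * Real.exp (-γ b) ^ (1 - θ)
        = Real.exp (θ * (-γ a) + (1 - θ) * (-γ b)) := by
      rw [Real.exp_add, ← Real.exp_mul, ← Real.exp_mul]; ring_nf
    rw [h2] at key
    have h3 := Real.log_le_log (Real.exp_pos _) key
    rw [Real.log_exp, Real.log_exp] at h3
    linarith
  have hconcOn : ConcaveOn ℝ Set.univ γ := by
    refine ⟨convex_univ, ?_⟩
    intro x _ y _ a b ha hb hab
    have hb' : b = 1 - a := by linarith
    have := hconc x y a ha (by linarith)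
    simpa [smul_eq_mul, hb'] using this
  -- tangent line at sR
  have htan : ∀ t : ℝ, γ t ≤ γ sR + γ' sR * (t - sR) := by
    intro t
    rcases lt_trichotomy t sR with h | h | h
    · have hs1 := hconcOn.le_slope_of_hasDerivAt (Set.mem_univ t) (Set.mem_univ sR) h (hγ' sR)
      rw [slope_def_field] at hs1
      have hd : 0 < sR - t := by linarith
      rw [le_div_iff₀ hd] at hs1
      have : γ' sR * (t - sR) = -(γ' sR * (sR - t)) := by ring
      linarith
    · rw [h]; simp
    · have hs1 := hconcOn.slope_le_of_hasDerivAt (Set.mem_univ sR) (Set.mem_univ t) h (hγ' sR)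
      rw [slope_def_field] at hs1
      have hd : 0 < t - sR := by linarith
      rw [div_le_iff₀ hd] at hs1
      linarith
  have hγsR : γ sR = R + sR * γ' sR := by linarith
  have htan' : ∀ t : ℝ, γ t ≤ R + γ' sR * t := by
    intro t
    have h1 := htan t
    nlinarith [h1, hγsR]
  -- Λ σ ≤ γ' sR * σ
  have hΛle : ∀ σ : ℝ, Λ σ ≤ γ' sR * σ := by
    intro σ
    rw [hΛ]
    split_ifs with h
    · have := htan' σ; linarith
    · linarith [le_refl (σ * γ' sR), mul_comm σ (γ' sR) ▸ le_refl (σ * γ' sR)]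
  -- the set and its boundedness
  set S : Set ℝ := {E : ℝ | ∃ σ : ℝ, 0 ≤ σ ∧
      E = Λ σ + γ (1 - σ) - σ * T - Real.log (Fintype.card Y)} with hS
  have hbdd : BddAbove S := by
    refine ⟨γ sR + γ' sR * (1 - sR) - Real.log (Fintype.card Y), ?_⟩
    rintro E ⟨σ, hσ, rfl⟩
    have h1 : Λ σ ≤ γ' sR * σ := hΛle σ
    have h2 : γ (1 - σ) ≤ γ sR + γ' sR * ((1 - σ) - sR) := htan (1 - σ)
    have h3 : 0 ≤ σ * T := mul_nonneg hσ hT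
    nlinarith
  -- the chosen element
  have hmem : Λ s + γ (1 - s) - s * T - Real.log (Fintype.card Y) ∈ S := ⟨s, hs, rfl⟩
  -- key inequality: ρ * γ (s/ρ) - ρ * R ≤ Λ s
  set u : ℝ := s / ρ with hu_def
  have hsu : ρ * u = s := by rw [hu_def]; field_simp
  have hu0 : 0 ≤ u := div_nonneg hs hρ.le
  have hkey : ρ * γ u - ρ * R ≤ Λ s := by
    rcases lt_or_ge s sR with hcase | hcase
    · -- s < sR : Λ s = s * γ' sR, tangent suffices
      rw [hΛ, if_neg (not_le.2 hcase)]
      have h1 : γ u ≤ R + γ' sR * u := htan' u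
      have h2 : γ' sR * (ρ * u) = γ' sR * s := by rw [hsu]
      nlinarith [mul_le_mul_of_nonneg_left h1 hρ.le, h2]
    · -- sR ≤ s
      rw [hΛ, if_pos hcase]
      have hsu' : s ≤ u := by
        rw [hu_def, le_div_iff₀ hρ]
        nlinarith
      rcases eq_or_lt_of_le hsu' with heq | hlt
      · -- u = s forces ρ = 1
        have hupos : 0 < u := lt_of_lt_of_le hsRpos (hcase.trans hsu')
        have hρ1' : ρ = 1 := by
          have : ρ * u = u := by rw [hsu, heq]
          nlinarith
        rw [hρ1', ← heq]; ring_nf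
        linarith [le_refl (γ s)]
      · -- sR ≤ s < u : chord + tangent
        have hd : 0 < u - sR := by linarith
        set θ : ℝ := (u - s) / (u - sR) with hθdef
        have hθ0 : 0 ≤ θ := div_nonneg (by linarith) hd.le
        have hθ1 : θ ≤ 1 := by
          rw [div_le_one hd]; linarith
        have hmix : θ * sR + (1 - θ) * u = s := by
          rw [hθdef]; field_simp; ring
        have hchord := hconc sR u θ hθ0 hθ1
        rw [hmix] at hchord
        -- clear denominators in chord
        have hc' : (u - s) * γ sR + (s - sR) * γ u ≤ (u - sR) * γ s := by
          have h1 : θ * γ sR + (1 - θ) * γ u ≤ γ s := hchord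
          have h2 : (u - sR) * (θ * γ sR + (1 - θ) * γ u) ≤ (u - sR) * γ s :=
            mul_le_mul_of_nonneg_left h1 hd.le
          have e1 : θ * γ sR * (u - sR) = (u - s) * γ sR := by
            rw [hθdef]; field_simp
          have e2 : (1 - θ) * γ u * (u - sR) = (s - sR) * γ u := by
            rw [hθdef]; field_simp; ring
          nlinarith [h2, e1, e2]
        have hupos : 0 < u := by linarith
        have ht' : sR * (u - s) * γ u ≤ sR * (u - s) * (R + γ' sR * u) :=
          mul_le_mul_of_nonneg_left (htan' u)
            (mul_nonneg hsRpos.le (by linarith : (0:ℝ) ≤ u - s))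
        have hc'' : u * ((u - s) * γ sR + (s - sR) * γ u) ≤ u * ((u - sR) * γ s) :=
          mul_le_mul_of_nonneg_left hc' hupos.le
        -- goal : ρ * γ u - ρ * R ≤ γ s - R
        have hKpos : 0 < u * (u - sR) := mul_pos hupos hd
        have hmain : u * (u - sR) * (ρ * γ u - ρ * R) ≤ u * (u - sR) * (γ s - R) := by
          have hA : u * (u - sR) * (ρ * γ u - ρ * R)
              = (u - sR) * s * γ u - (u - sR) * s * R := by
            rw [← hsu]; ring
          have hγsR' : u * (u - s) * γ sR = u * (u - s) * (R + sR * γ' sR) := by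
            rw [hγsR]
          rw [hA]
          linarith [hc'', ht', hγsR']
        exact le_of_mul_le_mul_left hmain hKpos
  -- assemble
  have hLHS : ∀ y : Y, (∑ x, P x * W x y ^ (1 - s)) * (∑ x', P x' * W x' y ^ (s / ρ)) ^ ρ
      = Real.exp (-γ (1 - s) + ρ * (-γ u)) := by
    intro y
    rw [hSexp, hSexp, Real.exp_add, ← Real.exp_mul, ← hu_def,
      show -γ u * ρ = ρ * (-γ u) by ring]
  have hsumY : (∑ y : Y, (∑ x, P x * W x y ^ (1 - s)) * (∑ x', P x' * W x' y ^ (s / ρ)) ^ ρ)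
      = (Fintype.card Y : ℝ) * Real.exp (-γ (1 - s) + ρ * (-γ u)) := by
    rw [Finset.sum_congr rfl fun y _ => hLHS y, Finset.sum_const, Finset.card_univ,
      nsmul_eq_mul]
  rw [hsumY]
  have hcardpos : (0:ℝ) < (Fintype.card Y : ℝ) := by
    exact_mod_cast Fintype.card_pos
  rw [Real.log_mul hcardpos.ne' (Real.exp_ne_zero _), Real.log_exp]
  have hfinal := le_csSup hbdd hmem
  have hkey' := hkey
  linarith
end

section
/- For any fixed code and any s ∈ [0,1], the undetected-error probability of the threshold decoder is bounded as (1/M)·Σ_{m=1}^{M} Σ_{m'≠m} Σ_{y ∈ Y^n with P(y|x_{m'}) ≥ e^{nT}·Σ_{m''≠m'} P(y|x_{m''})} P(y|x_m) ≤ e^{−n(1−s)T}·(1/M)·Σ_{m=1}^{M} Σ_{y∈Y^n} P(y|x_m)^{1−s}·(Σ_{m'≠m} P(y|x_{m'}))^s. -/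
open scoped BigOperators

lemma key_pointwise (s T' A p : ℝ) (hs0 : 0 ≤ s) (hs1 : s ≤ 1)
    (hA : 0 ≤ A) (hp : 0 ≤ p) :
    (if Real.exp T' * A ≤ p then A else 0) ≤
      Real.exp (-((1 - s) * T')) * (p ^ (1 - s) * A ^ s) := by
  split_ifs with h
  · rcases eq_or_lt_of_le hA with hA0 | hA0
    · rw [← hA0]; positivity
    have h1 : (Real.exp T' * A) ^ (1 - s) ≤ p ^ (1 - s) :=
      Real.rpow_le_rpow (by positivity) h (by linarith)
    have h2 : (Real.exp T' * A) ^ (1 - s)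
        = Real.exp ((1 - s) * T') * A ^ (1 - s) := by
      rw [Real.mul_rpow (Real.exp_pos _).le hA, ← Real.exp_mul, mul_comm T' (1 - s)]
    have h3 : A ^ (1 - s) ≤ Real.exp (-((1 - s) * T')) * p ^ (1 - s) := by
      rw [h2] at h1
      have := mul_le_mul_of_nonneg_left h1 (Real.exp_pos (-((1 - s) * T'))).le
      rwa [← mul_assoc, ← Real.exp_add, neg_add_cancel, Real.exp_zero, one_mul] at this
    calc A = A ^ (1 - s) * A ^ s := by
            rw [← Real.rpow_add hA0]; simp
      _ ≤ (Real.exp (-((1 - s) * T')) * p ^ (1 - s)) * A ^ s :=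
            mul_le_mul_of_nonneg_right h3 (Real.rpow_nonneg hA s)
      _ = _ := by ring
  · positivity

/-- For any fixed code and any `s ∈ [0,1]`, the undetected-error
probability of the threshold decoder is bounded by
`e^{−n(1−s)T}·(1/M)·Σ_m Σ_y P(y|x_m)^{1−s}·(Σ_{m'≠m} P(y|x_{m'}))^s`. -/
theorem fixed_code_undetected_error_bound
    {X Y : Type} [Fintype X] [Fintype Y] [Nonempty X] [Nonempty Y]
    (W : X → Y → ℝ) (hW : ∀ x y, 0 ≤ W x y) (hWsum : ∀ x, ∑ y, W x y = 1)
    (n M : ℕ) (hn : 1 ≤ n) (hM : 2 ≤ M)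
    (x : Fin M → Fin n → X)
    (T : ℝ) (hT : 0 ≤ T) (s : ℝ) (hs0 : 0 ≤ s) (hs1 : s ≤ 1) :
    (M : ℝ)⁻¹ *
      ∑ m, ∑ m' ∈ Finset.univ.erase m, ∑ y : Fin n → Y,
        (if Real.exp (n * T) *
              (∑ m'' ∈ Finset.univ.erase m', ∏ i, W (x m'' i) (y i)) ≤
            ∏ i, W (x m' i) (y i)
         then ∏ i, W (x m i) (y i) else 0) ≤
    Real.exp (-(n * (1 - s) * T)) * ((M : ℝ)⁻¹ *
      ∑ m, ∑ y : Fin n → Y,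
        (∏ i, W (x m i) (y i)) ^ (1 - s) *
          (∑ m' ∈ Finset.univ.erase m, ∏ i, W (x m' i) (y i)) ^ s) := by
  set P : Fin M → (Fin n → Y) → ℝ := fun m y => ∏ i, W (x m i) (y i) with hPdef
  have hPnn : ∀ m y, 0 ≤ P m y := fun m y => Finset.prod_nonneg fun i _ => hW _ _
  set A : Fin M → (Fin n → Y) → ℝ :=
    fun m' y => ∑ m'' ∈ Finset.univ.erase m', P m'' y with hAdef
  have hAnn : ∀ m' y, 0 ≤ A m' y :=
    fun m' y => Finset.sum_nonneg fun _ _ => hPnn _ _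
  have hswap :
      (∑ m, ∑ m' ∈ Finset.univ.erase m, ∑ y : Fin n → Y,
        (if Real.exp (n * T) * A m' y ≤ P m' y then P m y else 0))
      = ∑ m', ∑ y : Fin n → Y,
          (if Real.exp (n * T) * A m' y ≤ P m' y then A m' y else 0) := by
    rw [Finset.sum_comm' (t' := Finset.univ)
      (s' := fun m' => Finset.univ.erase m')
      (by intro a b; simp [Finset.mem_erase, eq_comm, ne_comm, and_comm])]
    refine Finset.sum_congr rfl fun m' _ => ?_
    rw [Finset.sum_comm]
    refine Finset.sum_congr rfl fun y _ => ?_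
    split_ifs with h <;> simp [hAdef]
  have hkey : ∀ m' y,
      (if Real.exp (n * T) * A m' y ≤ P m' y then A m' y else 0) ≤
        Real.exp (-(n * (1 - s) * T)) * ((P m' y) ^ (1 - s) * (A m' y) ^ s) := by
    intro m' y
    have := key_pointwise s (n * T) (A m' y) (P m' y) hs0 hs1 (hAnn m' y) (hPnn m' y)
    have he : -((1 - s) * (↑n * T)) = -(↑n * (1 - s) * T) := by ring
    rwa [he] at this
  have hMpos : (0:ℝ) < (M:ℝ) := by positivity
  calc (M : ℝ)⁻¹ *
      ∑ m, ∑ m' ∈ Finset.univ.erase m, ∑ y : Fin n → Y,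
        (if Real.exp (n * T) * A m' y ≤ P m' y then P m y else 0)
      = (M : ℝ)⁻¹ * ∑ m', ∑ y : Fin n → Y,
          (if Real.exp (n * T) * A m' y ≤ P m' y then A m' y else 0) := by rw [hswap]
    _ ≤ (M : ℝ)⁻¹ * ∑ m', ∑ y : Fin n → Y,
          Real.exp (-(n * (1 - s) * T)) * ((P m' y) ^ (1 - s) * (A m' y) ^ s) := by
        apply mul_le_mul_of_nonneg_left _ (by positivity)
        exact Finset.sum_le_sum fun m' _ => Finset.sum_le_sum fun y _ => hkey m' y
    _ = Real.exp (-(n * (1 - s) * T)) * ((M : ℝ)⁻¹ *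
          ∑ m', ∑ y : Fin n → Y, (P m' y) ^ (1 - s) * (A m' y) ^ s) := by
        simp_rw [← Finset.mul_sum]; ring
end

section
/- Moments of a sparse binomial enumerator: fix s ∈ (0,1] and reals 0 < R < c. Let (M_n) be positive integers with (1/n)·ln M_n → R, let b_n ∈ (0,1) with (1/n)·ln b_n → −c, and let N_n be binomial with parameters (M_n, b_n). Then lim_{n→∞} (1/n)·ln E[N_n^s] = R − c. -/
open scoped BigOperators
open Filter Real

/-- The `s`-th moment `E[N^s]` of a binomial random variable `N` with parameters
`(M, b)`; powers `(k:ℝ)^s` are real powers with `0^s = 0` for `s > 0`. -/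
noncomputable def binomialMoment (M : ℕ) (b s : ℝ) : ℝ :=
  ∑ k ∈ Finset.range (M + 1),
    (M.choose k : ℝ) * b ^ k * (1 - b) ^ (M - k) * (k : ℝ) ^ s

lemma binom_sum_one (m : ℕ) (b : ℝ) :
    ∑ k ∈ Finset.range (m + 1), (m.choose k : ℝ) * b ^ k * (1 - b) ^ (m - k) = 1 := by
  have h := add_pow b (1 - b) m
  have hb : b + (1 - b) = 1 := by ring
  rw [hb, one_pow] at h
  calc ∑ k ∈ Finset.range (m + 1), (m.choose k : ℝ) * b ^ k * (1 - b) ^ (m - k)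
      = ∑ k ∈ Finset.range (m + 1), b ^ k * (1 - b) ^ (m - k) * (m.choose k : ℝ) :=
        Finset.sum_congr rfl fun k _ => by ring
    _ = 1 := h.symm

lemma binom_sum_mean (M : ℕ) (b : ℝ) :
    ∑ k ∈ Finset.range (M + 1),
      (M.choose k : ℝ) * b ^ k * (1 - b) ^ (M - k) * (k : ℝ) = (M : ℝ) * b := by
  cases M with
  | zero => simp
  | succ m =>
    rw [Finset.sum_range_succ']
    simp only [Nat.cast_zero, mul_zero, add_zero]
    have key : ∀ k : ℕ, ((m + 1).choose (k + 1) : ℝ) * ((k : ℝ) + 1)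
        = ((m : ℝ) + 1) * (m.choose k : ℝ) := by
      intro k
      have h := Nat.add_one_mul_choose_eq m k
      have : ((m + 1) * m.choose k : ℕ) = ((m + 1).choose (k + 1) * (k + 1) : ℕ) := h
      exact_mod_cast this.symm
    have hstep : ∑ k ∈ Finset.range (m + 1),
        ((m + 1).choose (k + 1) : ℝ) * b ^ (k + 1) * (1 - b) ^ (m - k) * ((k : ℝ) + 1)
        = ((m : ℝ) + 1) * b *
          ∑ k ∈ Finset.range (m + 1), (m.choose k : ℝ) * b ^ k * (1 - b) ^ (m - k) := by
      rw [Finset.mul_sum]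
      refine Finset.sum_congr rfl fun k _ => ?_
      have hc := key k
      calc ((m + 1).choose (k + 1) : ℝ) * b ^ (k + 1) * (1 - b) ^ (m - k) * ((k : ℝ) + 1)
          = (((m + 1).choose (k + 1) : ℝ) * ((k : ℝ) + 1)) * (b ^ (k + 1) * (1 - b) ^ (m - k)) := by
            ring
        _ = (((m : ℝ) + 1) * (m.choose k : ℝ)) * (b ^ (k + 1) * (1 - b) ^ (m - k)) := by rw [hc]
        _ = ((m : ℝ) + 1) * b * ((m.choose k : ℝ) * b ^ k * (1 - b) ^ (m - k)) := by ring
    push_cast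
    rw [hstep, binom_sum_one]
    ring

lemma moment_le_mean (M : ℕ) (b s : ℝ) (hb0 : 0 ≤ b) (hb1 : b ≤ 1) (hs0 : 0 < s)
    (hs1 : s ≤ 1) : binomialMoment M b s ≤ (M : ℝ) * b := by
  rw [← binom_sum_mean]
  unfold binomialMoment
  refine Finset.sum_le_sum fun k _ => ?_
  have h1b : (0 : ℝ) ≤ 1 - b := by linarith
  have hpre : 0 ≤ (M.choose k : ℝ) * b ^ k * (1 - b) ^ (M - k) :=
    mul_nonneg (mul_nonneg (Nat.cast_nonneg _) (pow_nonneg hb0 _)) (pow_nonneg h1b _)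
  refine mul_le_mul_of_nonneg_left ?_ hpre
  rcases Nat.eq_zero_or_pos k with hk | hk
  · subst hk
    simp [Real.zero_rpow hs0.ne']
  · have h1 : (1 : ℝ) ≤ (k : ℝ) := by exact_mod_cast hk
    calc (k : ℝ) ^ s ≤ (k : ℝ) ^ (1 : ℝ) := Real.rpow_le_rpow_of_exponent_le h1 hs1
      _ = (k : ℝ) := Real.rpow_one _

lemma moment_ge (M : ℕ) (hM : 0 < M) (b s : ℝ) (hb0 : 0 ≤ b) (hb1 : b ≤ 1) :
    (M : ℝ) * b * (1 - b) ^ (M - 1) ≤ binomialMoment M b s := by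
  unfold binomialMoment
  have h1 : (1 : ℕ) ∈ Finset.range (M + 1) := by simp; omega
  have := Finset.single_le_sum
    (f := fun k => (M.choose k : ℝ) * b ^ k * (1 - b) ^ (M - k) * (k : ℝ) ^ s)
    (fun k _ => by
      have h1b : (0 : ℝ) ≤ 1 - b := by linarith
      exact mul_nonneg (mul_nonneg (mul_nonneg (Nat.cast_nonneg _) (pow_nonneg hb0 _))
        (pow_nonneg h1b _)) (Real.rpow_nonneg (Nat.cast_nonneg _) _)) h1
  simpa [Nat.choose_one_right] using this

/-- Moments of a sparse binomial enumerator: fix `s ∈ (0,1]` and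
`0 < R < c`. If `(1/n)·ln M_n → R`, `b_n ∈ (0,1)` with `(1/n)·ln b_n → −c`, and `N_n`
is binomial with parameters `(M_n, b_n)`, then `(1/n)·ln E[N_n^s] → R − c`. -/
theorem sparse_binomial_moment_exponent
    (s R c : ℝ) (hs0 : 0 < s) (hs1 : s ≤ 1) (hR : 0 < R) (hRc : R < c)
    (M : ℕ → ℕ) (hM : ∀ n, 0 < M n)
    (hMlim : Filter.Tendsto (fun n : ℕ => (n : ℝ)⁻¹ * Real.log (M n))
      Filter.atTop (nhds R))
    (b : ℕ → ℝ) (hb : ∀ n, 0 < b n ∧ b n < 1)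
    (hblim : Filter.Tendsto (fun n : ℕ => (n : ℝ)⁻¹ * Real.log (b n))
      Filter.atTop (nhds (-c))) :
    Filter.Tendsto (fun n : ℕ => (n : ℝ)⁻¹ * Real.log (binomialMoment (M n) (b n) s))
      Filter.atTop (nhds (R - c)) := by
  -- U n = n⁻¹ (log M + log b) → R - c
  have hU : Tendsto (fun n : ℕ => (n : ℝ)⁻¹ * (Real.log (M n) + Real.log (b n)))
      atTop (nhds (R - c)) := by
    have := hMlim.add hblim
    simp only [← mul_add] at this
    simpa [sub_eq_add_neg] using this
  -- M n * b n → 0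
  have hMbpos : ∀ n, 0 < (M n : ℝ) * b n := fun n =>
    mul_pos (by exact_mod_cast (hM n)) (hb n).1
  have hMb : Tendsto (fun n : ℕ => (M n : ℝ) * b n) atTop (nhds 0) := by
    have hlogMb : Tendsto (fun n : ℕ => Real.log ((M n : ℝ) * b n)) atTop atBot := by
      have h1 : Tendsto (fun n : ℕ => (n : ℝ) * ((n : ℝ)⁻¹ * (Real.log (M n) + Real.log (b n))))
          atTop atBot :=
        Tendsto.atTop_mul_neg (by linarith) tendsto_natCast_atTop_atTop hU
      refine h1.congr' ?_
      filter_upwards [eventually_ge_atTop 1] with n hn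
      have hn0 : (n : ℝ) ≠ 0 := by positivity
      rw [← mul_assoc, mul_inv_cancel₀ hn0, one_mul,
        Real.log_mul (Nat.cast_ne_zero.mpr (hM n).ne') (hb n).1.ne']
    have := Real.tendsto_exp_atBot.comp hlogMb
    refine this.congr fun n => ?_
    exact Real.exp_log (hMbpos n)
  -- b n → 0, so eventually b n ≤ 1/2
  have hb0 : Tendsto b atTop (nhds 0) := by
    refine squeeze_zero (fun n => (hb n).1.le) (fun n => ?_) hMb
    have h1 : (1 : ℝ) ≤ (M n : ℝ) := by exact_mod_cast hM n
    nlinarith [(hb n).1]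
  have hbhalf : ∀ᶠ n in atTop, b n < 1 / 2 := hb0.eventually_lt_const (by norm_num)
  -- third term T n → 0
  have hT : Tendsto (fun n : ℕ => (n : ℝ)⁻¹ * (((M n : ℝ) - 1) * Real.log (1 - b n)))
      atTop (nhds 0) := by
    have hlow : Tendsto (fun n : ℕ => -2 * ((M n : ℝ) * b n)) atTop (nhds 0) := by
      have := hMb.const_mul (-2 : ℝ)
      simpa using this
    refine tendsto_of_tendsto_of_tendsto_of_le_of_le' hlow tendsto_const_nhds ?_ ?_
    · filter_upwards [hbhalf, eventually_ge_atTop 1] with n hbn hn1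
      have hb1 := (hb n).2
      have hbpos := (hb n).1
      have h1b : (0 : ℝ) < 1 - b n := by linarith
      have hninv : (0 : ℝ) < (n : ℝ)⁻¹ := by positivity
      have hninv1 : (n : ℝ)⁻¹ ≤ 1 := by
        rw [inv_le_one_iff₀]; right; exact_mod_cast hn1
      have hM1 : (1 : ℝ) ≤ (M n : ℝ) := by exact_mod_cast hM n
      -- log(1-b) ≥ -b/(1-b) ≥ -2b
      have hlog : -(2 * b n) ≤ Real.log (1 - b n) := by
        have h := Real.log_le_sub_one_of_pos (x := (1 - b n)⁻¹) (by positivity)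
        rw [Real.log_inv] at h
        have h2 : 1 / (1 - b n) ≤ 1 + 2 * b n := by
          rw [div_le_iff₀ h1b]; nlinarith
        have heqi : (1 - b n)⁻¹ = 1 / (1 - b n) := (one_div _).symm
        linarith
      have hlogneg : Real.log (1 - b n) ≤ 0 := Real.log_nonpos (by linarith) (by linarith)
      have step1 : -((M n : ℝ) * (2 * b n)) ≤ ((M n : ℝ) - 1) * Real.log (1 - b n) := by
        nlinarith
      have step2 : ((M n : ℝ) - 1) * Real.log (1 - b n) ≤ 0 := by nlinarith
      calc -2 * ((M n : ℝ) * b n) ≤ ((M n : ℝ) - 1) * Real.log (1 - b n) := by nlinarith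
        _ ≤ (n : ℝ)⁻¹ * (((M n : ℝ) - 1) * Real.log (1 - b n)) := by nlinarith
    · filter_upwards [eventually_ge_atTop 1] with n hn1
      have hbpos := (hb n).1
      have hb1 := (hb n).2
      have hlogneg : Real.log (1 - b n) ≤ 0 := Real.log_nonpos (by linarith) (by linarith)
      have hM1 : (1 : ℝ) ≤ (M n : ℝ) := by exact_mod_cast hM n
      have hninv : (0 : ℝ) ≤ (n : ℝ)⁻¹ := by positivity
      have : ((M n : ℝ) - 1) * Real.log (1 - b n) ≤ 0 := by nlinarith
      nlinarith
  -- L n → R - c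
  have hL : Tendsto (fun n : ℕ =>
      (n : ℝ)⁻¹ * (Real.log (M n) + Real.log (b n) + ((M n : ℝ) - 1) * Real.log (1 - b n)))
      atTop (nhds (R - c)) := by
    have := hU.add hT
    rw [add_zero] at this
    refine this.congr fun n => ?_
    ring
  -- final squeeze
  refine tendsto_of_tendsto_of_tendsto_of_le_of_le' hL hU ?_ ?_
  · filter_upwards [eventually_ge_atTop 1] with n hn1
    have hbpos := (hb n).1
    have hb1 := (hb n).2
    have h1b : (0 : ℝ) < 1 - b n := by linarith
    have hMpos : (0 : ℝ) < (M n : ℝ) := by exact_mod_cast hM n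
    have hlbpos : 0 < (M n : ℝ) * b n * (1 - b n) ^ (M n - 1) := by positivity
    have hle := moment_ge (M n) (hM n) (b n) s hbpos.le hb1.le
    have hlog : Real.log ((M n : ℝ) * b n * (1 - b n) ^ (M n - 1))
        ≤ Real.log (binomialMoment (M n) (b n) s) :=
      Real.log_le_log hlbpos hle
    have heq : Real.log ((M n : ℝ) * b n * (1 - b n) ^ (M n - 1))
        = Real.log (M n) + Real.log (b n) + ((M n : ℝ) - 1) * Real.log (1 - b n) := by
      rw [Real.log_mul (by positivity) (by positivity),
        Real.log_mul hMpos.ne' hbpos.ne', Real.log_pow]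
      have h1M : 1 ≤ M n := hM n
      have : ((M n - 1 : ℕ) : ℝ) = (M n : ℝ) - 1 := by
        push_cast [Nat.cast_sub h1M]; ring
      rw [this]
    have hninv : (0 : ℝ) ≤ (n : ℝ)⁻¹ := by positivity
    rw [← heq]
    exact mul_le_mul_of_nonneg_left hlog hninv
  · filter_upwards [eventually_ge_atTop 1] with n hn1
    have hbpos := (hb n).1
    have hb1 := (hb n).2
    have h1b : (0 : ℝ) < 1 - b n := by linarith
    have hlbpos : 0 < (M n : ℝ) * b n * (1 - b n) ^ (M n - 1) := by
      have hMpos : (0 : ℝ) < (M n : ℝ) := by exact_mod_cast hM n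
      positivity
    have hEpos : 0 < binomialMoment (M n) (b n) s :=
      lt_of_lt_of_le hlbpos (moment_ge (M n) (hM n) (b n) s hbpos.le hb1.le)
    have hle := moment_le_mean (M n) (b n) s hbpos.le hb1.le hs0 hs1
    have hlog : Real.log (binomialMoment (M n) (b n) s) ≤ Real.log ((M n : ℝ) * b n) :=
      Real.log_le_log hEpos hle
    have hMpos : (0 : ℝ) < (M n : ℝ) := by exact_mod_cast hM n
    rw [Real.log_mul hMpos.ne' hbpos.ne'] at hlog
    have hninv : (0 : ℝ) ≤ (n : ℝ)⁻¹ := by positivity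
    exact mul_le_mul_of_nonneg_left hlog hninv
end

section
/- Moments of a dense binomial enumerator: fix s ∈ (0,1] and reals R > c > 0. Let (M_n) be positive integers with (1/n)·ln M_n → R, let b_n ∈ (0,1) with (1/n)·ln b_n → −c, and let N_n be binomial with parameters (M_n, b_n). Then lim_{n→∞} (1/n)·ln E[N_n^s] = s·(R − c). -/
open scoped BigOperators

open Filter Real Finset

lemma sum_binom_mul (M : ℕ) (b t : ℝ) :
    ∑ k ∈ Finset.range (M+1),
      (M.choose k : ℝ) * b ^ k * (1-b) ^ (M-k) * t ^ k = (t*b + (1-b)) ^ M := by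
  rw [add_pow]
  exact Finset.sum_congr rfl fun k _ => by rw [mul_pow]; ring

lemma moment_sandwich (M : ℕ) (b s : ℝ) (hb0 : 0 < b) (hb1 : b < 1)
    (hs0 : 0 < s) (hs1 : s ≤ 1) (h8 : 8 ≤ (M:ℝ) * b)
    (hM2 : Real.log M ≤ (2 * Real.log 2 - 1) * ((M:ℝ) * b)) :
    (1/2) * ((M:ℝ)*b/8) ^ s ≤ binomialMoment M b s ∧
      binomialMoment M b s ≤ 2 * (4*((M:ℝ)*b)) ^ s := by
  set x : ℝ := (M:ℝ) * b with hx
  have hx0 : 0 < x := lt_of_lt_of_le (by norm_num) h8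
  have hM1 : (1:ℝ) ≤ M := by
    have hm0 : (0:ℝ) ≤ (M:ℝ) := Nat.cast_nonneg M
    nlinarith
  set p : ℕ → ℝ := fun k => (M.choose k : ℝ) * b ^ k * (1-b) ^ (M-k) with hp
  have hpnn : ∀ k, 0 ≤ p k := fun k => by
    have h1 : (0:ℝ) ≤ 1 - b := by linarith
    positivity
  have hmgf : ∀ t : ℝ, ∑ k ∈ range (M+1), p k * t ^ k = (t*b + (1-b)) ^ M := by
    intro t
    rw [← sum_binom_mul M b t]
  have hsum1 : ∑ k ∈ range (M+1), p k = 1 := by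
    have := hmgf 1
    simpa using this
  have hl2a : (0.6931471803:ℝ) < Real.log 2 := Real.log_two_gt_d9
  have hl2b : Real.log 2 < 0.6931471808 := Real.log_two_lt_d9
  -- lower tail
  set T : ℕ := ⌊x/4⌋₊ with hT
  have hTx : (T:ℝ) ≤ x/4 := Nat.floor_le (by positivity)
  have hTlb : x/8 ≤ (T:ℝ) := by
    have := Nat.sub_one_lt_floor (x/4)
    rw [← hT] at this
    linarith
  have hlowtail : ∑ k ∈ (range (M+1)).filter (fun k => k < T), p k ≤ 1/2 := by
    have step1 : ∑ k ∈ (range (M+1)).filter (fun k => k < T), p k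
        ≤ (∑ k ∈ range (M+1), p k * (1/2) ^ k) * 2 ^ T := by
      rw [Finset.sum_mul]
      refine le_trans (Finset.sum_le_sum (fun k hk => ?_))
        (Finset.sum_le_sum_of_subset_of_nonneg (Finset.filter_subset _ _) (fun k _ _ => ?_))
      · simp only [Finset.mem_filter] at hk
        have hk' : k ≤ T := hk.2.le
        have hpow : (2:ℝ) ^ k ≤ 2 ^ T := pow_le_pow_right₀ (by norm_num) hk'
        have h2 : (1:ℝ) ≤ (1/2:ℝ) ^ k * 2 ^ T := by
          rw [div_pow, one_pow, div_mul_eq_mul_div, one_mul,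
            le_div_iff₀ (by positivity), one_mul]
          exact hpow
        calc p k = p k * 1 := by ring
        _ ≤ p k * ((1/2) ^ k * 2 ^ T) := by
            exact mul_le_mul_of_nonneg_left h2 (hpnn k)
        _ = p k * (1/2) ^ k * 2 ^ T := by ring
      · have := hpnn k
        positivity
    rw [hmgf (1/2)] at step1
    have heq : (1/2*b + (1-b)) = 1 - b/2 := by ring
    rw [heq] at step1
    have hb2 : (1 - b/2) ^ M ≤ Real.exp (-(x/2)) := by
      have h1 : 1 - b/2 ≤ Real.exp (-(b/2)) := by
        have := Real.add_one_le_exp (-(b/2))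
        linarith
      have h2 : (1 - b/2) ^ M ≤ Real.exp (-(b/2)) ^ M :=
        pow_le_pow_left₀ (by linarith) h1 M
      calc (1 - b/2) ^ M ≤ Real.exp (-(b/2)) ^ M := h2
      _ = Real.exp ((M:ℝ) * -(b/2)) := (Real.exp_nat_mul _ M).symm
      _ = Real.exp (-(x/2)) := by rw [hx]; ring_nf
    have h2T : (2:ℝ) ^ T = Real.exp ((T:ℝ) * Real.log 2) := by
      rw [Real.exp_nat_mul, Real.exp_log (by norm_num)]
    have : (1 - b/2) ^ M * 2 ^ T ≤ Real.exp (-(x/2) + (T:ℝ) * Real.log 2) := by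
      rw [Real.exp_add, h2T]
      exact mul_le_mul_of_nonneg_right hb2 (by positivity)
    have hexp : Real.exp (-(x/2) + (T:ℝ) * Real.log 2) ≤ 1/2 := by
      rw [show (1/2:ℝ) = Real.exp (-Real.log 2) by
        rw [Real.exp_neg, Real.exp_log] <;> norm_num]
      apply Real.exp_le_exp.2
      nlinarith
    linarith
  -- upper tail
  set K : ℕ := ⌈2*x⌉₊ with hK
  have hKx : (K:ℝ) ≥ 2*x := Nat.le_ceil _
  have hKub : (K:ℝ) ≤ 4*x := by
    have := Nat.ceil_lt_add_one (show (0:ℝ) ≤ 2*x by positivity)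
    rw [← hK] at this
    linarith
  have huptail : (M:ℝ) * ∑ k ∈ (range (M+1)).filter (fun k => ¬ k ≤ K), p k ≤ 1 := by
    have step1 : ∑ k ∈ (range (M+1)).filter (fun k => ¬ k ≤ K), p k
        ≤ (∑ k ∈ range (M+1), p k * 2 ^ k) * (1/2) ^ K := by
      rw [Finset.sum_mul]
      refine le_trans (Finset.sum_le_sum (fun k hk => ?_))
        (Finset.sum_le_sum_of_subset_of_nonneg (Finset.filter_subset _ _) (fun k _ _ => ?_))
      · simp only [Finset.mem_filter, not_le] at hk
        have hk' : K ≤ k := hk.2.le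
        have h2 : (1:ℝ) ≤ (2:ℝ) ^ k * (1/2) ^ K := by
          rw [div_pow, one_pow, mul_one_div, le_div_iff₀ (by positivity), one_mul]
          exact pow_le_pow_right₀ (by norm_num) hk'
        calc p k = p k * 1 := by ring
        _ ≤ p k * ((2:ℝ) ^ k * (1/2) ^ K) := mul_le_mul_of_nonneg_left h2 (hpnn k)
        _ = p k * 2 ^ k * (1/2) ^ K := by ring
      · have := hpnn k
        positivity
    rw [hmgf 2] at step1
    have heq : (2*b + (1-b)) = 1 + b := by ring
    rw [heq] at step1
    have hb2 : (1 + b) ^ M ≤ Real.exp x := by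
      have h1 : 1 + b ≤ Real.exp b := by
        have := Real.add_one_le_exp b; linarith
      calc (1 + b) ^ M ≤ Real.exp b ^ M := pow_le_pow_left₀ (by linarith) h1 M
      _ = Real.exp ((M:ℝ) * b) := (Real.exp_nat_mul _ M).symm
    have h2K : ((1:ℝ)/2) ^ K = Real.exp (-((K:ℝ) * Real.log 2)) := by
      rw [show ((1:ℝ)/2) = Real.exp (-Real.log 2) by
        rw [Real.exp_neg, Real.exp_log] <;> norm_num]
      rw [← Real.exp_nat_mul]
      ring_nf
    have hMe : (M:ℝ) = Real.exp (Real.log M) := by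
      rw [Real.exp_log (by linarith)]
    have hfinal : (M:ℝ) * ((1+b) ^ M * (1/2) ^ K) ≤ 1 := by
      have hc1 : (1+b) ^ M * (1/2) ^ K ≤ Real.exp (x - (K:ℝ) * Real.log 2) := by
        rw [h2K, show x - (K:ℝ)*Real.log 2 = x + -((K:ℝ)*Real.log 2) by ring,
          Real.exp_add]
        exact mul_le_mul_of_nonneg_right hb2 (by positivity)
      calc (M:ℝ) * ((1+b) ^ M * (1/2) ^ K)
          ≤ Real.exp (Real.log M) * Real.exp (x - (K:ℝ) * Real.log 2) := by
            rw [← hMe]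
            exact mul_le_mul_of_nonneg_left hc1 (by linarith)
      _ = Real.exp (Real.log M + (x - (K:ℝ) * Real.log 2)) := (Real.exp_add _ _).symm
      _ ≤ 1 := by
          rw [show (1:ℝ) = Real.exp 0 by simp]
          apply Real.exp_le_exp.2
          nlinarith
    have hnn : (0:ℝ) ≤ ∑ k ∈ (range (M+1)).filter (fun k => ¬ k ≤ K), p k :=
      Finset.sum_nonneg (fun k _ => hpnn k)
    calc (M:ℝ) * ∑ k ∈ (range (M+1)).filter (fun k => ¬ k ≤ K), p k
        ≤ (M:ℝ) * ((1+b) ^ M * (1/2) ^ K) := by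
          apply mul_le_mul_of_nonneg_left _ (by linarith)
          linarith [step1]
    _ ≤ 1 := hfinal
  -- express moment
  have hmom : binomialMoment M b s = ∑ k ∈ range (M+1), p k * (k:ℝ) ^ s := rfl
  constructor
  · -- lower bound
    have hsplit := Finset.sum_filter_add_sum_filter_not (range (M+1)) (fun k => k < T) p
    have hge : ∑ k ∈ (range (M+1)).filter (fun k => ¬ k < T), p k ≥ 1/2 := by
      rw [hsum1] at hsplit
      linarith
    have step : (1/2) * ((T:ℝ)) ^ s ≤ binomialMoment M b s := by
      rw [hmom]
      calc (1/2) * ((T:ℝ)) ^ s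
          ≤ (∑ k ∈ (range (M+1)).filter (fun k => ¬ k < T), p k) * (T:ℝ) ^ s := by
            apply mul_le_mul_of_nonneg_right hge (by positivity)
      _ = ∑ k ∈ (range (M+1)).filter (fun k => ¬ k < T), p k * (T:ℝ) ^ s := by
            rw [Finset.sum_mul]
      _ ≤ ∑ k ∈ (range (M+1)).filter (fun k => ¬ k < T), p k * (k:ℝ) ^ s := by
            apply Finset.sum_le_sum
            intro k hk
            simp only [Finset.mem_filter, not_lt] at hk
            apply mul_le_mul_of_nonneg_left _ (hpnn k)
            exact Real.rpow_le_rpow (Nat.cast_nonneg T) (by exact_mod_cast hk.2) hs0.le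
      _ ≤ ∑ k ∈ range (M+1), p k * (k:ℝ) ^ s := by
            apply Finset.sum_le_sum_of_subset_of_nonneg (Finset.filter_subset _ _)
            intro k _ _
            have := hpnn k
            positivity
    have : (x/8) ^ s ≤ (T:ℝ) ^ s :=
      Real.rpow_le_rpow (by positivity) hTlb hs0.le
    calc (1/2) * (x/8) ^ s ≤ (1/2) * ((T:ℝ)) ^ s := by linarith
    _ ≤ binomialMoment M b s := step
  · -- upper bound
    rw [hmom]
    have hsplit := Finset.sum_filter_add_sum_filter_not (range (M+1)) (fun k => k ≤ K)
      (fun k => p k * (k:ℝ) ^ s)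
    have hhead : ∑ k ∈ (range (M+1)).filter (fun k => k ≤ K), p k * (k:ℝ) ^ s
        ≤ (4*x) ^ s := by
      calc ∑ k ∈ (range (M+1)).filter (fun k => k ≤ K), p k * (k:ℝ) ^ s
          ≤ ∑ k ∈ (range (M+1)).filter (fun k => k ≤ K), p k * (4*x) ^ s := by
            apply Finset.sum_le_sum
            intro k hk
            simp only [Finset.mem_filter] at hk
            apply mul_le_mul_of_nonneg_left _ (hpnn k)
            have hkK : (k:ℝ) ≤ 4*x := le_trans (by exact_mod_cast hk.2) hKub
            exact Real.rpow_le_rpow (Nat.cast_nonneg k) hkK hs0.le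
      _ = (∑ k ∈ (range (M+1)).filter (fun k => k ≤ K), p k) * (4*x) ^ s := by
            rw [Finset.sum_mul]
      _ ≤ 1 * (4*x) ^ s := by
            apply mul_le_mul_of_nonneg_right _ (by positivity)
            rw [← hsum1]
            apply Finset.sum_le_sum_of_subset_of_nonneg (Finset.filter_subset _ _)
            exact fun k _ _ => hpnn k
      _ = (4*x) ^ s := by ring
    have htail : ∑ k ∈ (range (M+1)).filter (fun k => ¬ k ≤ K), p k * (k:ℝ) ^ s ≤ 1 := by
      calc ∑ k ∈ (range (M+1)).filter (fun k => ¬ k ≤ K), p k * (k:ℝ) ^ s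
          ≤ ∑ k ∈ (range (M+1)).filter (fun k => ¬ k ≤ K), p k * (M:ℝ) := by
            apply Finset.sum_le_sum
            intro k hk
            simp only [Finset.mem_filter, Finset.mem_range] at hk
            apply mul_le_mul_of_nonneg_left _ (hpnn k)
            have hkM : (k:ℝ) ≤ (M:ℝ) := by
              exact_mod_cast Nat.lt_succ_iff.mp hk.1
            calc (k:ℝ) ^ s ≤ (M:ℝ) ^ s :=
                  Real.rpow_le_rpow (Nat.cast_nonneg k) hkM hs0.le
            _ ≤ (M:ℝ) ^ (1:ℝ) := Real.rpow_le_rpow_of_exponent_le hM1 hs1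
            _ = (M:ℝ) := Real.rpow_one _
      _ = (M:ℝ) * ∑ k ∈ (range (M+1)).filter (fun k => ¬ k ≤ K), p k := by
            rw [Finset.mul_sum]
            exact Finset.sum_congr rfl (fun k _ => by ring)
      _ ≤ 1 := huptail
    have h1le : (1:ℝ) ≤ (4*x) ^ s :=
      Real.one_le_rpow (by linarith) hs0.le
    linarith


-- helper: eventual growth bound

lemma growth_ev (d A : ℝ) (hd : 0 < d) :
    ∀ᶠ n : ℕ in atTop, A * n ≤ Real.exp ((n:ℝ) * d) := by
  have h1 : Tendsto (fun n : ℕ => (n:ℝ) * d) atTop atTop :=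
    (tendsto_natCast_atTop_atTop).atTop_mul_const hd
  have h2 : Tendsto (fun x : ℝ => Real.exp x / x ^ 1) atTop atTop :=
    Real.tendsto_exp_div_pow_atTop 1
  have h3 : Tendsto (fun n : ℕ => Real.exp ((n:ℝ)*d) / ((n:ℝ)*d) ^ 1) atTop atTop :=
    h2.comp h1
  have h4 := (h3.eventually_ge_atTop (A/d)).and (eventually_ge_atTop 1)
  filter_upwards [h4] with n hn
  obtain ⟨hge, hn1⟩ := hn
  have hn1' : (1:ℝ) ≤ (n:ℝ) := by exact_mod_cast hn1
  have hnd : 0 < (n:ℝ) * d := by positivity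
  rw [pow_one, div_le_div_iff₀ hd hnd] at hge
  nlinarith [hge, Real.exp_pos ((n:ℝ)*d)]


/-- Moments of a dense binomial enumerator: fix `s ∈ (0,1]` and
`R > c > 0`. If `(1/n)·ln M_n → R`, `b_n ∈ (0,1)` with `(1/n)·ln b_n → −c`, and `N_n`
is binomial with parameters `(M_n, b_n)`, then `(1/n)·ln E[N_n^s] → s·(R − c)`. -/
theorem dense_binomial_moment_exponent
    (s R c : ℝ) (hs0 : 0 < s) (hs1 : s ≤ 1) (hc : 0 < c) (hcR : c < R)
    (M : ℕ → ℕ) (hM : ∀ n, 0 < M n)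
    (hMlim : Filter.Tendsto (fun n : ℕ => (n : ℝ)⁻¹ * Real.log (M n))
      Filter.atTop (nhds R))
    (b : ℕ → ℝ) (hb : ∀ n, 0 < b n ∧ b n < 1)
    (hblim : Filter.Tendsto (fun n : ℕ => (n : ℝ)⁻¹ * Real.log (b n))
      Filter.atTop (nhds (-c))) :
    Filter.Tendsto (fun n : ℕ => (n : ℝ)⁻¹ * Real.log (binomialMoment (M n) (b n) s))
      Filter.atTop (nhds (s * (R - c))) := by
  have hl2a : (0.6931471803:ℝ) < Real.log 2 := Real.log_two_gt_d9
  have hl2pos : (0:ℝ) < 2 * Real.log 2 - 1 := by linarith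
  set d : ℝ := (R - c)/2 with hd
  have hd0 : 0 < d := by simp only [hd]; linarith
  have hMb : ∀ n, (0:ℝ) < (M n : ℝ) * b n := fun n => by
    have := (hb n).1
    have : (0:ℝ) < (M n : ℝ) := by exact_mod_cast hM n
    positivity
  have hMpos : ∀ n, (0:ℝ) < (M n : ℝ) := fun n => by exact_mod_cast hM n
  -- combined log limit
  have hw : Tendsto (fun n : ℕ => (n:ℝ)⁻¹ * Real.log (M n) + (n:ℝ)⁻¹ * Real.log (b n))
      atTop (nhds (R + -c)) := hMlim.add hblim
  -- eventually log(M_n b_n) ≥ d n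
  have hev1 : ∀ᶠ n : ℕ in atTop, d * n ≤ Real.log ((M n : ℝ) * b n) := by
    have h1 : ∀ᶠ n : ℕ in atTop,
        d < (n:ℝ)⁻¹ * Real.log (M n) + (n:ℝ)⁻¹ * Real.log (b n) :=
      hw.eventually (eventually_gt_nhds (by simp only [hd]; linarith))
    filter_upwards [h1, eventually_ge_atTop 1] with n hn hn1
    have hn1' : (1:ℝ) ≤ (n:ℝ) := by exact_mod_cast hn1
    have hnpos : (0:ℝ) < n := by linarith
    rw [Real.log_mul (ne_of_gt (hMpos n)) (ne_of_gt (hb n).1)]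
    have := mul_le_mul_of_nonneg_left hn.le hnpos.le
    rw [mul_add, ← mul_assoc, ← mul_assoc, mul_inv_cancel₀ (ne_of_gt hnpos),
      one_mul, one_mul] at this
    linarith
  -- eventually Mb ≥ exp(dn)
  have hev1' : ∀ᶠ n : ℕ in atTop, Real.exp ((n:ℝ) * d) ≤ (M n : ℝ) * b n := by
    filter_upwards [hev1] with n hn
    calc Real.exp ((n:ℝ)*d) ≤ Real.exp (Real.log ((M n:ℝ) * b n)) := by
          apply Real.exp_le_exp.2; linarith [hn]
    _ = (M n : ℝ) * b n := Real.exp_log (hMb n)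
  -- eventually log M ≤ 2R n
  have hev2 : ∀ᶠ n : ℕ in atTop, Real.log (M n) ≤ 2*R*n := by
    have h1 : ∀ᶠ n : ℕ in atTop, (n:ℝ)⁻¹ * Real.log (M n) < 2*R :=
      hMlim.eventually (eventually_lt_nhds (by linarith))
    filter_upwards [h1, eventually_ge_atTop 1] with n hn hn1
    have hn1' : (1:ℝ) ≤ (n:ℝ) := by exact_mod_cast hn1
    have hnpos : (0:ℝ) < n := by linarith
    have := mul_le_mul_of_nonneg_left hn.le hnpos.le
    rw [← mul_assoc, mul_inv_cancel₀ (ne_of_gt hnpos), one_mul] at this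
    linarith
  -- eventually 8 ≤ exp(dn) and 2Rn ≤ (2 log 2 - 1) exp(dn)
  set A : ℝ := 8 + 2*R/(2*Real.log 2 - 1) with hA
  have hAe := growth_ev d A hd0
  -- combine: sandwich hypotheses hold eventually
  have hsand : ∀ᶠ n : ℕ in atTop,
      (1/2) * ((M n:ℝ)*(b n)/8) ^ s ≤ binomialMoment (M n) (b n) s ∧
        binomialMoment (M n) (b n) s ≤ 2 * (4*((M n:ℝ)*(b n))) ^ s := by
    filter_upwards [hev1', hev2, hAe, eventually_ge_atTop 1] with n h1 h2 h3 hn1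
    have hn1' : (1:ℝ) ≤ (n:ℝ) := by exact_mod_cast hn1
    have hRpos : 0 < R := lt_trans hc hcR
    have hApos : (0:ℝ) ≤ 2*R/(2*Real.log 2 - 1) := by positivity
    have h8A : (8:ℝ) ≤ A := by rw [hA]; linarith
    have h8n : (8:ℝ) ≤ A * n := by
      have := mul_le_mul_of_nonneg_left hn1' (le_trans (by norm_num : (0:ℝ) ≤ 8) h8A)
      linarith
    have h8 : (8:ℝ) ≤ (M n:ℝ) * b n := by linarith
    have hM2 : Real.log (M n) ≤ (2*Real.log 2 - 1) * ((M n:ℝ) * b n) := by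
      have e1 : 2*R*(n:ℝ) ≤ (2*Real.log 2 - 1) * Real.exp ((n:ℝ)*d) := by
        have hq : 2*R/(2*Real.log 2 - 1) * (n:ℝ) ≤ A * n := by
          have h0 : 0 ≤ (8:ℝ) * n := by positivity
          rw [hA]; nlinarith
        have hq2 : (2*Real.log 2 - 1) * (2*R/(2*Real.log 2 - 1) * (n:ℝ)) = 2*R*n := by
          field_simp
        have := mul_le_mul_of_nonneg_left (le_trans hq h3) hl2pos.le
        rw [hq2] at this
        exact this
      have e2 : (2*Real.log 2 - 1) * Real.exp ((n:ℝ)*d)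
          ≤ (2*Real.log 2 - 1) * ((M n:ℝ) * b n) :=
        mul_le_mul_of_nonneg_left h1 hl2pos.le
      linarith [h2]
    exact moment_sandwich (M n) (b n) s (hb n).1 (hb n).2 hs0 hs1 h8 hM2
  -- lower and upper comparison functions
  set lo : ℕ → ℝ := fun n => (n:ℝ)⁻¹ *
    (Real.log (1/2) + s*(Real.log (M n) + Real.log (b n) - Real.log 8)) with hlo
  set hi : ℕ → ℝ := fun n => (n:ℝ)⁻¹ *
    (Real.log 2 + s*(Real.log 4 + (Real.log (M n) + Real.log (b n)))) with hhi
  have hinv0 : Tendsto (fun n : ℕ => (n:ℝ)⁻¹) atTop (nhds 0) :=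
    tendsto_inv_atTop_zero.comp tendsto_natCast_atTop_atTop
  have hlolim : Tendsto lo atTop (nhds (s * (R - c))) := by
    have t1 : Tendsto (fun n : ℕ => (Real.log (1/2) - s * Real.log 8) * (n:ℝ)⁻¹
        + s * ((n:ℝ)⁻¹ * Real.log (M n) + (n:ℝ)⁻¹ * Real.log (b n)))
        atTop (nhds ((Real.log (1/2) - s * Real.log 8) * 0 + s * (R + -c))) :=
      (hinv0.const_mul _).add (hw.const_mul s)
    have : (Real.log (1/2) - s * Real.log 8) * 0 + s * (R + -c) = s * (R - c) := by ring
    rw [this] at t1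
    refine t1.congr (fun n => ?_)
    simp only [hlo]; ring
  have hhilim : Tendsto hi atTop (nhds (s * (R - c))) := by
    have t1 : Tendsto (fun n : ℕ => (Real.log 2 + s * Real.log 4) * (n:ℝ)⁻¹
        + s * ((n:ℝ)⁻¹ * Real.log (M n) + (n:ℝ)⁻¹ * Real.log (b n)))
        atTop (nhds ((Real.log 2 + s * Real.log 4) * 0 + s * (R + -c))) :=
      (hinv0.const_mul _).add (hw.const_mul s)
    have : (Real.log 2 + s * Real.log 4) * 0 + s * (R + -c) = s * (R - c) := by ring
    rw [this] at t1
    refine t1.congr (fun n => ?_)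
    simp only [hhi]; ring
  refine tendsto_of_tendsto_of_tendsto_of_le_of_le' hlolim hhilim ?_ ?_
  · -- lo ≤ f eventually
    filter_upwards [hsand] with n hn
    have hpos : (0:ℝ) < (M n:ℝ)*(b n)/8 := by have := hMb n; linarith
    have hlog : Real.log ((1/2) * ((M n:ℝ)*(b n)/8) ^ s)
        = Real.log (1/2) + s*(Real.log (M n) + Real.log (b n) - Real.log 8) := by
      rw [Real.log_mul (by norm_num) (ne_of_gt (Real.rpow_pos_of_pos hpos s)),
        Real.log_rpow hpos, Real.log_div (ne_of_gt (hMb n)) (by norm_num),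
        Real.log_mul (ne_of_gt (hMpos n)) (ne_of_gt (hb n).1)]
    have hle : Real.log ((1/2) * ((M n:ℝ)*(b n)/8) ^ s)
        ≤ Real.log (binomialMoment (M n) (b n) s) :=
      Real.log_le_log (by positivity) hn.1
    rw [hlog] at hle
    simp only [hlo]
    exact mul_le_mul_of_nonneg_left hle (by positivity)
  · -- f ≤ hi eventually
    filter_upwards [hsand] with n hn
    have hpos : (0:ℝ) < 4*((M n:ℝ)*(b n)) := by have := hMb n; linarith
    have hlog : Real.log (2 * (4*((M n:ℝ)*(b n))) ^ s)
        = Real.log 2 + s*(Real.log 4 + (Real.log (M n) + Real.log (b n))) := by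
      rw [Real.log_mul (by norm_num) (ne_of_gt (Real.rpow_pos_of_pos hpos s)),
        Real.log_rpow hpos, Real.log_mul (by norm_num) (ne_of_gt (hMb n)),
        Real.log_mul (ne_of_gt (hMpos n)) (ne_of_gt (hb n).1)]
    have hEpos : (0:ℝ) < binomialMoment (M n) (b n) s :=
      lt_of_lt_of_le (mul_pos (by norm_num)
        (Real.rpow_pos_of_pos (by have := hMb n; linarith) s)) hn.1
    have hle : Real.log (binomialMoment (M n) (b n) s)
        ≤ Real.log (2 * (4*((M n:ℝ)*(b n))) ^ s) :=
      Real.log_le_log hEpos hn.2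
    rw [hlog] at hle
    simp only [hhi]
    exact mul_le_mul_of_nonneg_left hle (by positivity)
end

section
/- Moments of the distance enumerator for the uniform binary ensemble: fix s ∈ (0,1], R ∈ (0, ln 2), and δ ∈ (0,1). For each n, let y_n ∈ {0,1}^n be arbitrary, let M_n := ⌈e^{nR}⌉ − 1, let X_1,…,X_{M_n} be i.i.d. uniform on {0,1}^n, let d_n ∈ {0,…,n} with d_n/n → δ, and let N_n := #{m : d_H(X_m, y_n) = d_n} be the distance enumerator. If R + h(δ) − ln 2 < 0 then lim_{n→∞} (1/n)·ln E[N_n^s] = R + h(δ) − ln 2, while if R + h(δ) − ln 2 > 0 then lim_{n→∞} (1/n)·ln E[N_n^s] = s·(R + h(δ) − ln 2). -/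
open scoped BigOperators

/-- Binary entropy function in nats, with the convention `0·ln 0 = 0`
(realized by `Real.log 0 = 0`). -/
noncomputable def binEntropy (δ : ℝ) : ℝ := -δ * Real.log δ - (1 - δ) * Real.log (1 - δ)

/-- Hamming distance between two binary `n`-vectors. -/
def hammingDist' {n : ℕ} (u v : Fin n → Bool) : ℕ :=
  (Finset.univ.filter (fun i => u i ≠ v i)).card

/-- Number of incorrect codewords at block length `n` and rate `R`. -/
noncomputable def numIncorrect (R : ℝ) (n : ℕ) : ℕ := ⌈Real.exp (n * R)⌉₊ - 1

section DemAux

lemma dem_sum_pi_single' {ι V : Type*} [Fintype ι] [Fintype V] [DecidableEq ι] (m : ι) (f : V → ℝ) :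
    ∑ C : ι → V, f (C m) = (Fintype.card V : ℝ)^(Fintype.card ι - 1) * ∑ v, f v := by
  rw [← (Equiv.funSplitAt m V).symm.sum_comp (fun C => f (C m))]
  simp only [Fintype.sum_prod_type, Equiv.funSplitAt_symm_apply]
  simp [Finset.sum_comm, Fintype.card_subtype_compl, mul_comm, ← Finset.sum_mul]

lemma dem_sum_pi_pair' {ι V : Type*} [Fintype ι] [Fintype V] [DecidableEq ι] {m m' : ι}
    (hmm : m' ≠ m) (f g : V → ℝ) :
    ∑ C : ι → V, f (C m) * g (C m') =
      (Fintype.card V : ℝ)^(Fintype.card ι - 2) * ((∑ v, f v) * (∑ v, g v)) := by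
  rw [← (Equiv.funSplitAt m V).symm.sum_comp (fun C => f (C m) * g (C m'))]
  simp only [Fintype.sum_prod_type, Equiv.funSplitAt_symm_apply, dif_pos, dif_neg hmm]
  rw [show (∑ b : V, ∑ gg : {j // j ≠ m} → V, f b * g (gg ⟨m', hmm⟩))
      = (∑ b : V, f b) * ∑ gg : {j // j ≠ m} → V, g (gg ⟨m', hmm⟩) by
    rw [Finset.sum_mul]; exact Finset.sum_congr rfl fun b _ => (Finset.mul_sum _ _ _).symm]
  rw [dem_sum_pi_single' (⟨m', hmm⟩ : {j // j ≠ m}) g]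
  simp [Fintype.card_subtype_compl, Nat.sub_sub]
  ring
lemma dem_card_hamming_sphere (n dd : ℕ) (y : Fin n → Bool) :
    (Finset.univ.filter (fun x : Fin n → Bool => hammingDist' x y = dd)).card = n.choose dd := by
  rw [show n.choose dd = ((Finset.univ : Finset (Fin n)).powersetCard dd).card by
    simp [Finset.card_powersetCard]]
  apply Finset.card_bij' (fun x _ => Finset.univ.filter (fun i => x i ≠ y i))
    (fun S _ => fun i => if i ∈ S then !(y i) else y i)
  · intro x hx
    simp only [Finset.mem_filter, Finset.mem_univ, true_and] at hx
    rw [Finset.mem_powersetCard]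
    exact ⟨Finset.subset_univ _, hx⟩
  · intro S hS
    simp only [Finset.mem_powersetCard] at hS
    rw [Finset.mem_filter]
    refine ⟨Finset.mem_univ _, ?_⟩
    unfold hammingDist'
    rw [← hS.2]
    congr 1
    ext i
    simp only [Finset.mem_filter, Finset.mem_univ, true_and]
    by_cases h : i ∈ S <;> simp [h]
  · intro x _
    funext i
    simp only [Finset.mem_filter, Finset.mem_univ, true_and]
    cases hx : x i <;> cases hy : y i <;> simp [hx, hy]
  · intro S _
    ext i
    simp only [Finset.mem_filter, Finset.mem_univ, true_and]
    by_cases h : i ∈ S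
    · simp only [if_pos h]
      cases y i <;> simp [h]
    · simp [if_neg h, h]
variable {s : ℝ}

lemma dem_pow_s_le_self (hs0 : 0 < s) (hs1 : s ≤ 1) (N : ℕ) : (N:ℝ)^s ≤ (N:ℝ) := by
  rcases Nat.eq_zero_or_pos N with h | h
  · simp [h, Real.zero_rpow hs0.ne']
  · have h1 : (1:ℝ) ≤ N := by exact_mod_cast h
    calc (N:ℝ)^s ≤ (N:ℝ)^(1:ℝ) := Real.rpow_le_rpow_of_exponent_le h1 hs1
      _ = N := Real.rpow_one _

lemma dem_two_sub_le_pow_s (hs0 : 0 < s) (hs1 : s ≤ 1) (N : ℕ) :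
    (N:ℝ) * (2 - (N:ℝ)) ≤ (N:ℝ)^s := by
  rcases Nat.lt_or_ge N 2 with h | h
  · interval_cases N
    · simp [Real.zero_rpow hs0.ne']
    · norm_num [Real.one_rpow]
  · have h2 : (2:ℝ) ≤ N := by exact_mod_cast h
    have : (N:ℝ) * (2 - (N:ℝ)) ≤ 0 := mul_nonpos_of_nonneg_of_nonpos (by positivity) (by linarith)
    exact this.trans (Real.rpow_nonneg (Nat.cast_nonneg N) s)

lemma dem_rpow_le_tangent (hs0 : 0 < s) (hs1 : s ≤ 1) {x a : ℝ} (hx : 0 ≤ x) (ha : 0 < a) :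
    x^s ≤ a^s + a^(s-1) * x := by
  rcases le_or_gt x a with h | h
  · have h1 : x^s ≤ a^s := Real.rpow_le_rpow hx h hs0.le
    have h2 : 0 ≤ a^(s-1) * x := mul_nonneg (Real.rpow_nonneg ha.le _) hx
    linarith
  · have hx0 : 0 < x := ha.trans h
    have h1 : x^(s-1) ≤ a^(s-1) := Real.rpow_le_rpow_of_nonpos ha h.le (by linarith)
    calc x^s = x^(s-1) * x := by rw [← Real.rpow_add_one hx0.ne' (s-1)]; ring_nf
      _ ≤ a^(s-1) * x := by apply mul_le_mul_of_nonneg_right h1 hx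
      _ ≤ a^s + a^(s-1) * x := by nlinarith [Real.rpow_nonneg ha.le s]

lemma dem_rpow_ge_tangent (hs0 : 0 < s) (hs1 : s ≤ 1) {x b : ℝ} (hx : 0 ≤ x) (hb : 0 < b) :
    b^(s-1) * x - b^(s-2) * x^2 ≤ x^s := by
  rcases eq_or_lt_of_le hx with h | hx0
  · simp [← h, Real.zero_rpow hs0.ne']
  rcases le_or_gt x b with h | h
  · have h1 : b^(s-1) ≤ x^(s-1) := Real.rpow_le_rpow_of_nonpos hx0 h (by linarith)
    have h2 : x^(s-1) * x = x^s := by rw [← Real.rpow_add_one hx0.ne' (s-1)]; ring_nf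
    nlinarith [mul_le_mul_of_nonneg_right h1 hx, Real.rpow_nonneg hb.le (s-2), sq_nonneg x,
      mul_nonneg (Real.rpow_nonneg hb.le (s-2)) (sq_nonneg x)]
  · have : b^(s-1) * x - b^(s-2) * x^2 = b^(s-2) * x * (b - x) := by
      rw [show s - 1 = (s-2) + 1 by ring, Real.rpow_add_one hb.ne']; ring
    rw [this]
    have : b^(s-2) * x * (b - x) ≤ 0 :=
      mul_nonpos_of_nonneg_of_nonpos (by positivity) (by linarith)
    exact this.trans (Real.rpow_nonneg hx s)
lemma dem_fact_lower (n : ℕ) : (n:ℝ)^n ≤ (n.factorial : ℝ) * Real.exp n := by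
  have h : (n:ℝ)^n / (n.factorial : ℝ) ≤ Real.exp n := by
    calc (n:ℝ)^n / (n.factorial : ℝ) ≤ ∑ i ∈ Finset.range (n+1), (n:ℝ)^i / i.factorial := by
          exact Finset.single_le_sum (f := fun i => (n:ℝ)^i / (i.factorial:ℝ))
            (fun i _ => by positivity) (Finset.self_mem_range_succ n)
      _ ≤ Real.exp n := Real.sum_le_exp_of_nonneg (Nat.cast_nonneg n) (n+1)
  have hf : (0:ℝ) < n.factorial := by exact_mod_cast n.factorial_pos
  calc (n:ℝ)^n = (n:ℝ)^n / (n.factorial:ℝ) * n.factorial := by field_simp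
    _ ≤ Real.exp n * n.factorial := by apply mul_le_mul_of_nonneg_right h hf.le
    _ = n.factorial * Real.exp n := mul_comm _ _

lemma dem_fact_upper : ∀ n : ℕ, 1 ≤ n →
    (n.factorial : ℝ) * Real.exp n ≤ Real.exp 1 * n * (n:ℝ)^n := by
  intro n
  induction n with
  | zero => omega
  | succ k ih =>
    intro _
    rcases Nat.eq_zero_or_pos k with rfl | hk
    · norm_num
    · have hke : (k.factorial : ℝ) * Real.exp k ≤ Real.exp 1 * k * (k:ℝ)^k := ih hk
      have hk1 : (1:ℝ) ≤ k := by exact_mod_cast hk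
      have key : Real.exp 1 * ((k:ℝ)^k * k) ≤ ((k:ℝ)+1)^(k+1) := by
        have h1 : Real.exp (1/((k:ℝ)+1)) ≤ ((k:ℝ)+1)/k := by
          have h2 : 1 - 1/((k:ℝ)+1) ≤ Real.exp (-(1/((k:ℝ)+1))) := by
            have := Real.add_one_le_exp (-(1/((k:ℝ)+1)))
            linarith
          have h3 : (0:ℝ) < 1 - 1/((k:ℝ)+1) := by
            rw [sub_pos, div_lt_one (by linarith)]; linarith
          have h4 : Real.exp (1/((k:ℝ)+1)) ≤ (1 - 1/((k:ℝ)+1))⁻¹ := by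
            rw [le_inv_comm₀ (Real.exp_pos _) h3, ← Real.exp_neg]
            exact h2
          calc Real.exp (1/((k:ℝ)+1)) ≤ (1 - 1/((k:ℝ)+1))⁻¹ := h4
            _ = ((k:ℝ)+1)/k := by
              field_simp
              rw [show (k:ℝ)+1-1 = k by ring, div_self (ne_of_gt (by linarith))]
        have h5 : (Real.exp (1/((k:ℝ)+1)))^(k+1) ≤ (((k:ℝ)+1)/k)^(k+1) :=
          pow_le_pow_left₀ (Real.exp_pos _).le h1 (k+1)
        have h6 : (Real.exp (1/((k:ℝ)+1)))^(k+1) = Real.exp 1 := by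
          rw [← Real.exp_nat_mul]
          congr 1
          push_cast
          field_simp
        rw [h6, div_pow] at h5
        have hkp : (0:ℝ) < (k:ℝ)^(k+1) := by positivity
        rw [le_div_iff₀ hkp] at h5
        calc Real.exp 1 * ((k:ℝ)^k * k) = Real.exp 1 * (k:ℝ)^(k+1) := by ring
          _ ≤ ((k:ℝ)+1)^(k+1) := h5
      have e1 : (0:ℝ) < Real.exp 1 := Real.exp_pos 1
      have hcast : ((k+1).factorial : ℝ) = ((k:ℝ)+1) * k.factorial := by
        push_cast [Nat.factorial_succ]; ring
      have hexp : Real.exp ((k:ℝ)+1) = Real.exp k * Real.exp 1 := by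
        rw [← Real.exp_add]
      calc ((k+1).factorial : ℝ) * Real.exp ((k+1:ℕ) : ℝ)
          = ((k:ℝ)+1) * Real.exp 1 * ((k.factorial:ℝ) * Real.exp k) := by
            push_cast [hcast]
            rw [hexp]; ring
        _ ≤ ((k:ℝ)+1) * Real.exp 1 * (Real.exp 1 * k * (k:ℝ)^k) := by
            apply mul_le_mul_of_nonneg_left hke (by positivity)
        _ = ((k:ℝ)+1) * (Real.exp 1 * ((k:ℝ)^k * k)) * Real.exp 1 := by ring
        _ ≤ ((k:ℝ)+1) * ((k:ℝ)+1)^(k+1) * Real.exp 1 := by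
            apply mul_le_mul_of_nonneg_right _ e1.le
            apply mul_le_mul_of_nonneg_left key (by linarith)
        _ = Real.exp 1 * ((k:ℕ)+1 : ℝ) * ((k:ℝ)+1)^(k+1) := by push_cast; ring
        _ = Real.exp 1 * ((k+1 : ℕ) : ℝ) * (((k+1:ℕ)) : ℝ)^(k+1) := by push_cast; ring
lemma log_dem_fact_lower {k : ℕ} (hk : 1 ≤ k) :
    (k:ℝ) * Real.log k - k ≤ Real.log (k.factorial : ℝ) := by
  have hkp : (0:ℝ) < k := by exact_mod_cast hk
  have h := Real.log_le_log (by positivity) (dem_fact_lower k)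
  rw [Real.log_mul (by exact_mod_cast k.factorial_pos.ne') (Real.exp_ne_zero _),
    Real.log_exp, Real.log_pow] at h
  push_cast at h ⊢
  linarith

lemma log_dem_fact_upper {k : ℕ} (hk : 1 ≤ k) :
    Real.log (k.factorial : ℝ) ≤ 1 + Real.log k + (k:ℝ) * Real.log k - k := by
  have hkp : (0:ℝ) < k := by exact_mod_cast hk
  have h := Real.log_le_log (by positivity : (0:ℝ) < (k.factorial:ℝ) * Real.exp k)
    (dem_fact_upper k hk)
  rw [Real.log_mul (by exact_mod_cast k.factorial_pos.ne') (Real.exp_ne_zero _),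
    Real.log_exp, Real.log_mul (by positivity) (by positivity),
    Real.log_mul (Real.exp_ne_zero 1) (by positivity : ((k:ℝ)) ≠ 0),
    Real.log_exp, Real.log_pow] at h
  push_cast at h ⊢
  linarith

lemma dem_log_choose_bounds {n dd : ℕ} (h1 : 1 ≤ dd) (h2 : dd + 1 ≤ n) :
    (n:ℝ) * binEntropy ((dd:ℝ)/n) - (2 + 2*Real.log n) ≤ Real.log (n.choose dd) ∧
    Real.log (n.choose dd) ≤ (n:ℝ) * binEntropy ((dd:ℝ)/n) + (1 + Real.log n) := by
  have hdn : dd ≤ n := by omega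
  have hb1 : 1 ≤ n - dd := by omega
  have hn1 : 1 ≤ n := by omega
  have hnp : (0:ℝ) < n := by exact_mod_cast hn1
  have hdp : (0:ℝ) < dd := by exact_mod_cast h1
  have hbp : (0:ℝ) < ((n - dd : ℕ):ℝ) := by exact_mod_cast hb1
  have hbcast : ((n - dd : ℕ):ℝ) = (n:ℝ) - dd := by
    rw [Nat.cast_sub hdn]
  -- entropy identity
  have hent : (n:ℝ) * binEntropy ((dd:ℝ)/n) =
      (n:ℝ)*Real.log n - (dd:ℝ)*Real.log dd - ((n-dd:ℕ):ℝ)*Real.log ((n-dd:ℕ):ℝ) := by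
    have hfrac : 1 - (dd:ℝ)/n = ((n-dd:ℕ):ℝ)/n := by
      rw [hbcast]; field_simp
    rw [binEntropy, hfrac, Real.log_div hdp.ne' hnp.ne', Real.log_div hbp.ne' hnp.ne', hbcast]
    field_simp
    ring
  -- log factorization
  have hfact : Real.log (n.choose dd) =
      Real.log (n.factorial) - Real.log (dd.factorial) - Real.log ((n-dd).factorial) := by
    have := Nat.choose_mul_factorial_mul_factorial hdn
    have hcast : (n.factorial : ℝ) = (n.choose dd : ℝ) * dd.factorial * (n-dd).factorial := by
      exact_mod_cast this.symm
    have hch : (0:ℝ) < (n.choose dd : ℝ) := by exact_mod_cast Nat.choose_pos hdn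
    rw [hcast, Real.log_mul (by positivity) (by exact_mod_cast (n-dd).factorial_pos.ne'),
      Real.log_mul hch.ne' (by exact_mod_cast dd.factorial_pos.ne')]
    ring
  have l1 := log_dem_fact_lower hn1
  have l2 := log_dem_fact_upper hn1
  have l3 := log_dem_fact_lower h1
  have l4 := log_dem_fact_upper h1
  have l5 := log_dem_fact_lower hb1
  have l6 := log_dem_fact_upper hb1
  have hloga : Real.log (dd:ℝ) ≤ Real.log n := Real.log_le_log hdp (by exact_mod_cast hdn)
  have hlogb : Real.log ((n-dd:ℕ):ℝ) ≤ Real.log n := by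
    apply Real.log_le_log hbp
    rw [hbcast]; linarith
  constructor
  · rw [hfact, hent, hbcast] at *
    linarith
  · rw [hfact, hent, hbcast] at *
    linarith
noncomputable def demInd (n dd : ℕ) (y : Fin n → Bool) : (Fin n → Bool) → ℝ :=
  fun v => if hammingDist' v y = dd then (1:ℝ) else 0

lemma dem_sum_ind (n dd : ℕ) (y : Fin n → Bool) : ∑ v, demInd n dd y v = n.choose dd := by
  rw [← dem_card_hamming_sphere n dd y]
  simp [demInd, Finset.sum_boole]

lemma dem_count_eq (n dd M : ℕ) (y : Fin n → Bool) (C : Fin M → Fin n → Bool) :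
    ((Finset.univ.filter (fun m : Fin M => hammingDist' (C m) y = dd)).card : ℝ)
      = ∑ m : Fin M, demInd n dd y (C m) := by
  rw [Finset.card_filter]
  push_cast
  simp [demInd]

lemma dem_card_V (n : ℕ) : (Fintype.card (Fin n → Bool) : ℝ) = (2:ℝ)^n := by
  simp [Fintype.card_fun]

lemma dem_sum_count (n dd M : ℕ) (y : Fin n → Bool) :
    ∑ C : Fin M → Fin n → Bool,
      ((Finset.univ.filter (fun m : Fin M => hammingDist' (C m) y = dd)).card : ℝ)
    = M * (n.choose dd) * ((2:ℝ)^n)^(M-1) := by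
  simp_rw [dem_count_eq]
  rw [Finset.sum_comm]
  simp_rw [dem_sum_pi_single', dem_sum_ind, dem_card_V, Fintype.card_fin]
  simp [mul_comm, mul_assoc, mul_left_comm]

lemma dem_dem_sum_count_sq (n dd M : ℕ) (y : Fin n → Bool) :
    ∑ C : Fin M → Fin n → Bool,
      (((Finset.univ.filter (fun m : Fin M => hammingDist' (C m) y = dd)).card : ℝ))^2
    = M * (n.choose dd) * ((2:ℝ)^n)^(M-1)
      + (M:ℝ) * ((M:ℝ)-1) * ((n.choose dd:ℝ))^2 * ((2:ℝ)^n)^(M-2) := by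
  simp_rw [dem_count_eq, sq, Finset.sum_mul_sum]
  have hdiag : ∀ m : Fin M, ∑ C : Fin M → Fin n → Bool,
      demInd n dd y (C m) * demInd n dd y (C m) = (n.choose dd) * ((2:ℝ)^n)^(M-1) := by
    intro m
    have h2 : ∀ C : Fin M → Fin n → Bool,
        demInd n dd y (C m) * demInd n dd y (C m) = demInd n dd y (C m) := by
      intro C; rw [demInd.eq_def]; split <;> norm_num
    simp_rw [h2]
    rw [dem_sum_pi_single' m, dem_sum_ind, dem_card_V, Fintype.card_fin]
    ring
  have hoff : ∀ m m' : Fin M, m' ≠ m → ∑ C : Fin M → Fin n → Bool,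
      demInd n dd y (C m) * demInd n dd y (C m') = ((n.choose dd:ℝ))^2 * ((2:ℝ)^n)^(M-2) := by
    intro m m' h
    rw [dem_sum_pi_pair' h, dem_sum_ind, dem_card_V, Fintype.card_fin, sq]; ring
  calc ∑ C : Fin M → Fin n → Bool, ∑ m : Fin M, ∑ m' : Fin M,
        demInd n dd y (C m) * demInd n dd y (C m')
      = ∑ m : Fin M, ∑ m' : Fin M, ∑ C : Fin M → Fin n → Bool,
        demInd n dd y (C m) * demInd n dd y (C m') := by
        rw [Finset.sum_comm]
        exact Finset.sum_congr rfl fun m _ => Finset.sum_comm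
    _ = ∑ m : Fin M, (((M:ℝ)-1) * (((n.choose dd:ℝ))^2 * ((2:ℝ)^n)^(M-2))
          + ((n.choose dd) * ((2:ℝ)^n)^(M-1))) := by
        refine Finset.sum_congr rfl fun m _ => ?_
        have hM : 1 ≤ M := Nat.pos_of_ne_zero (by rintro rfl; exact m.elim0)
        rw [← Finset.sum_erase_add _ _ (Finset.mem_univ m), hdiag m]
        congr 1
        rw [Finset.sum_congr rfl (fun m' hm' => hoff m m' (Finset.ne_of_mem_erase hm')),
          Finset.sum_const, Finset.card_erase_of_mem (Finset.mem_univ m), Finset.card_univ,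
          Fintype.card_fin, nsmul_eq_mul]
        push_cast [Nat.cast_sub hM]
        ring
    _ = _ := by
        rw [Finset.sum_const, Finset.card_univ, Fintype.card_fin, nsmul_eq_mul]
        ring
lemma dem_moment_bounds {s : ℝ} (hs0 : 0 < s) (hs1 : s ≤ 1) (n dd Mn : ℕ)
    (hMn : 2 ≤ Mn) (hdd : dd ≤ n) (y : Fin n → Bool) {A E : ℝ}
    (hA : A = (Mn:ℝ) * (n.choose dd) / 2^n)
    (hE : E = (∑ C : Fin Mn → Fin n → Bool,
      ((Finset.univ.filter (fun m : Fin Mn => hammingDist' (C m) y = dd)).card : ℝ)^s)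
        / (2:ℝ)^(n*Mn)) :
    A - A^2 ≤ E ∧ E ≤ A ∧ E ≤ 2*A^s ∧ (1 ≤ A → A^s/8 ≤ E) := by
  have h2n : (0:ℝ) < (2:ℝ)^n := by positivity
  have hP : (0:ℝ) < (2:ℝ)^(n*Mn) := by positivity
  have hK : (0:ℝ) < (n.choose dd : ℝ) := by exact_mod_cast Nat.choose_pos hdd
  have hApos : (0:ℝ) < A := by
    have : (0:ℝ) < (Mn:ℝ) := by exact_mod_cast (by omega : 0 < Mn)
    rw [hA]; positivity
  have hPow : (2:ℝ)^(n*Mn) = ((2:ℝ)^n)^Mn := by rw [pow_mul]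
  have e1 : ((2:ℝ)^n)^Mn = ((2:ℝ)^n)^(Mn-1) * (2:ℝ)^n := by
    rw [← pow_succ]; congr 1; omega
  have e2 : ((2:ℝ)^n)^Mn = ((2:ℝ)^n)^(Mn-2) * ((2:ℝ)^n)^2 := by
    rw [← pow_add]; congr 1; omega
  set Nc : (Fin Mn → Fin n → Bool) → ℕ := fun C =>
    (Finset.univ.filter (fun m : Fin Mn => hammingDist' (C m) y = dd)).card with hNc
  have hMean : (∑ C : Fin Mn → Fin n → Bool, (Nc C : ℝ)) / (2:ℝ)^(n*Mn) = A := by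
    rw [hNc, dem_sum_count, hPow, e1, hA]
    field_simp
  have hSq : (∑ C : Fin Mn → Fin n → Bool, (Nc C : ℝ)^2) / (2:ℝ)^(n*Mn) ≤ A + A^2 := by
    rw [hNc, dem_dem_sum_count_sq, hPow]
    rw [div_le_iff₀ (by positivity)]
    have h1 : (Mn:ℝ) * ((Mn:ℝ)-1) ≤ (Mn:ℝ)^2 := by nlinarith [Nat.cast_nonneg (α := ℝ) Mn]
    have hA2 : (Mn:ℝ) * ((Mn:ℝ)-1) * ((n.choose dd:ℝ))^2 * ((2:ℝ)^n)^(Mn-2)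
        ≤ A^2 * ((2:ℝ)^n)^Mn := by
      have hq : A^2 * ((2:ℝ)^n)^Mn = (Mn:ℝ)^2 * ((n.choose dd:ℝ))^2 * ((2:ℝ)^n)^(Mn-2) := by
        rw [e2, hA]; field_simp
      rw [hq]
      have h2 : (0:ℝ) ≤ ((n.choose dd:ℝ))^2 * ((2:ℝ)^n)^(Mn-2) := by positivity
      calc (Mn:ℝ) * ((Mn:ℝ)-1) * ((n.choose dd:ℝ))^2 * ((2:ℝ)^n)^(Mn-2)
          = ((Mn:ℝ)*((Mn:ℝ)-1)) * (((n.choose dd:ℝ))^2 * ((2:ℝ)^n)^(Mn-2)) := by ring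
        _ ≤ (Mn:ℝ)^2 * (((n.choose dd:ℝ))^2 * ((2:ℝ)^n)^(Mn-2)) :=
            mul_le_mul_of_nonneg_right h1 h2
        _ = (Mn:ℝ)^2 * ((n.choose dd:ℝ))^2 * ((2:ℝ)^n)^(Mn-2) := by ring
    have hA1 : (Mn:ℝ) * (n.choose dd) * ((2:ℝ)^n)^(Mn-1) = A * ((2:ℝ)^n)^Mn := by
      rw [e1, hA]; field_simp
    nlinarith [hA1, hA2]
  have hmean_eq : ∑ C : Fin Mn → Fin n → Bool, (Nc C : ℝ) = A * (2:ℝ)^(n*Mn) := by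
    rw [← hMean]; field_simp
  have hdivle : ∀ {x z : ℝ}, x ≤ z → x / (2:ℝ)^(n*Mn) ≤ z / (2:ℝ)^(n*Mn) := by
    intro x z h; gcongr
  have hAs : A^(s-1) * A = A^s := by
    rw [← Real.rpow_add_one hApos.ne' (s-1)]
    congr 1; ring
  constructor
  · -- A - A² ≤ E
    have hpt : ∀ C, 2*(Nc C : ℝ) - (Nc C:ℝ)^2 ≤ (Nc C:ℝ)^s := by
      intro C
      have := dem_two_sub_le_pow_s hs0 hs1 (Nc C)
      nlinarith [this]
    have hsum := Finset.sum_le_sum (fun C (_ : C ∈ Finset.univ) => hpt C)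
    rw [Finset.sum_sub_distrib, ← Finset.mul_sum] at hsum
    have hdiv := hdivle hsum
    rw [sub_div, mul_div_assoc, hMean, ← hE] at hdiv
    linarith
  refine ⟨?_, ?_, ?_⟩
  · -- E ≤ A
    have hsum := Finset.sum_le_sum (fun C (_ : C ∈ Finset.univ) => dem_pow_s_le_self hs0 hs1 (Nc C))
    have hdiv := hdivle hsum
    rw [hMean, ← hE] at hdiv
    exact hdiv
  · -- E ≤ 2 A^s
    have hpt : ∀ C, (Nc C:ℝ)^s ≤ A^s + A^(s-1) * (Nc C:ℝ) :=
      fun C => dem_rpow_le_tangent hs0 hs1 (Nat.cast_nonneg _) hApos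
    have hsum := Finset.sum_le_sum (fun C (_ : C ∈ Finset.univ) => hpt C)
    rw [Finset.sum_add_distrib, Finset.sum_const, ← Finset.mul_sum, hmean_eq] at hsum
    have hcard : ((Finset.univ : Finset (Fin Mn → Fin n → Bool)).card : ℝ) = (2:ℝ)^(n*Mn) := by
      rw [Finset.card_univ]
      simp only [Fintype.card_fun, Fintype.card_fin, Fintype.card_bool]
      push_cast
      rw [← pow_mul]
    have hnum : (Finset.univ : Finset (Fin Mn → Fin n → Bool)).card • A^s
        + A^(s-1) * (A * (2:ℝ)^(n*Mn)) = (2*A^s) * (2:ℝ)^(n*Mn) := by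
      rw [nsmul_eq_mul, hcard]
      have hq : A^(s-1) * (A * (2:ℝ)^(n*Mn)) = (A^(s-1)*A) * (2:ℝ)^(n*Mn) := by ring
      rw [hq, hAs]; ring
    rw [hnum] at hsum
    have hdiv := hdivle hsum
    rw [mul_div_assoc, div_self hP.ne', mul_one, ← hE] at hdiv
    exact hdiv
  · -- 1 ≤ A → A^s/8 ≤ E
    intro hA1
    have hb : (0:ℝ) < 4*A := by linarith
    have hpt : ∀ C, (4*A)^(s-1) * (Nc C:ℝ) - (4*A)^(s-2) * (Nc C:ℝ)^2 ≤ (Nc C:ℝ)^s :=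
      fun C => dem_rpow_ge_tangent hs0 hs1 (Nat.cast_nonneg _) hb
    have hsum := Finset.sum_le_sum (fun C (_ : C ∈ Finset.univ) => hpt C)
    rw [Finset.sum_sub_distrib, ← Finset.mul_sum, ← Finset.mul_sum, hmean_eq] at hsum
    have hb2 : (0:ℝ) ≤ (4*A)^(s-2) := Real.rpow_nonneg hb.le _
    have key : (4*A)^(s-1) * A - (4*A)^(s-2) * (A + A^2) ≤ E := by
      have hdiv := hdivle hsum
      have t1 : ((4*A)^(s-1) * (A * (2:ℝ)^(n*Mn))) / (2:ℝ)^(n*Mn) = (4*A)^(s-1) * A := by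
        field_simp
      have t2 : ((4*A)^(s-2) * ∑ C : Fin Mn → Fin n → Bool, (Nc C:ℝ)^2) / (2:ℝ)^(n*Mn)
          = (4*A)^(s-2) * ((∑ C : Fin Mn → Fin n → Bool, (Nc C:ℝ)^2)/(2:ℝ)^(n*Mn)) := by
        ring
      rw [sub_div, t1, t2, ← hE] at hdiv
      have hmono : (4*A)^(s-2) * ((∑ C : Fin Mn → Fin n → Bool, (Nc C:ℝ)^2) / (2:ℝ)^(n*Mn))
          ≤ (4*A)^(s-2) * (A + A^2) :=
        mul_le_mul_of_nonneg_left hSq hb2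
      linarith
    have h4 : (4*A)^(s-1) = 4^(s-1) * A^(s-1) := Real.mul_rpow (by norm_num) hApos.le
    have h42 : (4*A)^(s-2) = 4^(s-2) * A^(s-2) := Real.mul_rpow (by norm_num) hApos.le
    have hAs2 : A^(s-2) * A^2 = A^s := by
      rw [show A^2 = A^(2:ℝ) by rw [Real.rpow_two], ← Real.rpow_add hApos]
      congr 1; ring
    have hAs2' : A^(s-2) * A ≤ A^(s-2) * A^2 := by
      have h0 : (0:ℝ) ≤ A^(s-2) := Real.rpow_nonneg hApos.le _
      have hAA : A ≤ A^2 := by nlinarith [mul_nonneg hApos.le (sub_nonneg.mpr hA1)]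
      exact mul_le_mul_of_nonneg_left hAA h0
    have hsum2 : A^(s-2)*(A + A^2) ≤ 2*A^s := by
      have hsplit : A^(s-2)*(A + A^2) = A^(s-2)*A + A^(s-2)*A^2 := by ring
      linarith [hAs2, hAs2']
    have h4s : (1:ℝ) ≤ 4^s := by
      calc (1:ℝ) = 4^(0:ℝ) := (Real.rpow_zero 4).symm
        _ ≤ 4^s := Real.rpow_le_rpow_of_exponent_le (by norm_num) hs0.le
    have h4e : (4:ℝ)^(s-1) = 4^s/4 := by
      rw [Real.rpow_sub (by norm_num), Real.rpow_one]
    have h16 : (4:ℝ)^((2:ℕ):ℝ) = 16 := by rw [Real.rpow_natCast]; norm_num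
    have h4e2 : (4:ℝ)^(s-2) = 4^s/16 := by
      rw [show s-2 = s - ((2:ℕ):ℝ) by norm_num, Real.rpow_sub (by norm_num), h16]
    have hAsn : (0:ℝ) ≤ A^s := Real.rpow_nonneg hApos.le s
    have hfinal : A^s/8 ≤ (4*A)^(s-1)*A - (4*A)^(s-2)*(A+A^2) := by
      rw [h4, h42]
      have q1 : 4^(s-1)*A^(s-1)*A = (4^s/4) * A^s := by
        rw [mul_assoc, hAs, h4e]
      have q2 : 4^(s-2)*A^(s-2)*(A+A^2) ≤ (4^s/16)*(2*A^s) := by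
        rw [mul_assoc, ← h4e2]
        apply mul_le_mul_of_nonneg_left hsum2 (Real.rpow_nonneg (by norm_num) _)
      have q3 : (4:ℝ)^s/4*A^s - 4^s/16*(2*A^s) = (4^s/8)*A^s := by ring
      have q4 : (1:ℝ)*A^s ≤ 4^s*A^s := mul_le_mul_of_nonneg_right h4s hAsn
      linarith only [q1, q2, q3, q4]
    linarith only [key, hfinal]

end DemAux

theorem distance_enumerator_moments
    (s R δ : ℝ) (hs0 : 0 < s) (hs1 : s ≤ 1)
    (hR0 : 0 < R) (hR2 : R < Real.log 2) (hδ0 : 0 < δ) (hδ1 : δ < 1)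
    (y : ∀ n : ℕ, Fin n → Bool)
    (d : ℕ → ℕ) (hd : ∀ n, d n ≤ n)
    (hdlim : Filter.Tendsto (fun n : ℕ => (d n : ℝ) / n) Filter.atTop (nhds δ))
    (Ens : ℕ → ℝ)
    (hEns : ∀ n : ℕ, Ens n =
      (∑ C : Fin (numIncorrect R n) → Fin n → Bool,
        ((Finset.univ.filter
            (fun m : Fin (numIncorrect R n) => hammingDist' (C m) (y n) = d n)).card
          : ℝ) ^ s) / (2 : ℝ) ^ (n * numIncorrect R n)) :
    (R + binEntropy δ - Real.log 2 < 0 →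
      Filter.Tendsto (fun n : ℕ => (n : ℝ)⁻¹ * Real.log (Ens n)) Filter.atTop
        (nhds (R + binEntropy δ - Real.log 2))) ∧
    (0 < R + binEntropy δ - Real.log 2 →
      Filter.Tendsto (fun n : ℕ => (n : ℝ)⁻¹ * Real.log (Ens n)) Filter.atTop
        (nhds (s * (R + binEntropy δ - Real.log 2)))) := by
  classical
  set ℓ : ℝ := R + binEntropy δ - Real.log 2 with hℓ
  set A : ℕ → ℝ := fun n => (numIncorrect R n : ℝ) * (n.choose (d n)) / 2^n with hAdef
  have t_inv : Filter.Tendsto (fun n : ℕ => (n:ℝ)⁻¹) Filter.atTop (nhds 0) :=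
    tendsto_inv_atTop_nhds_zero_nat
  have t_cast : Filter.Tendsto (fun n : ℕ => (n:ℝ)) Filter.atTop Filter.atTop :=
    tendsto_natCast_atTop_atTop
  have t_logn : Filter.Tendsto (fun n : ℕ => Real.log n / n) Filter.atTop (nhds 0) := by
    have h := Real.isLittleO_log_id_atTop.comp_tendsto t_cast
    simpa [Function.comp] using h.tendsto_div_nhds_zero
  have t_exp : Filter.Tendsto (fun n : ℕ => Real.exp (n * R)) Filter.atTop Filter.atTop :=
    Real.tendsto_exp_atTop.comp (t_cast.atTop_mul_const hR0)
  have hev_n1 : ∀ᶠ n : ℕ in Filter.atTop, 1 ≤ n := Filter.eventually_ge_atTop 1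
  have hev_exp3 : ∀ᶠ n : ℕ in Filter.atTop, (3:ℝ) ≤ Real.exp (n * R) :=
    t_exp.eventually (Filter.eventually_ge_atTop 3)
  have hev_M2 : ∀ᶠ n : ℕ in Filter.atTop, 2 ≤ numIncorrect R n := by
    filter_upwards [hev_exp3] with n h3
    have hc : (3:ℝ) ≤ (⌈Real.exp (n*R)⌉₊ : ℝ) := h3.trans (Nat.le_ceil _)
    have h3' : 3 ≤ ⌈Real.exp (n*R)⌉₊ := by exact_mod_cast hc
    unfold numIncorrect
    omega
  have hev_d : ∀ᶠ n : ℕ in Filter.atTop, (δ/2 < (d n : ℝ)/n ∧ (d n:ℝ)/n < (1+δ)/2) := by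
    have hmem : Set.Ioo (δ/2) ((1+δ)/2) ∈ nhds δ :=
      Ioo_mem_nhds (by linarith) (by linarith)
    filter_upwards [hdlim.eventually hmem] with n hn
    exact ⟨hn.1, hn.2⟩
  have hev_dd : ∀ᶠ n : ℕ in Filter.atTop, (1 ≤ d n ∧ d n + 1 ≤ n) := by
    filter_upwards [hev_n1, hev_d] with n h1 hdn
    obtain ⟨hlo, hhi⟩ := hdn
    have hn0 : (0:ℝ) < n := by exact_mod_cast h1
    constructor
    · rcases Nat.eq_zero_or_pos (d n) with h0 | h
      · exfalso
        rw [h0] at hlo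
        norm_num at hlo
        linarith
      · exact h
    · have hlt : (d n : ℝ) < n := by
        have hq : (d n:ℝ)/n < 1 := lt_of_lt_of_le hhi (by linarith)
        calc (d n:ℝ) = (d n:ℝ)/n * n := by field_simp
          _ < 1 * n := mul_lt_mul_of_pos_right hq hn0
          _ = n := one_mul _
      have := (Nat.cast_lt (α := ℝ)).mp hlt
      omega
  have hMpos : ∀ n : ℕ, 1 ≤ n → 1 ≤ numIncorrect R n := by
    intro n hn
    have hx : (1:ℝ) < Real.exp (n * R) := by
      rw [show (1:ℝ) = Real.exp 0 by simp]
      apply Real.exp_lt_exp.mpr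
      have : (1:ℝ) ≤ n := by exact_mod_cast hn
      nlinarith
    have h2 : 1 + 1 ≤ ⌈Real.exp (n*R)⌉₊ := by
      rw [Nat.add_one_le_ceil_iff]
      exact_mod_cast hx
    unfold numIncorrect
    omega
  have hApos : ∀ n : ℕ, 1 ≤ n → 0 < A n := by
    intro n hn
    have h1 : (0:ℝ) < (numIncorrect R n : ℝ) := by exact_mod_cast hMpos n hn
    have h2 : (0:ℝ) < (n.choose (d n) : ℝ) := by exact_mod_cast Nat.choose_pos (hd n)
    rw [hAdef]
    positivity
  -- limit of (1/n) log M
  have hMlim : Filter.Tendsto (fun n : ℕ => (n:ℝ)⁻¹ * Real.log (numIncorrect R n))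
      Filter.atTop (nhds R) := by
    apply tendsto_of_tendsto_of_tendsto_of_le_of_le'
      (g := fun n : ℕ => R - Real.log 2 * (n:ℝ)⁻¹) (h := fun _ : ℕ => R)
    · simpa using tendsto_const_nhds.sub (t_inv.const_mul (Real.log 2))
    · exact tendsto_const_nhds
    · filter_upwards [hev_n1, hev_exp3] with n h1 h3
      have hn0 : (0:ℝ) < n := by exact_mod_cast h1
      have hM1 : 1 ≤ ⌈Real.exp (n*R)⌉₊ := Nat.one_le_ceil_iff.mpr (Real.exp_pos _)
      have hMc : (numIncorrect R n : ℝ) = (⌈Real.exp (n*R)⌉₊:ℝ) - 1 := by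
        unfold numIncorrect
        push_cast [hM1]
        ring
      have hge : Real.exp (n*R)/2 ≤ (numIncorrect R n : ℝ) := by
        rw [hMc]
        have := Nat.le_ceil (Real.exp (n*R))
        linarith
      have hlog : Real.log (Real.exp (n*R)/2) ≤ Real.log (numIncorrect R n) :=
        Real.log_le_log (by positivity) hge
      rw [Real.log_div (Real.exp_ne_zero _) two_ne_zero, Real.log_exp] at hlog
      calc R - Real.log 2 * (n:ℝ)⁻¹ = (n:ℝ)⁻¹ * ((n:ℝ)*R - Real.log 2) := by
            field_simp
        _ ≤ (n:ℝ)⁻¹ * Real.log (numIncorrect R n) :=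
            mul_le_mul_of_nonneg_left hlog (inv_nonneg.mpr hn0.le)
    · filter_upwards [hev_n1, hev_exp3] with n h1 h3
      have hn0 : (0:ℝ) < n := by exact_mod_cast h1
      have hM1 : 1 ≤ ⌈Real.exp (n*R)⌉₊ := Nat.one_le_ceil_iff.mpr (Real.exp_pos _)
      have hMc : (numIncorrect R n : ℝ) = (⌈Real.exp (n*R)⌉₊:ℝ) - 1 := by
        unfold numIncorrect
        push_cast [hM1]
        ring
      have hMp : (0:ℝ) < (numIncorrect R n : ℝ) := by exact_mod_cast hMpos n h1
      have hle : (numIncorrect R n : ℝ) ≤ Real.exp (n*R) := by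
        rw [hMc]
        have := Nat.ceil_lt_add_one (Real.exp_pos (n*R)).le
        linarith
      have hlog : Real.log (numIncorrect R n) ≤ (n:ℝ)*R := by
        have := Real.log_le_log hMp hle
        rwa [Real.log_exp] at this
      calc (n:ℝ)⁻¹ * Real.log (numIncorrect R n) ≤ (n:ℝ)⁻¹ * ((n:ℝ)*R) :=
            mul_le_mul_of_nonneg_left hlog (inv_nonneg.mpr hn0.le)
        _ = R := by field_simp
  -- continuity of binEntropy at δ
  have hcont : ContinuousAt binEntropy δ := by
    have h1 : ContinuousAt (fun x : ℝ => -x * Real.log x) δ :=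
      continuousAt_id.neg.mul (Real.continuousAt_log hδ0.ne')
    have h2 : ContinuousAt (fun x : ℝ => (1-x) * Real.log (1-x)) δ := by
      apply ContinuousAt.mul (continuousAt_const.sub continuousAt_id)
      exact (Real.continuousAt_log (by linarith : (1:ℝ)-δ ≠ 0)).comp
        (continuousAt_const.sub continuousAt_id)
    exact h1.sub h2
  have hBlim : Filter.Tendsto (fun n : ℕ => binEntropy ((d n:ℝ)/n)) Filter.atTop
      (nhds (binEntropy δ)) := by
    have := hcont.tendsto.comp hdlim
    exact this
  -- limit of (1/n) log choose
  have hKlim : Filter.Tendsto (fun n : ℕ => (n:ℝ)⁻¹ * Real.log (n.choose (d n)))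
      Filter.atTop (nhds (binEntropy δ)) := by
    apply tendsto_of_tendsto_of_tendsto_of_le_of_le'
      (g := fun n : ℕ => binEntropy ((d n:ℝ)/n) - (2*(n:ℝ)⁻¹ + 2*(Real.log n / n)))
      (h := fun n : ℕ => binEntropy ((d n:ℝ)/n) + ((n:ℝ)⁻¹ + Real.log n / n))
    · simpa using hBlim.sub ((t_inv.const_mul 2).add (t_logn.const_mul 2))
    · simpa using hBlim.add (t_inv.add t_logn)
    · filter_upwards [hev_n1, hev_dd] with n h1 hdd1
      obtain ⟨hb1, hb2⟩ := dem_log_choose_bounds hdd1.1 hdd1.2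
      have hn0 : (0:ℝ) < n := by exact_mod_cast h1
      calc binEntropy ((d n:ℝ)/n) - (2*(n:ℝ)⁻¹ + 2*(Real.log n / n))
          = (n:ℝ)⁻¹ * ((n:ℝ) * binEntropy ((d n:ℝ)/n) - (2 + 2*Real.log n)) := by
            field_simp
        _ ≤ (n:ℝ)⁻¹ * Real.log (n.choose (d n)) :=
            mul_le_mul_of_nonneg_left hb1 (inv_nonneg.mpr hn0.le)
    · filter_upwards [hev_n1, hev_dd] with n h1 hdd1
      obtain ⟨hb1, hb2⟩ := dem_log_choose_bounds hdd1.1 hdd1.2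
      have hn0 : (0:ℝ) < n := by exact_mod_cast h1
      calc (n:ℝ)⁻¹ * Real.log (n.choose (d n))
          ≤ (n:ℝ)⁻¹ * ((n:ℝ) * binEntropy ((d n:ℝ)/n) + (1 + Real.log n)) :=
            mul_le_mul_of_nonneg_left hb2 (inv_nonneg.mpr hn0.le)
        _ = binEntropy ((d n:ℝ)/n) + ((n:ℝ)⁻¹ + Real.log n / n) := by
            field_simp
  -- limit of (1/n) log A
  have hAlim : Filter.Tendsto (fun n : ℕ => (n:ℝ)⁻¹ * Real.log (A n)) Filter.atTop (nhds ℓ) := by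
    have heq : ∀ᶠ n : ℕ in Filter.atTop,
        (n:ℝ)⁻¹ * Real.log (numIncorrect R n) + (n:ℝ)⁻¹ * Real.log (n.choose (d n)) - Real.log 2
        = (n:ℝ)⁻¹ * Real.log (A n) := by
      filter_upwards [hev_n1] with n h1
      have hn0 : (0:ℝ) < n := by exact_mod_cast h1
      have hM : (0:ℝ) < (numIncorrect R n:ℝ) := by exact_mod_cast hMpos n h1
      have hK : (0:ℝ) < (n.choose (d n):ℝ) := by exact_mod_cast Nat.choose_pos (hd n)
      have hlogA : Real.log (A n)
          = Real.log (numIncorrect R n) + Real.log (n.choose (d n)) - (n:ℝ) * Real.log 2 := by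
        rw [hAdef]
        rw [Real.log_div (by positivity) (by positivity), Real.log_mul hM.ne' hK.ne',
          Real.log_pow]
      rw [hlogA]
      field_simp
    have := (hMlim.add hKlim).sub (tendsto_const_nhds (x := Real.log 2))
    exact this.congr' heq
  -- moment bounds
  have hEb : ∀ᶠ n : ℕ in Filter.atTop,
      (A n - (A n)^2 ≤ Ens n ∧ Ens n ≤ A n ∧ Ens n ≤ 2*(A n)^s ∧
        (1 ≤ A n → (A n)^s/8 ≤ Ens n)) := by
    filter_upwards [hev_M2] with n hM2
    exact dem_moment_bounds hs0 hs1 n (d n) (numIncorrect R n) hM2 (hd n) (y n)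
      (by rw [hAdef]) (hEns n)
  constructor
  · -- subcritical case
    intro hneg
    have hev_le : ∀ᶠ n : ℕ in Filter.atTop, (n:ℝ)⁻¹ * Real.log (A n) ≤ ℓ/2 :=
      hAlim.eventually (eventually_le_nhds (by linarith))
    have hev_nl : ∀ᶠ n : ℕ in Filter.atTop, (n:ℝ) * (ℓ/2) ≤ -Real.log 2 := by
      have hbot : Filter.Tendsto (fun n : ℕ => (n:ℝ)*(ℓ/2)) Filter.atTop Filter.atBot :=
        t_cast.atTop_mul_const_of_neg (by linarith)
      exact hbot.eventually (Filter.eventually_le_atBot _)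
    have hev_A : ∀ᶠ n : ℕ in Filter.atTop, A n ≤ 1/2 := by
      filter_upwards [hev_n1, hev_le, hev_nl] with n h1 h2 h3
      have hn0 : (0:ℝ) < n := by exact_mod_cast h1
      have hlog : Real.log (A n) ≤ (n:ℝ)*(ℓ/2) := by
        have hq := mul_le_mul_of_nonneg_left h2 hn0.le
        rwa [← mul_assoc, mul_inv_cancel₀ hn0.ne', one_mul] at hq
      have hhalf : Real.log (A n) ≤ Real.log (1/2) := by
        rw [Real.log_div one_ne_zero two_ne_zero, Real.log_one]
        linarith
      exact (Real.log_le_log_iff (hApos n h1) (by norm_num)).mp hhalf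
    apply tendsto_of_tendsto_of_tendsto_of_le_of_le'
      (g := fun n : ℕ => (n:ℝ)⁻¹ * Real.log (A n) - Real.log 2 * (n:ℝ)⁻¹)
      (h := fun n : ℕ => (n:ℝ)⁻¹ * Real.log (A n))
    · simpa using hAlim.sub (t_inv.const_mul (Real.log 2))
    · exact hAlim
    · filter_upwards [hev_n1, hev_A, hEb] with n h1 hA2 hEbn
      have hn0 : (0:ℝ) < n := by exact_mod_cast h1
      have hApn := hApos n h1
      have hEnsLow : A n / 2 ≤ Ens n := by nlinarith [hEbn.1]
      have hll : Real.log (A n / 2) ≤ Real.log (Ens n) :=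
        Real.log_le_log (by positivity) hEnsLow
      rw [Real.log_div hApn.ne' two_ne_zero] at hll
      have hq := mul_le_mul_of_nonneg_left hll (inv_nonneg.mpr hn0.le)
      linarith only [hq]
    · filter_upwards [hev_n1, hev_A, hEb] with n h1 hA2 hEbn
      have hn0 : (0:ℝ) < n := by exact_mod_cast h1
      have hApn := hApos n h1
      have hEnsLow : A n / 2 ≤ Ens n := by nlinarith [hEbn.1]
      have hEnspos : 0 < Ens n := lt_of_lt_of_le (by positivity) hEnsLow
      have hll : Real.log (Ens n) ≤ Real.log (A n) := Real.log_le_log hEnspos hEbn.2.1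
      exact mul_le_mul_of_nonneg_left hll (inv_nonneg.mpr hn0.le)
  · -- supercritical case
    intro hpos
    have hev_ge : ∀ᶠ n : ℕ in Filter.atTop, ℓ/2 ≤ (n:ℝ)⁻¹ * Real.log (A n) :=
      hAlim.eventually (eventually_ge_nhds (by linarith))
    have hev_A1 : ∀ᶠ n : ℕ in Filter.atTop, 1 ≤ A n := by
      filter_upwards [hev_n1, hev_ge] with n h1 h2
      have hn0 : (0:ℝ) < n := by exact_mod_cast h1
      have hlog : (n:ℝ)*(ℓ/2) ≤ Real.log (A n) := by
        have hq := mul_le_mul_of_nonneg_left h2 hn0.le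
        rwa [← mul_assoc, mul_inv_cancel₀ hn0.ne', one_mul] at hq
      have hone : Real.log 1 ≤ Real.log (A n) := by
        rw [Real.log_one]
        nlinarith
      exact (Real.log_le_log_iff one_pos (hApos n h1)).mp hone
    apply tendsto_of_tendsto_of_tendsto_of_le_of_le'
      (g := fun n : ℕ => s * ((n:ℝ)⁻¹ * Real.log (A n)) - Real.log 8 * (n:ℝ)⁻¹)
      (h := fun n : ℕ => s * ((n:ℝ)⁻¹ * Real.log (A n)) + Real.log 2 * (n:ℝ)⁻¹)
    · simpa using (hAlim.const_mul s).sub (t_inv.const_mul (Real.log 8))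
    · simpa using (hAlim.const_mul s).add (t_inv.const_mul (Real.log 2))
    · filter_upwards [hev_n1, hev_A1, hEb] with n h1 hA1 hEbn
      have hn0 : (0:ℝ) < n := by exact_mod_cast h1
      have hApn := hApos n h1
      have hAs : (0:ℝ) < (A n)^s := Real.rpow_pos_of_pos hApn s
      have hEnsLow : (A n)^s/8 ≤ Ens n := hEbn.2.2.2 hA1
      have hll : Real.log ((A n)^s/8) ≤ Real.log (Ens n) :=
        Real.log_le_log (by positivity) hEnsLow
      rw [Real.log_div hAs.ne' (by norm_num), Real.log_rpow hApn] at hll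
      have hq := mul_le_mul_of_nonneg_left hll (inv_nonneg.mpr hn0.le)
      linarith only [hq]
    · filter_upwards [hev_n1, hev_A1, hEb] with n h1 hA1 hEbn
      have hn0 : (0:ℝ) < n := by exact_mod_cast h1
      have hApn := hApos n h1
      have hAs : (0:ℝ) < (A n)^s := Real.rpow_pos_of_pos hApn s
      have hEnsLow : (A n)^s/8 ≤ Ens n := hEbn.2.2.2 hA1
      have hEnspos : 0 < Ens n := lt_of_lt_of_le (by positivity) hEnsLow
      have hll : Real.log (Ens n) ≤ Real.log (2*(A n)^s) :=
        Real.log_le_log hEnspos hEbn.2.2.1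
      rw [Real.log_mul two_ne_zero hAs.ne', Real.log_rpow hApn] at hll
      have hq := mul_le_mul_of_nonneg_left hll (inv_nonneg.mpr hn0.le)
      linarith only [hq]
end

section
/- Constrained maximization at the Gilbert–Varshamov distance: let p ∈ (0,1/2), β := ln((1−p)/p), and R ∈ (0, ln 2 − h(p)), so that p < δ_GV(R). Then for every δ ∈ [δ_GV(R), 1−δ_GV(R)], h(δ) − β·δ ≤ ln 2 − R − β·δ_GV(R), with equality at δ = δ_GV(R); i.e., the maximum of h(δ) − β·δ over [δ_GV(R), 1−δ_GV(R)] equals ln 2 − R − β·δ_GV(R). -/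
lemma binEntropy_eq (δ : ℝ) : binEntropy δ = Real.binEntropy δ := by
  simp [binEntropy, Real.binEntropy, Real.log_inv]; ring

/-- Constrained maximization at the Gilbert–Varshamov distance:
let `p ∈ (0,1/2)`, `β := ln((1−p)/p)`, `R ∈ (0, ln 2 − h(p))`, and let `δ_GV ∈ (0,1/2)`
be the normalized Gilbert–Varshamov distance, i.e. `h(δ_GV) = ln 2 − R`. Then
`p < δ_GV`, and for every `δ ∈ [δ_GV, 1 − δ_GV]`,
`h(δ) − β·δ ≤ ln 2 − R − β·δ_GV`, with equality at `δ = δ_GV`; i.e. the maximum of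
`h(δ) − β·δ` over `[δ_GV, 1 − δ_GV]` equals `ln 2 − R − β·δ_GV`. -/
theorem constrained_max_at_GV
    (p : ℝ) (hp0 : 0 < p) (hp12 : p < 1 / 2)
    (β : ℝ) (hβ : β = Real.log ((1 - p) / p))
    (R : ℝ) (hR0 : 0 < R) (hR1 : R < Real.log 2 - binEntropy p)
    (δGV : ℝ) (hδGV0 : 0 < δGV) (hδGV12 : δGV < 1 / 2)
    (hδGVeq : binEntropy δGV = Real.log 2 - R) :
    p < δGV ∧
    (∀ δ ∈ Set.Icc δGV (1 - δGV),
      binEntropy δ - β * δ ≤ Real.log 2 - R - β * δGV) ∧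
    binEntropy δGV - β * δGV = Real.log 2 - R - β * δGV := by
  have hpδ : p < δGV := by
    by_contra h
    push_neg at h
    have hmono := Real.binEntropy_strictMonoOn.monotoneOn
      (Set.mem_Icc.2 ⟨hδGV0.le, by linarith [hδGV12]⟩)
      (Set.mem_Icc.2 ⟨hp0.le, by norm_num; linarith⟩) h
    rw [← binEntropy_eq, ← binEntropy_eq, hδGVeq] at hmono
    linarith
  refine ⟨hpδ, ?_, by rw [hδGVeq]⟩
  -- f is antitone on [δGV, 1-δGV]
  have hanti : AntitoneOn (fun δ => Real.binEntropy δ - β * δ)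
      (Set.Icc δGV (1 - δGV)) := by
    apply antitoneOn_of_deriv_nonpos (convex_Icc _ _)
    · exact (Real.binEntropy_continuous.sub (continuous_const.mul continuous_id)).continuousOn
    · intro x hx
      rw [interior_Icc] at hx
      have hx0 : x ≠ 0 := by linarith [hx.1]
      have hx1 : x ≠ 1 := by nlinarith [hx.2, hδGV0]
      exact ((Real.differentiableAt_binEntropy hx0 hx1).sub
        ((differentiableAt_id.const_mul β))).differentiableWithinAt
    · intro x hx
      rw [interior_Icc] at hx
      have hx0 : (0:ℝ) < x := lt_trans hδGV0 hx.1
      have hx1 : x < 1 := by linarith [hx.2, hδGV0]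
      have hd : deriv (fun δ => Real.binEntropy δ - β * δ) x
          = Real.log (1 - x) - Real.log x - β := by
        have h1 : HasDerivAt (fun δ => Real.binEntropy δ - β * δ)
            (Real.log (1 - x) - Real.log x - β * 1) x := by
          exact (Real.hasDerivAt_binEntropy hx0.ne' hx1.ne).sub
            ((hasDerivAt_id x).const_mul β)
        simpa using h1.deriv
      rw [hd, hβ, Real.log_div (by linarith) hp0.ne']
      have hlp : Real.log p < Real.log x := Real.log_lt_log hp0 (lt_trans hpδ hx.1)
      have hl1 : Real.log (1 - x) < Real.log (1 - p) :=
        Real.log_lt_log (by linarith) (by linarith [lt_trans hpδ hx.1])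
      linarith
  intro δ hδ
  have hmem : δGV ∈ Set.Icc δGV (1 - δGV) :=
    Set.mem_Icc.2 ⟨le_refl _, by linarith⟩
  have h2 := hanti hmem hδ hδ.1
  simp only [← binEntropy_eq] at h2
  rw [hδGVeq] at h2
  linarith [h2]
end

section
/- Dominance of the exponent μ₀ (F ≤ G): let p ∈ (0,1/2), β := ln((1−p)/p), R ∈ (0, ln 2), and define μ₀(s,R) := s·ln(1−p) − ln(p^s + (1−p)^s) + ln 2 − R. Then for every s ≥ 0, μ₀(s,R) ≤ β·s·δ_GV(R), and for s > 0 equality holds if and only if s = s_R := (1/β)·ln((1−δ_GV(R))/δ_GV(R)). -/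
lemma core_le (δ u : ℝ) (h0 : 0 < δ) (h1 : δ < 1) :
    Real.exp (-(δ*u)) ≤ 1 - δ + δ * Real.exp (-u) := by
  have key : 1 ≤ (1-δ) * Real.exp (δ*u) + δ * Real.exp ((δ-1)*u) := by
    nlinarith [Real.add_one_le_exp (δ*u), Real.add_one_le_exp ((δ-1)*u), h0.le, h1.le]
  have e1 : Real.exp (-(δ*u)) * Real.exp (δ*u) = 1 := by
    rw [← Real.exp_add]; simp
  have e2 : Real.exp (-(δ*u)) * Real.exp ((δ-1)*u) = Real.exp (-u) := by
    rw [← Real.exp_add]; congr 1; ring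
  have hpos := Real.exp_pos (-(δ*u))
  calc Real.exp (-(δ*u)) ≤ Real.exp (-(δ*u)) * ((1-δ) * Real.exp (δ*u) + δ * Real.exp ((δ-1)*u)) := by
        nlinarith
    _ = (1-δ) * (Real.exp (-(δ*u)) * Real.exp (δ*u)) + δ * (Real.exp (-(δ*u)) * Real.exp ((δ-1)*u)) := by ring
    _ = 1 - δ + δ * Real.exp (-u) := by rw [e1, e2]; ring

lemma core_lt (δ u : ℝ) (h0 : 0 < δ) (h1 : δ < 1) (hu : u ≠ 0) :
    Real.exp (-(δ*u)) < 1 - δ + δ * Real.exp (-u) := by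
  have key : 1 < (1-δ) * Real.exp (δ*u) + δ * Real.exp ((δ-1)*u) := by
    have n1 : δ*u ≠ 0 := mul_ne_zero h0.ne' hu
    have n2 : (δ-1)*u ≠ 0 := mul_ne_zero (by linarith) hu
    nlinarith [Real.add_one_lt_exp n1, Real.add_one_lt_exp n2, h0.le, h1.le]
  have e1 : Real.exp (-(δ*u)) * Real.exp (δ*u) = 1 := by
    rw [← Real.exp_add]; simp
  have e2 : Real.exp (-(δ*u)) * Real.exp ((δ-1)*u) = Real.exp (-u) := by
    rw [← Real.exp_add]; congr 1; ring
  have hpos := Real.exp_pos (-(δ*u))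
  calc Real.exp (-(δ*u)) < Real.exp (-(δ*u)) * ((1-δ) * Real.exp (δ*u) + δ * Real.exp ((δ-1)*u)) := by
        nlinarith
    _ = (1-δ) * (Real.exp (-(δ*u)) * Real.exp (δ*u)) + δ * (Real.exp (-(δ*u)) * Real.exp ((δ-1)*u)) := by ring
    _ = 1 - δ + δ * Real.exp (-u) := by rw [e1, e2]; ring

lemma entropy_bound (δ : ℝ) (h0 : 0 < δ) (h1 : δ < 1) (t : ℝ) :
    binEntropy δ ≤ δ * t + Real.log (1 + Real.exp (-t)) ∧
    (binEntropy δ = δ * t + Real.log (1 + Real.exp (-t)) ↔ t = Real.log ((1-δ)/δ)) := by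
  have h1δ : 0 < 1 - δ := by linarith
  set u : ℝ := t - Real.log ((1-δ)/δ) with hu
  have hexp : Real.exp (-t) = δ / (1-δ) * Real.exp (-u) := by
    have : -t = Real.log (δ/(1-δ)) + (-u) := by
      rw [hu]
      have : Real.log (δ/(1-δ)) = - Real.log ((1-δ)/δ) := by
        rw [← Real.log_inv]; congr 1; field_simp
      rw [this]; ring
    rw [this, Real.exp_add, Real.exp_log (by positivity)]
  have hXpos : 0 < 1 - δ + δ * Real.exp (-u) := by positivity
  have hsum : 1 + Real.exp (-t) = (1 - δ + δ * Real.exp (-u)) / (1-δ) := by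
    rw [hexp]; field_simp
  have hlog : Real.log (1 + Real.exp (-t)) =
      Real.log (1 - δ + δ * Real.exp (-u)) - Real.log (1-δ) := by
    rw [hsum, Real.log_div hXpos.ne' h1δ.ne']
  have hterm : δ * t = δ * Real.log (1-δ) - δ * Real.log δ + δ * u := by
    rw [hu, Real.log_div h1δ.ne' h0.ne']; ring
  have hdiff : δ * t + Real.log (1 + Real.exp (-t)) - binEntropy δ =
      δ * u + Real.log (1 - δ + δ * Real.exp (-u)) := by
    rw [hlog, hterm, binEntropy]; ring
  have hge : -(δ*u) ≤ Real.log (1 - δ + δ * Real.exp (-u)) := by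
    have := Real.log_le_log (Real.exp_pos _) (core_le δ u h0 h1)
    rwa [Real.log_exp] at this
  constructor
  · linarith
  constructor
  · intro heq
    have hz : δ * u + Real.log (1 - δ + δ * Real.exp (-u)) = 0 := by linarith
    have hXeq : 1 - δ + δ * Real.exp (-u) = Real.exp (-(δ*u)) := by
      have : Real.log (1 - δ + δ * Real.exp (-u)) = -(δ*u) := by linarith
      rw [← Real.exp_log hXpos, this]
    by_contra ht
    have hune : u ≠ 0 := by
      intro h; apply ht; rw [hu] at h; linarith
    have := core_lt δ u h0 h1 hune
    linarith [this, hXeq.ge, hXeq.le]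
  · intro ht
    have hu0 : u = 0 := by rw [hu, ht]; ring
    have : δ * u + Real.log (1 - δ + δ * Real.exp (-u)) = 0 := by
      rw [hu0]; simp
    linarith

/-- Dominance of the exponent `μ₀` (`F ≤ G`): let `p ∈ (0,1/2)`,
`β := ln((1−p)/p)`, `R ∈ (0, ln 2)`, `δ_GV ∈ (0,1/2)` with `h(δ_GV) = ln 2 − R`, and
`μ₀(s,R) := s·ln(1−p) − ln(p^s + (1−p)^s) + ln 2 − R`. Then for every `s ≥ 0`,
`μ₀(s,R) ≤ β·s·δ_GV`, and for `s > 0` equality holds iff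
`s = s_R := (1/β)·ln((1−δ_GV)/δ_GV)`. -/
theorem mu0_dominated_by_linear
    (p : ℝ) (hp0 : 0 < p) (hp12 : p < 1 / 2)
    (β : ℝ) (hβ : β = Real.log ((1 - p) / p))
    (R : ℝ) (hR0 : 0 < R) (hR2 : R < Real.log 2)
    (δGV : ℝ) (hδGV0 : 0 < δGV) (hδGV12 : δGV < 1 / 2)
    (hδGVeq : binEntropy δGV = Real.log 2 - R)
    (μ₀ : ℝ → ℝ)
    (hμ₀ : ∀ s : ℝ, μ₀ s =
      s * Real.log (1 - p) - Real.log (p ^ s + (1 - p) ^ s) + Real.log 2 - R)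
    (sR : ℝ) (hsR : sR = (1 / β) * Real.log ((1 - δGV) / δGV)) :
    (∀ s : ℝ, 0 ≤ s → μ₀ s ≤ β * s * δGV) ∧
    (∀ s : ℝ, 0 < s → (μ₀ s = β * s * δGV ↔ s = sR)) := by
  have h1p : 0 < 1 - p := by linarith
  have hβval : β = Real.log (1-p) - Real.log p := by
    rw [hβ, Real.log_div h1p.ne' hp0.ne']
  have hβpos : 0 < β := by
    rw [hβ]
    apply Real.log_pos
    rw [lt_div_iff₀ hp0]; linarith
  have hδ1 : δGV < 1 := by linarith
  -- rewrite μ₀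
  have hμ : ∀ s : ℝ, μ₀ s = binEntropy δGV - Real.log (1 + Real.exp (-(β*s))) := by
    intro s
    have hps : p ^ s = Real.exp (Real.log p * s) := Real.rpow_def_of_pos hp0 s
    have h1ps : (1-p) ^ s = Real.exp (Real.log (1-p) * s) := Real.rpow_def_of_pos h1p s
    have hfac : p ^ s + (1-p) ^ s =
        Real.exp (Real.log (1-p) * s) * (1 + Real.exp (-(β*s))) := by
      rw [hps, h1ps, mul_add, mul_one, ← Real.exp_add, hβval]
      ring_nf
    have hlog : Real.log (p ^ s + (1-p) ^ s) =
        Real.log (1-p) * s + Real.log (1 + Real.exp (-(β*s))) := by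
      rw [hfac, Real.log_mul (Real.exp_ne_zero _) (by positivity), Real.log_exp]
    rw [hμ₀ s, hlog]; linarith [hδGVeq]
  have key := fun s => entropy_bound δGV hδGV0 hδ1 (β*s)
  have hiff : ∀ s : ℝ, (μ₀ s = β * s * δGV ↔ β * s = Real.log ((1-δGV)/δGV)) := by
    intro s
    rw [hμ s]
    constructor
    · intro h
      exact ((key s).2).mp (by linarith)
    · intro h
      have := ((key s).2).mpr h
      linarith
  constructor
  · intro s _
    have := (key s).1
    rw [hμ s]; linarith
  · intro s _
    rw [hiff s, hsR]
    constructor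
    · intro h; rw [← h]; field_simp
    · intro h; rw [h]; field_simp
end

section
/- Closed-form optimal tilting parameter for the BSC: let p ∈ (0,1/2), β := ln((1−p)/p), and 0 < T < β. Define z₀ := (√(T² + 4p(1−p)(β² − T²)) − T)/(2p(T+β)) and s₂ := (1/β)·ln z₀. Then z₀ > 0 and the derivative of f(s) := ln(p^s + (1−p)^s) + ln(p^{1−s} + (1−p)^{1−s}) + s·T vanishes at s = s₂; consequently s₂ is the unique global minimizer of f on ℝ. -/
set_option maxHeartbeats 1000000 in
/-- Closed-form optimal tilting parameter for the BSC: let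
`p ∈ (0,1/2)`, `β := ln((1−p)/p)`, `0 < T < β`,
`z₀ := (√(T² + 4p(1−p)(β² − T²)) − T)/(2p(T+β))`, and `s₂ := (1/β)·ln z₀`. Then
`z₀ > 0`, the derivative of
`f(s) := ln(p^s + (1−p)^s) + ln(p^{1−s} + (1−p)^{1−s}) + s·T` vanishes at `s = s₂`,
and consequently `s₂` is the unique global minimizer of `f` on `ℝ`. -/
theorem bsc_optimal_s_closed_form
    (p : ℝ) (hp0 : 0 < p) (hp12 : p < 1 / 2)
    (β : ℝ) (hβ : β = Real.log ((1 - p) / p))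
    (T : ℝ) (hT0 : 0 < T) (hTβ : T < β)
    (z₀ : ℝ)
    (hz₀ : z₀ = (Real.sqrt (T ^ 2 + 4 * p * (1 - p) * (β ^ 2 - T ^ 2)) - T) /
      (2 * p * (T + β)))
    (s₂ : ℝ) (hs₂ : s₂ = (1 / β) * Real.log z₀)
    (f : ℝ → ℝ)
    (hf : ∀ s : ℝ, f s =
      Real.log (p ^ s + (1 - p) ^ s) +
        Real.log (p ^ (1 - s) + (1 - p) ^ (1 - s)) + s * T) :
    0 < z₀ ∧ HasDerivAt f 0 s₂ ∧ (∀ s : ℝ, s ≠ s₂ → f s₂ < f s) := by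
  have hq0 : (0:ℝ) < 1 - p := by linarith
  have hr1 : (1:ℝ) < (1 - p) / p := by rw [lt_div_iff₀ hp0]; linarith
  have hr0 : (0:ℝ) < (1 - p) / p := by linarith
  have hβ0 : 0 < β := hβ ▸ Real.log_pos hr1
  obtain ⟨r, hrdef⟩ : ∃ r : ℝ, r = (1 - p) / p := ⟨_, rfl⟩
  rw [← hrdef] at hβ hr1 hr0
  have her : Real.exp β = r := by rw [hβ, Real.exp_log hr0]
  set D : ℝ := T ^ 2 + 4 * p * (1 - p) * (β ^ 2 - T ^ 2) with hD
  have hβT : 0 < β ^ 2 - T ^ 2 := by nlinarith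
  have hpos4 : 0 < 4 * p * (1 - p) * (β ^ 2 - T ^ 2) := by positivity
  have hD0 : 0 ≤ D := by rw [hD]; nlinarith [sq_nonneg T]
  have hTD : T < Real.sqrt D := by
    rw [Real.lt_sqrt hT0.le, hD]; linarith
  have hden : 0 < 2 * p * (T + β) := by positivity
  -- z₀ > 0
  have hz0pos : 0 < z₀ := by
    rw [hz₀]; exact div_pos (by linarith) hden
  -- the key quadratic identity
  have hsq : Real.sqrt D = 2 * p * (T + β) * z₀ + T := by
    rw [hz₀]; field_simp; ring
  have hDsq : D = (2 * p * (T + β) * z₀ + T) ^ 2 := by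
    rw [← hsq, Real.sq_sqrt hD0]
  have hK : p * (T + β) * z₀ ^ 2 + T * z₀ = (1 - p) * (β - T) := by
    have h5 : 4 * p * (T + β) *
        (p * (T + β) * z₀ ^ 2 + T * z₀ - (1 - p) * (β - T)) = 0 := by
      have := hDsq; rw [hD] at this; nlinarith [this]
    have h6 : (4 : ℝ) * p * (T + β) ≠ 0 := by positivity
    have := mul_eq_zero.mp h5
    rcases this with h | h
    · exact absurd h h6
    · linarith
  -- rewrite f in exponential form
  have hfg : ∀ s : ℝ, f s = Real.log p + Real.log (1 + Real.exp (β * s))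
      + Real.log (1 + r * Real.exp (-(β * s))) + s * T := by
    intro s
    have hps : (0:ℝ) < p ^ s := Real.rpow_pos_of_pos hp0 s
    have hps' : (0:ℝ) < p ^ (1 - s) := Real.rpow_pos_of_pos hp0 (1 - s)
    have hrs : r ^ s = Real.exp (β * s) := by
      rw [Real.rpow_def_of_pos hr0, hβ]
    have hrs' : r ^ (1 - s) = r * Real.exp (-(β * s)) := by
      rw [Real.rpow_def_of_pos hr0, ← hβ, ← her, ← Real.exp_add]
      congr 1; ring
    have h1 : p ^ s + (1 - p) ^ s = p ^ s * (1 + Real.exp (β * s)) := by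
      have : (1 - p) ^ s = p ^ s * r ^ s := by
        rw [← Real.mul_rpow hp0.le hr0.le]
        congr 1; rw [hrdef]; field_simp
      rw [this, hrs]; ring
    have h2 : p ^ (1 - s) + (1 - p) ^ (1 - s)
        = p ^ (1 - s) * (1 + r * Real.exp (-(β * s))) := by
      have : (1 - p) ^ (1 - s) = p ^ (1 - s) * r ^ (1 - s) := by
        rw [← Real.mul_rpow hp0.le hr0.le]
        congr 1; rw [hrdef]; field_simp
      rw [this, hrs']; ring
    have hE1 : (0:ℝ) < 1 + Real.exp (β * s) := by positivity
    have hE2 : (0:ℝ) < 1 + r * Real.exp (-(β * s)) := by positivity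
    rw [hf, h1, h2, Real.log_mul hps.ne' hE1.ne', Real.log_mul hps'.ne' hE2.ne',
      Real.log_rpow hp0, Real.log_rpow hp0]
    ring
  -- the derivative
  set G : ℝ → ℝ := fun s =>
    Real.exp (β * s) * β / (1 + Real.exp (β * s))
      + r * (Real.exp (-(β * s)) * (-β)) / (1 + r * Real.exp (-(β * s))) + T with hG
  have hderiv : ∀ s : ℝ, HasDerivAt f (G s) s := by
    intro s
    have hlin : HasDerivAt (fun s : ℝ => β * s) β s := by
      simpa using (hasDerivAt_id s).const_mul β
    have hlin' : HasDerivAt (fun s : ℝ => -(β * s)) (-β) s := hlin.neg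
    have hE : HasDerivAt (fun s : ℝ => Real.exp (β * s))
        (Real.exp (β * s) * β) s := hlin.exp
    have hE' : HasDerivAt (fun s : ℝ => Real.exp (-(β * s)))
        (Real.exp (-(β * s)) * (-β)) s := hlin'.exp
    have hE1 : (0:ℝ) < 1 + Real.exp (β * s) := by positivity
    have hE2 : (0:ℝ) < 1 + r * Real.exp (-(β * s)) := by positivity
    have hL1 : HasDerivAt (fun s : ℝ => Real.log (1 + Real.exp (β * s)))
        (Real.exp (β * s) * β / (1 + Real.exp (β * s))) s := by
      have := ((hasDerivAt_const s (1:ℝ)).add hE).log hE1.ne'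
      simpa using this
    have hL2 : HasDerivAt (fun s : ℝ => Real.log (1 + r * Real.exp (-(β * s))))
        (r * (Real.exp (-(β * s)) * (-β)) / (1 + r * Real.exp (-(β * s)))) s := by
      have := ((hasDerivAt_const s (1:ℝ)).add (hE'.const_mul r)).log hE2.ne'
      simpa using this
    have hlast : HasDerivAt (fun s : ℝ => s * T) T s := by
      simpa using (hasDerivAt_id s).mul_const T
    have hsum := (((hasDerivAt_const s (Real.log p)).add hL1).add hL2).add hlast
    have : HasDerivAt (fun s : ℝ => Real.log p + Real.log (1 + Real.exp (β * s))
        + Real.log (1 + r * Real.exp (-(β * s))) + s * T) (G s) s := by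
      exact hsum.congr_deriv (by simp only [hG]; ring)
    exact this.congr_of_eventuallyEq (by filter_upwards with x using (hfg x))
  -- value of exp at s₂
  have hEs₂ : Real.exp (β * s₂) = z₀ := by
    rw [hs₂]
    rw [show β * (1 / β * Real.log z₀) = Real.log z₀ by field_simp]
    exact Real.exp_log hz0pos
  have hEs₂' : Real.exp (-(β * s₂)) = z₀⁻¹ := by
    rw [Real.exp_neg, hEs₂]
  -- G s₂ = 0
  have hrp : p * r = 1 - p := by rw [hrdef]; field_simp
  have hNz : β * (z₀ ^ 2 - r) + T * ((1 + z₀) * (z₀ + r)) = 0 := by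
    have hpz : p * (β * (z₀ ^ 2 - r) + T * ((1 + z₀) * (z₀ + r)))
        = p * (T + β) * z₀ ^ 2 + T * z₀ - (1 - p) * (β - T) := by
      linear_combination (-β + T + T * z₀) * hrp
    have h0 : p * (β * (z₀ ^ 2 - r) + T * ((1 + z₀) * (z₀ + r))) = 0 := by
      rw [hpz]; linarith [hK]
    rcases mul_eq_zero.mp h0 with h | h
    · exact absurd h hp0.ne'
    · exact h
  have hG0 : G s₂ = 0 := by
    have hGs : G s₂ = z₀ * β / (1 + z₀) + r * (z₀⁻¹ * (-β)) / (1 + r * z₀⁻¹) + T := by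
      rw [hG]; simp only [hEs₂, hEs₂']
    have h1 : (0:ℝ) < 1 + z₀ := by linarith
    have h2 : (0:ℝ) < 1 + r * z₀⁻¹ := by positivity
    have hz : z₀ ≠ 0 := hz0pos.ne'
    rw [hGs]
    field_simp
    linear_combination hNz
  -- sign of G
  have hGsign : ∀ s : ℝ, (s₂ < s → 0 < G s) ∧ (s < s₂ → G s < 0) := by
    intro s
    obtain ⟨E, hE⟩ : ∃ E : ℝ, E = Real.exp (β * s) := ⟨_, rfl⟩
    have hE0 : 0 < E := hE ▸ Real.exp_pos _
    have hEinv : Real.exp (-(β * s)) = E⁻¹ := by rw [Real.exp_neg, hE]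
    have h1 : (0:ℝ) < 1 + E := by linarith
    have h2 : (0:ℝ) < E + r := by linarith
    have hGval : G s = (β * (E ^ 2 - r) + T * ((1 + E) * (E + r)))
        / ((1 + E) * (E + r)) := by
      have hGs : G s = E * β / (1 + E) + r * (E⁻¹ * (-β)) / (1 + r * E⁻¹) + T := by
        rw [hG]; simp only [← hE, hEinv]
      have h3 : (0:ℝ) < 1 + r * E⁻¹ := by positivity
      rw [hGs]
      field_simp
      ring
    have hfac : ∀ x : ℝ, β * (x ^ 2 - r) + T * ((1 + x) * (x + r))
        = (x - z₀) * (β * (x + z₀) + T * (x + z₀ + 1 + r)) := by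
      intro x
      linear_combination hNz
    have hbrpos : ∀ x : ℝ, 0 < x → 0 < β * (x + z₀) + T * (x + z₀ + 1 + r) := by
      intro x hx
      have : 0 < x + z₀ := by linarith
      nlinarith
    constructor
    · intro hs
      have hEz : z₀ < E := by
        rw [hE, ← hEs₂]
        exact Real.exp_lt_exp.mpr (by nlinarith)
      rw [hGval]
      apply div_pos _ (by positivity)
      rw [hfac E]
      exact mul_pos (by linarith) (hbrpos E hE0)
    · intro hs
      have hEz : E < z₀ := by
        rw [hE, ← hEs₂]
        exact Real.exp_lt_exp.mpr (by nlinarith)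
      rw [hGval]
      apply div_neg_of_neg_of_pos _ (by positivity)
      rw [hfac E]
      exact mul_neg_of_neg_of_pos (by linarith) (hbrpos E hE0)
  -- assemble
  have hd0 : HasDerivAt f 0 s₂ := hG0 ▸ hderiv s₂
  refine ⟨hz0pos, hd0, ?_⟩
  have hdf : ∀ s, deriv f s = G s := fun s => (hderiv s).deriv
  have hcont : Continuous f := by
    have : Differentiable ℝ f := fun s => (hderiv s).differentiableAt
    exact this.continuous
  have hmono : StrictMonoOn f (Set.Ici s₂) := by
    apply strictMonoOn_of_deriv_pos (convex_Ici s₂) hcont.continuousOn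
    intro x hx
    rw [interior_Ici] at hx
    rw [hdf]
    exact (hGsign x).1 hx
  have hanti : StrictAntiOn f (Set.Iic s₂) := by
    apply strictAntiOn_of_deriv_neg (convex_Iic s₂) hcont.continuousOn
    intro x hx
    rw [interior_Iic] at hx
    rw [hdf]
    exact (hGsign x).2 hx
  intro s hs
  rcases lt_or_gt_of_ne hs with h | h
  · exact hanti (Set.mem_Iic.mpr h.le) (Set.mem_Iic.mpr le_rfl) h
  · exact hmono (Set.mem_Ici.mpr le_rfl) (Set.mem_Ici.mpr h.le) h
end

section
/- Range of the closed-form optimal parameter: let p ∈ (0,1/2), β := ln((1−p)/p), and 0 ≤ T < β, and set s₂(p,T) := (1/β)·ln[(√(T² + 4p(1−p)(β² − T²)) − T)/(2p(T+β))]. Then s₂(p,T) ≤ 1, and if moreover T < (1−2p)·β/2 then s₂(p,T) > 0. -/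
/-- Range of the closed-form optimal parameter: let `p ∈ (0,1/2)`,
`β := ln((1−p)/p)`, `0 ≤ T < β`, and
`s₂(p,T) := (1/β)·ln[(√(T² + 4p(1−p)(β² − T²)) − T)/(2p(T+β))]`. Then `s₂(p,T) ≤ 1`,
and if moreover `T < (1−2p)·β/2` then `s₂(p,T) > 0`. -/
theorem bsc_optimal_s_range
    (p : ℝ) (hp0 : 0 < p) (hp12 : p < 1 / 2)
    (β : ℝ) (hβ : β = Real.log ((1 - p) / p))
    (T : ℝ) (hT0 : 0 ≤ T) (hTβ : T < β)
    (s₂ : ℝ)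
    (hs₂ : s₂ = (1 / β) * Real.log
      ((Real.sqrt (T ^ 2 + 4 * p * (1 - p) * (β ^ 2 - T ^ 2)) - T) /
        (2 * p * (T + β)))) :
    s₂ ≤ 1 ∧ (T < (1 - 2 * p) * β / 2 → 0 < s₂) := by
  have hp1 : p < 1 := by linarith
  have hβpos : 0 < β := by
    rw [hβ]
    apply Real.log_pos
    rw [lt_div_iff₀ hp0]; linarith
  set D := T ^ 2 + 4 * p * (1 - p) * (β ^ 2 - T ^ 2) with hDdef
  have hDT : T ^ 2 < D := by
    nlinarith [mul_pos (mul_pos hp0 (by linarith : (0:ℝ) < 1 - p))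
      (by nlinarith : (0:ℝ) < β ^ 2 - T ^ 2)]
  have hsqrtT : T < Real.sqrt D := by
    have := Real.sqrt_lt_sqrt (sq_nonneg T) hDT
    rwa [Real.sqrt_sq hT0] at this
  have hTβ' : 0 < T + β := by linarith
  have hden : 0 < 2 * p * (T + β) := by positivity
  have hrpos : 0 < (Real.sqrt D - T) / (2 * p * (T + β)) :=
    div_pos (by linarith) hden
  constructor
  · -- s₂ ≤ 1
    have hsq : Real.sqrt D ≤ T + 2 * (1 - p) * (T + β) := by
      have h1 : Real.sqrt D ≤ Real.sqrt ((T + 2 * (1 - p) * (T + β)) ^ 2) := by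
        apply Real.sqrt_le_sqrt
        nlinarith [mul_nonneg (mul_nonneg (by linarith : (0:ℝ) ≤ 1 - p)
          (le_of_lt hTβ')) (by nlinarith : (0:ℝ) ≤ 2 * T + (1 - 2 * p) * β)]
      rwa [Real.sqrt_sq (by nlinarith)] at h1
    have hr1 : (Real.sqrt D - T) / (2 * p * (T + β)) ≤ (1 - p) / p := by
      rw [div_le_div_iff₀ hden hp0]
      nlinarith
    have hlog : Real.log ((Real.sqrt D - T) / (2 * p * (T + β))) ≤ β := by
      have := Real.log_le_log hrpos hr1
      rwa [← hβ] at this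
    rw [hs₂]
    have h2 : (1 / β) * Real.log ((Real.sqrt D - T) / (2 * p * (T + β)))
        ≤ (1 / β) * β :=
      mul_le_mul_of_nonneg_left hlog (le_of_lt (one_div_pos.mpr hβpos))
    have h3 : (1 / β) * β = 1 := by field_simp
    linarith
  · -- positivity
    intro hT2
    have hsq : T + 2 * p * (T + β) < Real.sqrt D := by
      rw [Real.lt_sqrt (by positivity)]
      nlinarith [mul_pos (mul_pos hp0 hTβ')
        (by nlinarith : (0:ℝ) < (1 - 2 * p) * β - 2 * T)]
    have hr1 : 1 < (Real.sqrt D - T) / (2 * p * (T + β)) := by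
      rw [lt_div_iff₀ hden]; linarith
    rw [hs₂]
    exact mul_pos (one_div_pos.mpr hβpos) (Real.log_pos hr1)
end
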